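/- arXiv:2012.02249 — 8 statements merged into one kernel-verified Lean document; each statement's English description precedes it below -/
import Mathlib

section
/- Every chain complex over the field with two elements admits a lift to a chain complex over the integers; that is, given boundary maps ∂_j : A_j → A_{j-1} over F_2 satisfying ∂_{j-1} ∘ ∂_j = 0, there exist integer matrices ∂̃_j whose entries reduce mod 2 to those of ∂_j and which satisfy ∂̃_{j-1} ∘ ∂̃_j = 0 over ℤ. -/
/-!
Since boundaries are cycles, one may choose a basis of each `A_j` in which every basis vector is
either a cycle or has zero coordinate on all cycles (a Smith normal form basis for the cycles).
In these bases, for each basis vector of `A_j` its column in `∂_j` or its row in `∂_{j+1}`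
vanishes, so entrywise lifts of the new boundary matrices still compose to zero over `ℤ`.
To return to the original bases over `ℤ`, where a lift `B̃` of an invertible matrix need not be
invertible, conjugate by `B̃` and its adjugate: `adj B̃ * B̃ = det B̃ • 1` keeps the composites
zero, and modulo 2 the determinant is `1`, so `adj B̃` reduces to `B⁻¹`.
-/

open Matrix

namespace Matrix

variable {l m n o q α : Type*}

def SupportDisjoint [Zero α] (N : Matrix l m α) (N' : Matrix m n α) : Prop :=
  ∀ j, (∀ i, N i j = 0) ∨ (∀ k, N' j k = 0)

theorem SupportDisjoint.mul_eq_zero [Fintype m] [NonUnitalNonAssocSemiring α]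
    {N : Matrix l m α} {N' : Matrix m n α} (h : SupportDisjoint N N') : N * N' = 0 := by
  ext i k
  refine Finset.sum_eq_zero fun j _ => ?_
  rcases h j with hN | hN' <;> simp [*]

theorem SupportDisjoint.mul_mul [Fintype l] [Fintype n] [NonUnitalNonAssocSemiring α]
    {N : Matrix l m α} {N' : Matrix m n α} (h : SupportDisjoint N N') (A : Matrix o l α)
    (B : Matrix n q α) : SupportDisjoint (A * N) (N' * B) := fun j =>
  (h j).imp (fun hN i => Finset.sum_eq_zero fun _ _ => by simp [hN])
    (fun hN' k => Finset.sum_eq_zero fun _ _ => by simp [hN'])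

theorem SupportDisjoint.map {β : Type*} [Zero α] [Zero β] {N : Matrix l m α}
    {N' : Matrix m n α} (h : SupportDisjoint N N') {f : α → β} (hf : f 0 = 0) :
    SupportDisjoint (N.map f) (N'.map f) := fun j =>
  (h j).imp (fun hN i => by simp [hN, hf]) (fun hN' k => by simp [hN', hf])

theorem mul_adjugate_mul_mul_eq_zero [Fintype l] [Fintype m] [Fintype n] [DecidableEq m]
    [CommRing α] {N : Matrix l m α} {N' : Matrix m n α} (h : N * N' = 0) (P : Matrix o l α)
    (Q : Matrix m m α) (R : Matrix n q α) : P * N * adjugate Q * (Q * N' * R) = 0 :=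
  calc P * N * adjugate Q * (Q * N' * R) = P * N * (adjugate Q * Q) * N' * R := by
        simp only [Matrix.mul_assoc]
    _ = Q.det • (P * (N * N') * R) := by
        rw [adjugate_mul, Matrix.mul_smul, Matrix.mul_one]
        simp only [Matrix.smul_mul, Matrix.mul_assoc]
    _ = 0 := by rw [h, Matrix.mul_zero, Matrix.zero_mul, smul_zero]

theorem adjugate_eq_nonsing_inv_of_det_eq_one [Fintype m] [DecidableEq m] [CommRing α]
    {A : Matrix m m α} (hA : A.det = 1) : adjugate A = A⁻¹ := by
  rw [inv_def, hA, Ring.inverse_one, one_smul]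

theorem map_intCast_map_val {p : ℕ} [NeZero p] (A : Matrix m n (ZMod p)) :
    (A.map fun a => (a.val : ℤ)).map (Int.cast : ℤ → ZMod p) = A := by
  ext i j
  simp

end Matrix

theorem Submodule.exists_basis_mem_or_repr_eq_zero {K V ι : Type*} [Field K] [AddCommGroup V]
    [Module K V] [Finite ι] (b : Module.Basis ι K V) (U : Submodule K V) :
    ∃ b' : Module.Basis ι K V, ∀ j, b' j ∈ U ∨ ∀ x ∈ U, b'.repr x j = 0 := by
  obtain ⟨r, snf⟩ := U.smithNormalForm b
  refine ⟨snf.bM, fun j => ?_⟩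
  by_cases hj : j ∈ Set.range snf.f
  · obtain ⟨i, rfl⟩ := hj
    have ha : snf.a i ≠ 0 := by
      intro h0
      apply snf.bN.ne_zero i
      ext
      simp [snf.snf, h0]
    exact Or.inl ((U.smul_mem_iff ha).mp (snf.snf i ▸ (snf.bN i).2))
  · exact Or.inr fun x hx => snf.repr_eq_zero_of_notMem_range ⟨x, hx⟩ hj

theorem Matrix.exists_isUnit_det_supportDisjoint {K m n p : Type*} [Field K] [Fintype n]
    [DecidableEq n] {M : Matrix m n K} {M' : Matrix n p K} (h : M * M' = 0) :
    ∃ C : Matrix n n K, IsUnit C.det ∧ SupportDisjoint (M * C) (C⁻¹ * M') := by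
  let e := Pi.basisFun K n
  obtain ⟨b, hb⟩ := (LinearMap.ker M.mulVecLin).exists_basis_mem_or_repr_eq_zero e
  have hinv : (e.toMatrix b)⁻¹ = b.toMatrix e := inv_eq_left_inv (b.toMatrix_mul_toMatrix_flip e)
  refine ⟨e.toMatrix b, isUnit_det_of_right_inverse (e.toMatrix_mul_toMatrix_flip b),
    fun j => (hb j).imp (fun hj i => ?_) (fun hj k => ?_)⟩
  · have : (M *ᵥ b j) i = 0 := congr_fun (LinearMap.mem_ker.mp hj) i
    simpa [mul_apply', mulVec, e, Module.Basis.toMatrix_apply] using this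
  · have hcol : (fun l => M' l k) ∈ LinearMap.ker M.mulVecLin := by
      ext i
      simpa [mulVec, mul_apply'] using congr_fun₂ h i k
    have hrepr : b.toMatrix e *ᵥ (fun l => M' l k) = b.repr (fun l => M' l k) :=
      e.toMatrix_mulVec_repr b _
    rw [hinv, mul_apply', ← mulVec, hrepr]
    exact hj _ hcol

theorem Matrix.exists_isUnit_det_supportDisjoint_conj {K : Type*} [Field K] {d : ℕ → ℕ}
    {D : ∀ j, Matrix (Fin (d j)) (Fin (d (j + 1))) K} (hD : ∀ j, D j * D (j + 1) = 0) :
    ∃ B : ∀ j, Matrix (Fin (d j)) (Fin (d j)) K, (∀ j, IsUnit (B j).det) ∧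
      ∀ j, SupportDisjoint ((B j)⁻¹ * (D j * B (j + 1)))
        ((B (j + 1))⁻¹ * (D (j + 1) * B (j + 2))) := by
  choose C hC hCD using fun j => exists_isUnit_det_supportDisjoint (hD j)
  let B : ∀ j, Matrix (Fin (d j)) (Fin (d j)) K
    | 0 => 1
    | j + 1 => C j
  refine ⟨B, fun | 0 => by simp [B] | j + 1 => hC j, fun j => ?_⟩
  simpa only [B, Matrix.mul_assoc] using (hCD j).mul_mul (B j)⁻¹ (B (j + 2))

/-- Every chain complex over `F₂` admits a lift to a chain complex over `ℤ`:
there exist integer matrices, entrywise congruent mod 2 to the original boundary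
matrices, whose successive composites vanish over `ℤ`. -/
theorem stmt_0 (d : ℕ → ℕ)
    (D : ∀ j : ℕ, Matrix (Fin (d j)) (Fin (d (j + 1))) (ZMod 2))
    (hD : ∀ j, D j * D (j + 1) = 0) :
    ∃ Dt : ∀ j : ℕ, Matrix (Fin (d j)) (Fin (d (j + 1))) ℤ,
      (∀ j i k, ((Dt j i k : ℤ) : ZMod 2) = D j i k) ∧
      (∀ j, Dt j * Dt (j + 1) = 0) := by
  obtain ⟨B, hB, hN⟩ := exists_isUnit_det_supportDisjoint_conj hD
  let lift {r s : ℕ} (A : Matrix (Fin r) (Fin s) (ZMod 2)) : Matrix (Fin r) (Fin s) ℤ :=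
    A.map fun a => (a.val : ℤ)
  let N j := (B j)⁻¹ * (D j * B (j + 1))
  refine ⟨fun j => lift (B j) * lift (N j) * adjugate (lift (B (j + 1))), fun j i k => ?_,
    fun j => mul_adjugate_mul_mul_eq_zero (((hN j).map (by simp)).mul_eq_zero) _ _ _⟩
  have hadj := (Int.castRingHom (ZMod 2)).map_adjugate (lift (B (j + 1)))
  rw [RingHom.mapMatrix_apply, RingHom.mapMatrix_apply] at hadj
  have hred : (lift (B j) * lift (N j) * adjugate (lift (B (j + 1)))).map (Int.castRingHom _) =
      D j := by
    rw [Matrix.map_mul, Matrix.map_mul, hadj]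
    simp only [Int.coe_castRingHom, lift, map_intCast_map_val]
    rw [adjugate_eq_nonsing_inv_of_det_eq_one (isUnit_iff_eq_one.mp (hB (j + 1))),
      mul_nonsing_inv_cancel_left _ _ (hB j), mul_nonsing_inv_cancel_right _ _ (hB (j + 1))]
  exact congr_fun₂ hred i k
end

section
/- In a finite graph in which every vertex has degree at least 3, there exists a simple cycle of length O(log V), where V is the number of vertices; concretely, there is a cycle of length at most 2⌈log₂ V⌉ + 2. -/
set_option linter.unusedSectionVars false
set_option linter.unusedVariables false
set_option maxHeartbeats 1000000

/-- A multigraph on vertex type `V` is given by an edge type `E` together with an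
endpoint map `ε : E → Sym2 V` (self-edges and multi-edges are allowed).
A simple cycle of length `n` is a cyclic sequence of `n` distinct vertices joined
by `n` distinct edges. -/
structure MCycle (V E : Type*) (ε : E → Sym2 V) where
  n : ℕ
  npos : 0 < n
  vtx : ℕ → V
  edg : ℕ → E
  incid : ∀ i < n, ε (edg i) = s(vtx i, vtx ((i + 1) % n))
  vinj : ∀ i < n, ∀ j < n, vtx i = vtx j → i = j
  einj : ∀ i < n, ∀ j < n, edg i = edg j → i = j

/-- The degree of a vertex in a multigraph: a self-edge contributes `2`. -/
def mdeg {V E : Type*} [Fintype E] [DecidableEq V] (ε : E → Sym2 V) (x : V) : ℕ :=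
  ∑ f : E, (if ε f = s(x, x) then 2 else if x ∈ ε f then 1 else 0)

/-- The edge `f` is used by the cycle `c`. -/
abbrev inCyc {V E : Type*} {ε : E → Sym2 V} (c : MCycle V E ε) (f : E) : Prop :=
  ∃ i < c.n, c.edg i = f

section auxdev
variable {V E : Type} [Fintype V] [Fintype E] [DecidableEq V] [DecidableEq E]

/-- The other endpoint of an edge (a choice of `y` with `ε e = s(x, y)`). -/
noncomputable def oth (ε : E → Sym2 V) (x : V) (e : E) : V :=
  if h : ∃ y, ε e = s(x, y) then h.choose else x

lemma oth_spec {ε : E → Sym2 V} {x : V} {e : E} (hx : x ∈ ε e) :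
    ε e = s(x, oth ε x e) := by
  have h : ∃ y, ε e = s(x, y) := Sym2.mem_iff_exists.mp hx
  rw [oth, dif_pos h]
  exact h.choose_spec

lemma oth_ne {ε : E → Sym2 V} (hs : ∀ f x, ε f ≠ s(x, x)) {x : V} {e : E} (hx : x ∈ ε e) :
    oth ε x e ≠ x := by
  intro h
  have := oth_spec hx
  rw [h] at this
  exact hs e x this

lemma oth_mem {ε : E → Sym2 V} {x : V} {e : E} (hx : x ∈ ε e) : oth ε x e ∈ ε e := by
  rw [oth_spec hx]; exact Sym2.mem_mk_right _ _

lemma oth_oth {ε : E → Sym2 V} (hs : ∀ f x, ε f ≠ s(x, x)) {x : V} {e : E} (hx : x ∈ ε e) :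
    oth ε (oth ε x e) e = x := by
  have h2 := oth_spec (oth_mem hx)
  rw [oth_spec hx] at h2
  rcases Sym2.eq_iff.mp h2 with ⟨ha, _⟩ | ⟨ha, _⟩
  · exact absurd ha.symm (oth_ne hs hx)
  · exact ha.symm

open Classical in
/-- Non-backtracking walks of length `k` starting at `v`: the endpoint together
with the reversed list of edges used. -/
noncomputable def W (ε : E → Sym2 V) (v : V) : ℕ → Finset (V × List E)
  | 0 => {(v, [])}
  | (k+1) => (W ε v k).biUnion (fun p =>
      (Finset.univ.filter
        (fun e : E => p.1 ∈ ε e ∧ ∀ e' ∈ p.2.head?, e ≠ e')).image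
        (fun e => (oth ε p.1 e, e :: p.2)))

lemma mem_W_succ {ε : E → Sym2 V} {v : V} {k : ℕ} {p : V × List E} :
    p ∈ W ε v (k+1) ↔ ∃ x l e, (x, l) ∈ W ε v k ∧ x ∈ ε e ∧
      (∀ e' ∈ l.head?, e ≠ e') ∧ p = (oth ε x e, e :: l) := by
  classical
  rw [W, Finset.mem_biUnion]
  constructor
  · rintro ⟨q, hq, hp⟩
    simp only [Finset.mem_image, Finset.mem_filter] at hp
    obtain ⟨e, ⟨-, he1, he2⟩, rfl⟩ := hp
    exact ⟨q.1, q.2, e, hq, he1, he2, rfl⟩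
  · rintro ⟨x, l, e, hq, he1, he2, rfl⟩
    refine ⟨(x, l), hq, ?_⟩
    simp only [Finset.mem_image, Finset.mem_filter]
    exact ⟨e, ⟨Finset.mem_univ _, he1, he2⟩, rfl⟩

open Classical in
lemma card_W {ε : E → Sym2 V} {v : V}
    (hs : ∀ f x, ε f ≠ s(x, x))
    (hA : ∀ x : V, 3 ≤ (Finset.univ.filter (fun e : E => x ∈ ε e)).card) :
    ∀ k, 2 ^ k ≤ (W ε v k).card := by
  have e0 : E := by
    have h3 := hA v
    have : (Finset.univ.filter (fun e : E => v ∈ ε e)).Nonempty :=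
      Finset.card_pos.mp (by omega)
    exact this.choose
  intro k
  induction k with
  | zero => simp [W]
  | succ k ih =>
    have hdisj : ∀ p ∈ W ε v k, ∀ q ∈ W ε v k, p ≠ q →
        Disjoint ((Finset.univ.filter
          (fun e : E => p.1 ∈ ε e ∧ ∀ e' ∈ p.2.head?, e ≠ e')).image
          (fun e => (oth ε p.1 e, e :: p.2)))
        ((Finset.univ.filter
          (fun e : E => q.1 ∈ ε e ∧ ∀ e' ∈ q.2.head?, e ≠ e')).image
          (fun e => (oth ε q.1 e, e :: q.2))) := by
      intro p _ q _ hpq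
      rw [Finset.disjoint_left]
      rintro a ha hb
      simp only [Finset.mem_image, Finset.mem_filter] at ha hb
      obtain ⟨e, ⟨-, he1, -⟩, rfl⟩ := ha
      obtain ⟨f, ⟨-, hf1, -⟩, hf⟩ := hb
      apply hpq
      simp only [Prod.mk.injEq, List.cons.injEq] at hf
      obtain ⟨h1, h3, h4⟩ := hf
      have hp := oth_oth hs he1
      have hq := oth_oth hs hf1
      rw [h1, h3] at hq
      exact Prod.ext (hp.symm.trans hq) h4.symm
    rw [W, Finset.card_biUnion hdisj]
    have hbound : ∀ p ∈ W ε v k, 2 ≤ ((Finset.univ.filter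
          (fun e : E => p.1 ∈ ε e ∧ ∀ e' ∈ p.2.head?, e ≠ e')).image
          (fun e => (oth ε p.1 e, e :: p.2))).card := by
      intro p _
      rw [Finset.card_image_of_injOn
        (by intro a _ b _ hab; simpa using congrArg Prod.snd hab)]
      set h : E := p.2.head?.getD e0 with hh
      have hsub : (Finset.univ.filter (fun e : E => p.1 ∈ ε e)).erase h ⊆
          Finset.univ.filter (fun e : E => p.1 ∈ ε e ∧ ∀ e' ∈ p.2.head?, e ≠ e') := by
        intro e he
        rw [Finset.mem_erase, Finset.mem_filter] at he
        rw [Finset.mem_filter]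
        refine ⟨Finset.mem_univ _, he.2.2, ?_⟩
        intro e' he'
        have : h = e' := by rw [hh, Option.mem_def.mp he']; rfl
        exact this ▸ he.1
      calc 2 ≤ (Finset.univ.filter (fun e : E => p.1 ∈ ε e)).card - 1 := by
              have := hA p.1; omega
        _ ≤ ((Finset.univ.filter (fun e : E => p.1 ∈ ε e)).erase h).card := by
              rw [Finset.card_erase_eq_ite]; split <;> omega
        _ ≤ _ := Finset.card_le_card hsub
    calc 2 ^ (k+1) = 2 * 2 ^ k := by ring
      _ ≤ 2 * (W ε v k).card := by omega
      _ = ∑ _p ∈ W ε v k, 2 := by rw [Finset.sum_const]; ring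
      _ ≤ _ := Finset.sum_le_sum hbound

/-- From a closed walk one can extract a simple cycle of no greater length. -/
lemma extract (ε : E → Sym2 V) (hs : ∀ f x, ε f ≠ s(x, x)) (hi : Function.Injective ε)
    (m : ℕ) (hm : 0 < m) (X : ℕ → V) (Eg : ℕ → E)
    (hX : ∀ i < m, ε (Eg i) = s(X i, X (i + 1)))
    (hnb : ∀ i, i + 1 < m → Eg i ≠ Eg (i + 1))
    (hcl : X 0 = X m) :
    ∃ c : MCycle V E ε, c.n ≤ m := by
  have hP : ∃ n, 0 < n ∧ ∃ i, i + n ≤ m ∧ X i = X (i + n) := ⟨m, hm, 0, by simpa using hcl⟩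
  classical
  obtain ⟨hnpos, i, hin, hXi⟩ := Nat.find_spec hP
  set n := Nat.find hP with hn
  have hdist : ∀ a b, i ≤ a → a < b → b < i + n → X a ≠ X b := by
    intro a b ha hab hb hEq
    have hlt : b - a < n := by omega
    exact Nat.find_min hP hlt ⟨by omega, a, by omega, by
      have : a + (b - a) = b := by omega
      rw [this]; exact hEq⟩
  have hvinj : ∀ a < n, ∀ b < n, X (i + a) = X (i + b) → a = b := by
    intro a ha b hb hEq
    by_contra hne
    rcases Nat.lt_or_ge a b with h | h
    · exact hdist (i + a) (i + b) (by omega) (by omega) (by omega) hEq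
    · exact hdist (i + b) (i + a) (by omega) (by omega) (by omega) hEq.symm
  refine ⟨⟨n, hnpos, fun k => X (i + k), fun k => Eg (i + k), ?_, ?_, ?_⟩, ?_⟩
  · intro k hk
    have h1 := hX (i + k) (by omega)
    rcases Nat.lt_or_ge (k + 1) n with h | h
    · rw [Nat.mod_eq_of_lt h]; exact h1
    · have hk1 : k + 1 = n := by omega
      rw [hk1, Nat.mod_self, h1, show i + k + 1 = i + n by omega, ← hXi]
      norm_num
  · exact hvinj
  · intro a ha b hb hEq
    by_contra hne
    have key : ∀ a b, a < n → b < n → a < b → Eg (i + a) ≠ Eg (i + b) := by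
      intro a b ha hb hab hEq
      have h1 := hX (i + a) (by omega)
      have h2 := hX (i + b) (by omega)
      rw [hEq, h2] at h1
      rcases Sym2.eq_iff.mp h1.symm with ⟨u1, _⟩ | ⟨u1, u2⟩
      · exact absurd (hvinj a ha b hb u1) (by omega)
      · rcases Nat.lt_or_ge (b + 1) n with hb1 | hb1
        · have := hvinj a ha (b + 1) hb1 u1
          omega
        · have hbn : b + 1 = n := by omega
          have hXb1 : X (i + b + 1) = X (i + 0) := by
            rw [show i + b + 1 = i + n by omega, Nat.add_zero]
            exact hXi.symm
          have ha0 : a = 0 := by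
            apply hvinj a ha 0 (by omega)
            rw [u1]; exact hXb1
          rw [ha0] at u2
          have hb1' : b = 1 := by
            have := hvinj 1 (by omega) b hb (by simpa using u2)
            omega
          rw [ha0, hb1'] at hEq
          exact hnb (i + 0) (by omega) hEq
    rcases Nat.lt_or_ge a b with h | h
    · exact key a b ha hb h hEq
    · exact key b a hb ha (by omega) hEq.symm
  · calc n ≤ i + n := by omega
      _ ≤ m := hin

lemma walk_spec {ε : E → Sym2 V} {v : V} (e0 : E) :
    ∀ k, ∀ p ∈ W ε v k, p.2.length = k ∧ ∃ (X : ℕ → V) (Eg : ℕ → E),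
      X 0 = v ∧ X k = p.1 ∧ (∀ i < k, ε (Eg i) = s(X i, X (i + 1))) ∧
      (∀ i, i + 1 < k → Eg i ≠ Eg (i + 1)) ∧
      (∀ e l, p.2 = e :: l → Eg (k - 1) = e) := by
  intro k
  induction k with
  | zero =>
    intro p hp
    have hp' : p = (v, []) := by simpa [W] using hp
    subst hp'
    exact ⟨rfl, fun _ => v, fun _ => e0, rfl, rfl, by omega, by omega, by simp⟩
  | succ k ih =>
    intro p hp
    obtain ⟨x, l, e, hq, he, hnb, rfl⟩ := mem_W_succ.mp hp
    obtain ⟨hlen, X, Eg, hX0, hXk, hXe, hEnb, hEhd⟩ := ih (x, l) hq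
    refine ⟨by simpa using hlen, fun i => if i ≤ k then X i else oth ε x e,
      fun i => if i < k then Eg i else e, by simp [hX0], by simp, ?_, ?_, ?_⟩
    · intro i hik
      dsimp only
      rcases Nat.lt_or_ge i k with h | h
      · rw [if_pos h, if_pos (by omega : i ≤ k), if_pos (by omega : i + 1 ≤ k)]
        exact hXe i h
      · have hik' : i = k := by omega
        subst hik'
        rw [if_neg (by omega), if_pos le_rfl, if_neg (by omega)]
        rw [hXk]
        exact oth_spec he
    · intro i hik
      dsimp only
      rcases Nat.lt_or_ge (i + 1) k with h | h
      · rw [if_pos (by omega : i < k), if_pos h]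
        exact hEnb i h
      · have hik' : i + 1 = k := by omega
        rw [if_pos (by omega : i < k), if_neg (by omega)]
        intro hcon
        cases l with
        | nil => simp at hlen; omega
        | cons a t =>
          have := hEhd a t rfl
          have hk1 : k - 1 = i := by omega
          rw [hk1] at this
          exact hnb a (by simp) (by rw [← hcon, this])
    · intro f l' hfl
      simp only [List.cons.injEq] at hfl
      dsimp only
      rw [show k + 1 - 1 = k from rfl, if_neg (by omega), hfl.1]

lemma inj_W {ε : E → Sym2 V} {v : V} (hs : ∀ f x, ε f ≠ s(x, x))
    (hi : Function.Injective ε) (e0 : E) (R : ℕ)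
    (hnc : ¬ ∃ c : MCycle V E ε, c.n ≤ 2 * R) :
    ∀ r ≤ R, ∀ p ∈ W ε v r, ∀ q ∈ W ε v r, p.1 = q.1 → p = q := by
  intro r
  induction r with
  | zero =>
    intro _ p hp q hq _
    have hp' : p = (v, []) := by simpa [W] using hp
    have hq' : q = (v, []) := by simpa [W] using hq
    rw [hp', hq']
  | succ r ih =>
    intro hrR p hp q hq hpq
    obtain ⟨x, l, e, hx, hxe, hnbe, rfl⟩ := mem_W_succ.mp hp
    obtain ⟨y, m, f, hy, hyf, hnbf, rfl⟩ := mem_W_succ.mp hq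
    by_cases hef : e = f
    · subst hef
      have h1 : oth ε x e = oth ε y e := hpq
      have hxy : x = y := by
        have h2 := oth_oth hs hxe
        have h3 := oth_oth hs hyf
        rw [← h1] at h3
        exact h2.symm.trans h3
      subst hxy
      have hlm : l = m :=
        congrArg Prod.snd (ih (by omega) (x, l) hx (x, m) hy rfl)
      rw [hlm]
    · exfalso
      obtain ⟨hlenp, Xp, Egp, hXp0, hXpk, hXpe, hEnbp, hEhdp⟩ :=
        walk_spec e0 (r + 1) _ hp
      obtain ⟨hlenq, Xq, Egq, hXq0, hXqk, hXqe, hEnbq, hEhdq⟩ :=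
        walk_spec e0 (r + 1) _ hq
      have hend : Xp (r + 1) = Xq (r + 1) := by rw [hXpk, hXqk]; exact hpq
      have hep : Egp r = e := hEhdp e l rfl
      have heq' : Egq r = f := hEhdq f m rfl
      have hincid : ∀ i < 2 * (r + 1),
          ε (if i < r + 1 then Egp i else Egq (2 * (r + 1) - 1 - i)) =
          s((if i ≤ r + 1 then Xp i else Xq (2 * (r + 1) - i)),
            (if i + 1 ≤ r + 1 then Xp (i + 1) else Xq (2 * (r + 1) - (i + 1)))) := by
        intro i hi2
        rcases Nat.lt_or_ge i (r + 1) with h | h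
        · rw [if_pos h, if_pos (by omega : i ≤ r + 1), if_pos (by omega : i + 1 ≤ r + 1)]
          exact hXpe i h
        · have hj : 2 * (r + 1) - 1 - i < r + 1 := by omega
          have h1 := hXqe _ hj
          have hXi1 : (if i + 1 ≤ r + 1 then Xp (i + 1) else Xq (2 * (r + 1) - (i + 1)))
              = Xq (2 * (r + 1) - 1 - i) := by
            rw [if_neg (by omega)]; congr 1; omega
          have hXi : (if i ≤ r + 1 then Xp i else Xq (2 * (r + 1) - i))
              = Xq (2 * (r + 1) - 1 - i + 1) := by
            rcases Nat.lt_or_ge (r + 1) i with h' | h'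
            · rw [if_neg (by omega)]; congr 1; omega
            · have hieq : i = r + 1 := by omega
              subst hieq
              rw [if_pos le_rfl, hend]; congr 1; omega
          rw [if_neg (by omega), hXi, hXi1, h1, Sym2.eq_swap]
      have hnonbt : ∀ i, i + 1 < 2 * (r + 1) →
          (if i < r + 1 then Egp i else Egq (2 * (r + 1) - 1 - i)) ≠
          (if i + 1 < r + 1 then Egp (i + 1) else Egq (2 * (r + 1) - 1 - (i + 1))) := by
        intro i hi2
        rcases Nat.lt_or_ge (i + 1) (r + 1) with h | h
        · rw [if_pos (by omega : i < r + 1), if_pos h]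
          exact hEnbp i h
        · rcases Nat.lt_or_ge i (r + 1) with h' | h'
          · have hieq : i = r := by omega
            rw [if_pos (by omega : i < r + 1), if_neg (by omega : ¬ i + 1 < r + 1), hieq,
              show 2 * (r + 1) - 1 - (r + 1) = r by omega, hep, heq']
            exact hef
          · rw [if_neg (by omega), if_neg (by omega),
              show 2 * (r + 1) - 1 - i = (2 * (r + 1) - 1 - (i + 1)) + 1 by omega]
            exact (hEnbq _ (by omega)).symm
      have hclosed : (if 0 ≤ r + 1 then Xp 0 else Xq (2 * (r + 1) - 0))
          = (if 2 * (r + 1) ≤ r + 1 then Xp (2 * (r + 1)) else Xq (2 * (r + 1) - 2 * (r + 1))) := by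
        rw [if_pos (by omega), if_neg (by omega), hXp0,
          show 2 * (r + 1) - 2 * (r + 1) = 0 by omega, hXq0]
      obtain ⟨c, hc⟩ := extract ε hs hi (2 * (r + 1)) (by omega)
          (fun i => if i ≤ r + 1 then Xp i else Xq (2 * (r + 1) - i))
          (fun i => if i < r + 1 then Egp i else Egq (2 * (r + 1) - 1 - i))
          hincid hnonbt hclosed
      exact hnc ⟨c, by omega⟩

end auxdev

/-- In a finite nonempty multigraph in which every vertex has degree at least 3,
there is a simple cycle of length at most `2⌈log₂ V⌉ + 2`. -/
theorem stmt_6 {V E : Type} [Fintype V] [Fintype E] [DecidableEq V] [DecidableEq E]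
    [Nonempty V] (ε : E → Sym2 V) (hdeg : ∀ x : V, 3 ≤ mdeg ε x) :
    ∃ c : MCycle V E ε, c.n ≤ 2 * Nat.clog 2 (Fintype.card V) + 2 := by
  classical
  by_cases hself : ∃ f x, ε f = s(x, x)
  · obtain ⟨f, x, hf⟩ := hself
    refine ⟨⟨1, one_pos, fun _ => x, fun _ => f, ?_, ?_, ?_⟩, ?_⟩
    · intro i hi1
      simpa using hf
    · intro i hi1 j hj1 _; omega
    · intro i hi1 j hj1 _; omega
    · show (1 : ℕ) ≤ _
      omega
  push_neg at hself
  by_cases hmulti : ∃ f g, f ≠ g ∧ ε f = ε g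
  · obtain ⟨f, g, hfg, hfe⟩ := hmulti
    obtain ⟨⟨a, b⟩, hab⟩ := Quot.exists_rep (ε f)
    have hab' : ε f = s(a, b) := hab.symm
    have hne : a ≠ b := by
      intro h
      rw [h] at hab'
      exact hself f b hab'
    refine ⟨⟨2, two_pos, fun i => if i % 2 = 0 then a else b,
      fun i => if i % 2 = 0 then f else g, ?_, ?_, ?_⟩, ?_⟩
    · intro i hi2
      interval_cases i
      · simpa using hab'
      · simp only [show (1 : ℕ) % 2 = 1 from rfl, show ((1:ℕ) + 1) % 2 = 0 from rfl]
        norm_num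
        rw [← hfe, hab', Sym2.eq_swap]
    · intro i hi2 j hj2 h
      interval_cases i <;> interval_cases j
      · rfl
      · exfalso; norm_num at h; exact hne h
      · exfalso; norm_num at h; exact hne h.symm
      · rfl
    · intro i hi2 j hj2 h
      interval_cases i <;> interval_cases j
      · rfl
      · exfalso; norm_num at h; exact hfg h
      · exfalso; norm_num at h; exact hfg h.symm
      · rfl
    · show (2 : ℕ) ≤ _
      omega
  push_neg at hmulti
  have hi : Function.Injective ε := by
    intro f g h
    by_contra hne
    exact hmulti f g hne h
  have hA : ∀ x : V, 3 ≤ (Finset.univ.filter (fun e : E => x ∈ ε e)).card := by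
    intro x
    have hm : mdeg ε x = (Finset.univ.filter (fun e : E => x ∈ ε e)).card := by
      rw [mdeg, Finset.card_filter]
      apply Finset.sum_congr rfl
      intro f _
      rw [if_neg (hself f x)]
    rw [← hm]
    exact hdeg x
  obtain ⟨v⟩ := ‹Nonempty V›
  have e0 : E := by
    have h3 := hA v
    exact (Finset.card_pos.mp (by omega : 0 < (Finset.univ.filter (fun e : E => v ∈ ε e)).card)).choose
  by_contra hnc
  set N := Fintype.card V with hN
  set R := Nat.clog 2 N + 1 with hR
  have hnc' : ¬ ∃ c : MCycle V E ε, c.n ≤ 2 * R := by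
    rintro ⟨c, hcy⟩
    exact hnc ⟨c, by omega⟩
  have hinj := inj_W (ε := ε) (v := v) hself hi e0 R hnc' R le_rfl
  have hcardle : (W ε v R).card ≤ N := by
    have := Finset.card_le_card_of_injOn (fun p : V × List E => p.1)
      (fun p _ => Finset.mem_univ p.1)
      (fun p hp q hq h => hinj p hp q hq h)
    simpa using this
  have h2R := card_W (ε := ε) (v := v) hself hA R
  have hle : N ≤ 2 ^ Nat.clog 2 N := Nat.le_pow_clog (by norm_num) N
  have hNpos : 0 < N := Fintype.card_pos
  have hpow : 2 ^ R = 2 * 2 ^ Nat.clog 2 N := by rw [hR, pow_succ]; ring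
  omega
end

section
/- Let G be a connected finite graph regarded as a 1-dimensional CW complex, and let C_1, …, C_k be a weakly fundamental cycle basis of G, i.e., a cycle basis ordered so that each C_i contains an edge e_i not contained in any C_j with j > i. Then the complement G ∖ {e_1, …, e_k} is a spanning tree of G. -/
open SimpleGraph

/-- The `Z/2` edge chain (indicator of the edge list) of a walk in a simple graph. -/
def walkChain {V : Type*} [DecidableEq V] {G : SimpleGraph V} {u v : V}
    (w : G.Walk u v) : Sym2 V → ZMod 2 :=
  fun s => if s ∈ w.edges then 1 else 0

/-- The cycle-space condition over `Z/2`: the chain is supported on edges of `G`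
and its boundary vanishes at every vertex. -/
def cycleCond {V : Type*} [Fintype V] [DecidableEq V] (G : SimpleGraph V)
    (c : Sym2 V → ZMod 2) : Prop :=
  (∀ s : Sym2 V, c s ≠ 0 → s ∈ G.edgeSet) ∧
    ∀ x : V, (∑ s : Sym2 V, if x ∈ s then c s else 0) = 0

/-!
The edges are deleted in the order `e₁, …, e_k`: when `eᵢ` is deleted it still lies on the
cycle `Cᵢ`, which avoids the earlier `eⱼ`, so it is not a bridge and connectivity survives.
A cycle `Z` of the remaining graph lies in the cycle space, so `Z = ∑ aᵢ Cᵢ`. Evaluating at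
`eᵢ` for the least `i` with `aᵢ ≠ 0` gives `aᵢ` on the right (the `Cⱼ` with `j > i` miss `eᵢ`)
and `0` on the left, since `Z` avoids every `eᵢ`; hence `Z = 0`, which is absurd.
-/

theorem eq_zero_of_mem_span_of_triangular {ι α K : Type*} [LinearOrder ι] [Fintype ι]
    [Field K] {v : ι → α → K} {e : ι → α} (hdiag : ∀ i, v i (e i) ≠ 0)
    (hlater : ∀ i j, i < j → v j (e i) = 0) {c : α → K}
    (hc : c ∈ Submodule.span K (Set.range v)) (hce : ∀ i, c (e i) = 0) : c = 0 := by
  classical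
  obtain ⟨a, rfl⟩ := (Submodule.mem_span_range_iff_exists_fun K).mp hc
  suffices ha : a = 0 by simp [ha]
  by_contra! hne
  obtain ⟨i, hi, hmin⟩ := (Finset.univ.filter fun i => a i ≠ 0).exists_minimal
    (by simpa [Finset.Nonempty, funext_iff] using hne)
  have hsum : ∑ j, a j * v j (e i) = a i * v i (e i) := by
    refine Finset.sum_eq_single i (fun j _ hji => ?_) (by simp)
    rcases hji.lt_or_gt with hj | hj
    · simp [show a j = 0 by by_contra h; exact (hmin (by simpa using h) hj.le).not_gt hj]
    · simp [hlater i j hj]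
  have hcei := hce i
  simp only [Finset.sum_apply, Pi.smul_apply, smul_eq_mul, hsum] at hcei
  exact mul_ne_zero (by simpa using hi) (hdiag i) hcei

namespace SimpleGraph

variable {V : Type*} {G : SimpleGraph V}

theorem Connected.deleteEdges_singleton_of_mem_edges_isCycle (hG : G.Connected) {u : V}
    {c : G.Walk u u} (hc : c.IsCycle) {e : Sym2 V} (he : e ∈ c.edges) :
    (G.deleteEdges {e}).Connected := by
  induction e with
  | h x y =>
    exact hG.connected_delete_edge_of_not_isBridge fun hb => hb.notMem_edges_of_isCycle hc he

theorem Connected.deleteEdges_image_of_exists_isCycle {ι : Type*} [LinearOrder ι]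
    (hG : G.Connected) (e : ι → Sym2 V)
    (hcyc : ∀ i, ∃ (u : V) (c : G.Walk u u), c.IsCycle ∧ e i ∈ c.edges ∧ ∀ j < i, e j ∉ c.edges)
    (s : Finset ι) : (G.deleteEdges (e '' s)).Connected := by
  classical
  induction s using Finset.induction_on_max with
  | empty => simpa using hG
  | insert i s hlt ih =>
    obtain ⟨u, c, hc, hec, havoid⟩ := hcyc i
    have hcH : ∀ f ∈ c.edges, f ∉ e '' s := by
      rintro f hf ⟨j, hj, rfl⟩
      exact havoid j (hlt j hj) hf
    rw [Finset.coe_insert, Set.image_insert_eq, ← Set.union_singleton, ← deleteEdges_deleteEdges]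
    exact ih.deleteEdges_singleton_of_mem_edges_isCycle (c := c.toDeleteEdges _ hcH)
      (hc.transfer _) (by rwa [Walk.edges_transfer])

end SimpleGraph

section CycleSpace

variable {V : Type*} [DecidableEq V] {G : SimpleGraph V}

theorem walkChain_ne_zero_of_not_nil {u v : V} {p : G.Walk u v} (hp : ¬p.Nil) :
    walkChain p ≠ 0 := by
  obtain ⟨f, hf⟩ := List.exists_mem_of_ne_nil _ (Walk.edges_eq_nil.not.mpr hp)
  exact fun h => by simpa [walkChain, hf] using congrFun h f

variable [Fintype V]

theorem sum_incident_walkChain_eq_countP {u v : V} {p : G.Walk u v} (hp : p.IsTrail) (x : V) :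
    (∑ s : Sym2 V, if x ∈ s then walkChain p s else 0) = (p.edges.countP (x ∈ ·) : ZMod 2) := by
  have hfilter : (Finset.univ.filter fun s : Sym2 V => x ∈ s ∧ s ∈ p.edges) =
      (p.edges.filter (x ∈ ·)).toFinset := by
    ext s
    simp [and_comm]
  rw [List.countP_eq_length_filter, ← List.toFinset_card_of_nodup (hp.edges_nodup.filter _),
    ← hfilter, ← Finset.sum_boole]
  simp only [walkChain, ite_and]

theorem cycleCond_walkChain {u : V} {p : G.Walk u u} (hp : p.IsTrail) :
    cycleCond G (walkChain p) := by
  refine ⟨fun f hf => p.edges_subset_edgeSet ?_, fun x => ?_⟩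
  · by_contra h
    simp [walkChain, h] at hf
  · rw [sum_incident_walkChain_eq_countP hp, ZMod.natCast_eq_zero_iff_even]
    exact (hp.even_countP_edges_iff x).mpr fun h => absurd rfl h

theorem cycleCond.mono {H : SimpleGraph V} (hHG : H ≤ G) {c : Sym2 V → ZMod 2}
    (hc : cycleCond H c) : cycleCond G c :=
  ⟨fun f hf => edgeSet_mono hHG (hc.1 f hf), hc.2⟩

end CycleSpace

theorem stmt_7_general {V : Type} [Fintype V] [DecidableEq V] (G : SimpleGraph V)
    (hconn : G.Connected) (k : ℕ) (r : Fin k → V)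
    (C : ∀ i : Fin k, G.Walk (r i) (r i)) (hcyc : ∀ i, (C i).IsCycle)
    (hspan : ∀ c : Sym2 V → ZMod 2, cycleCond G c →
      c ∈ Submodule.span (ZMod 2) (Set.range fun i => walkChain (C i)))
    (e : Fin k → Sym2 V) (he : ∀ i, e i ∈ (C i).edges)
    (hlater : ∀ i j, i < j → e i ∉ (C j).edges) :
    (G.deleteEdges (Set.range e)).IsTree := by
  refine ⟨?_, fun u p hp => ?_⟩
  · simpa using hconn.deleteEdges_image_of_exists_isCycle e
      (fun j => ⟨r j, C j, hcyc j, he j, fun i hij => hlater i j hij⟩) Finset.univ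
  · have hcond : cycleCond G (walkChain p) :=
      (cycleCond_walkChain hp.isTrail).mono (G.deleteEdges_le _)
    have havoid : ∀ i, walkChain p (e i) = 0 := fun i => by
      have : e i ∉ p.edges := fun h => by simpa using p.edges_subset_edgeSet h
      simp [walkChain, this]
    exact walkChain_ne_zero_of_not_nil hp.not_nil <|
      eq_zero_of_mem_span_of_triangular (v := fun i => walkChain (C i))
        (fun i => by simp [walkChain, he i]) (fun i j hij => by simp [walkChain, hlater i j hij])
        (hspan _ hcond) havoid

/-- If `C₁, …, C_k` is a weakly fundamental cycle basis of a connected finite graph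
`G` (the chains of the cycles form a `Z/2` basis of the cycle space, and each `Cᵢ`
contains an edge `eᵢ` not contained in any later cycle), then deleting the edges
`e₁, …, e_k` from `G` yields a spanning tree. -/
theorem stmt_7 {V : Type} [Fintype V] [DecidableEq V] (G : SimpleGraph V)
    (hconn : G.Connected) (k : ℕ) (r : Fin k → V)
    (C : ∀ i : Fin k, G.Walk (r i) (r i)) (hcyc : ∀ i, (C i).IsCycle)
    (hindep : LinearIndependent (ZMod 2) fun i => walkChain (C i))
    (hspan : ∀ c : Sym2 V → ZMod 2, cycleCond G c →
      c ∈ Submodule.span (ZMod 2) (Set.range fun i => walkChain (C i)))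
    (e : Fin k → Sym2 V) (he : ∀ i, e i ∈ (C i).edges)
    (hlater : ∀ i j, i < j → e i ∉ (C j).edges) :
    (G.deleteEdges (Set.range e)).IsTree :=
  stmt_7_general G hconn k r C hcyc hspan e he hlater
end

section
/- Let G be a connected finite graph and let C_1, …, C_k be a weakly fundamental cycle basis of G. Then the homotopy classes of the cycles C_1, …, C_k (based appropriately) form a free basis for the fundamental group π_1(G), which is a free group of rank k. Consequently, attaching a 2-cell along each C_i yields a simply connected 2-complex. -/
/-!
Let `e i` be an edge of `C i` lying on no later cycle. Deleting all the `e i` leaves a spanning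
tree `T`. It is connected because, deleting the `e i` in increasing order, `C i` is still
present when `e i` is removed, so `e i` is never a bridge. It is acyclic because a cycle of `T`
is an element of the cycle space vanishing on every `e i`, while the matrix of values of the
`C i` at the `e j` is unitriangular.

Reading the oriented `e i` along a closed walk is then the classical isomorphism of `π₁(G)` onto
the free group on the non-tree edges; its inverse sends `i` to the tree loop through `e i`. Under
it `C i` becomes a word `A * i * B` whose other letters are all `> i`, and such a unitriangular
family is a free basis: adjoining the indices in decreasing order, each step composes with the
elementary automorphism `i ↦ A * i * B`.
-/

open SimpleGraph

theorem eq_zero_of_mem_span_range_of_triangular {ι X K : Type*} [Fintype ι] [LinearOrder ι]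
    [Semiring K] [NoZeroDivisors K] {v : ι → X → K} {x : ι → X}
    (hdiag : ∀ i, v i (x i) ≠ 0) (hlt : ∀ i j, i < j → v j (x i) = 0)
    {c : X → K} (hc : c ∈ Submodule.span K (Set.range v)) (hcx : ∀ i, c (x i) = 0) : c = 0 := by
  obtain ⟨a, rfl⟩ := (Submodule.mem_span_range_iff_exists_fun K).1 hc
  suffices ha : ∀ i, a i = 0 by simp [ha]
  intro i
  induction i using WellFoundedLT.induction with
  | _ i ih =>
    have hci := hcx i
    rw [Finset.sum_apply, Finset.sum_eq_single i] at hci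
    · exact (mul_eq_zero.1 hci).resolve_right (hdiag i)
    · intro j _ hji
      rcases hji.lt_or_gt with hj | hj
      · simp [ih j hj]
      · simp [hlt i j hj]
    · simp

namespace FreeGroup

variable {ι : Type*}

def IsTriangularAt [Preorder ι] (i : ι) (g : FreeGroup ι) : Prop :=
  ∃ A ∈ Subgroup.closure (of '' Set.Ioi i), ∃ B ∈ Subgroup.closure (of '' Set.Ioi i),
    g = A * of i * B

theorem map_eq_self_of_mem_closure {F : FreeGroup ι →* FreeGroup ι} {S : Set ι}
    (hF : ∀ j ∈ S, F (of j) = of j) {g : FreeGroup ι} (hg : g ∈ Subgroup.closure (of '' S)) :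
    F g = g :=
  MonoidHom.eqOn_closure (g := MonoidHom.id _) (by rintro _ ⟨j, hj, rfl⟩; exact hF j hj) hg

theorem IsTriangularAt.mem_closure_compl [LinearOrder ι] {a i : ι} (hai : a < i)
    {g : FreeGroup ι} (hg : IsTriangularAt i g) : g ∈ Subgroup.closure (of '' {a}ᶜ) := by
  have hle : Subgroup.closure (of '' Set.Ioi i) ≤ Subgroup.closure (of '' {a}ᶜ) :=
    Subgroup.closure_mono (Set.image_mono fun j hj => (hai.trans hj).ne')
  obtain ⟨A, hA, B, hB, rfl⟩ := hg
  exact mul_mem (mul_mem (hle hA) (Subgroup.subset_closure ⟨i, hai.ne', rfl⟩)) (hle hB)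

variable [DecidableEq ι]

theorem lift_update_of_mul_bijective {n : ι} {A B : FreeGroup ι}
    (hA : A ∈ Subgroup.closure (of '' {n}ᶜ)) (hB : B ∈ Subgroup.closure (of '' {n}ᶜ)) :
    Function.Bijective (lift (Function.update of n (A * of n * B))) := by
  set φ := lift (Function.update of n (A * of n * B))
  set ψ := lift (Function.update of n (A⁻¹ * of n * B⁻¹))
  have hφ : ∀ j ∈ ({n}ᶜ : Set ι), φ (of j) = of j := fun j hj => by
    simp [φ, Function.update_of_ne hj]
  have hψ : ∀ j ∈ ({n}ᶜ : Set ι), ψ (of j) = of j := fun j hj => by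
    simp [ψ, Function.update_of_ne hj]
  have hφn : φ (of n) = A * of n * B := by simp [φ]
  have hψn : ψ (of n) = A⁻¹ * of n * B⁻¹ := by simp [ψ]
  have hψφ : ψ.comp φ = MonoidHom.id _ := ext_hom _ _ fun j => by
    rcases eq_or_ne j n with rfl | hj
    · rw [MonoidHom.comp_apply, MonoidHom.id_apply, hφn, _root_.map_mul, _root_.map_mul, hψn,
        map_eq_self_of_mem_closure hψ hA, map_eq_self_of_mem_closure hψ hB]
      group
    · simp [φ, ψ, Function.update_of_ne hj]
  have hφψ : φ.comp ψ = MonoidHom.id _ := ext_hom _ _ fun j => by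
    rcases eq_or_ne j n with rfl | hj
    · rw [MonoidHom.comp_apply, MonoidHom.id_apply, hψn, _root_.map_mul, _root_.map_mul,
        _root_.map_inv, _root_.map_inv, hφn, map_eq_self_of_mem_closure hφ hA,
        map_eq_self_of_mem_closure hφ hB]
      group
    · simp [φ, ψ, Function.update_of_ne hj]
  exact Function.bijective_iff_has_inverse.2 ⟨ψ, DFunLike.congr_fun hψφ, DFunLike.congr_fun hφψ⟩

theorem IsTriangularAt.lift_update_bijective [LinearOrder ι] {n : ι} {g : FreeGroup ι}
    (hg : IsTriangularAt n g) : Function.Bijective (lift (Function.update of n g)) := by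
  have hle : Subgroup.closure (of '' Set.Ioi n) ≤ Subgroup.closure (of '' {n}ᶜ) :=
    Subgroup.closure_mono (Set.image_mono fun j hj => ne_of_gt hj)
  obtain ⟨A, hA, B, hB, rfl⟩ := hg
  exact lift_update_of_mul_bijective (hle hA) (hle hB)

theorem lift_bijective_of_isTriangularAt [LinearOrder ι] [Fintype ι] {w : ι → FreeGroup ι}
    (hw : ∀ i, IsTriangularAt i (w i)) : Function.Bijective (lift w) := by
  suffices h : ∀ s : Finset ι, Function.Bijective (lift fun i => if i ∈ s then w i else of i) by
    simpa using h Finset.univ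
  intro s
  induction s using Finset.induction_on_min with
  | empty => simpa [lift_of_eq_id] using Function.bijective_id
  | insert a s has ih =>
    have hcomp : (lift fun i => if i ∈ insert a s then w i else of i)
        = (lift (Function.update of a (w a))).comp (lift fun i => if i ∈ s then w i else of i) :=
      ext_hom _ _ fun i => by
        by_cases hi : i ∈ s
        · rw [MonoidHom.comp_apply, lift_apply_of, lift_apply_of,
            if_pos (Finset.mem_insert_of_mem hi), if_pos hi,
            map_eq_self_of_mem_closure (fun j hj => by simp [Function.update_of_ne hj])
              ((hw i).mem_closure_compl (has i hi))]
        · rcases eq_or_ne i a with rfl | hia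
          · simp [hi]
          · simp [hi, hia]
    rw [hcomp]
    exact (hw a).lift_update_bijective.comp ih

end FreeGroup

namespace SimpleGraph

section SpanningTree

variable {V : Type*} {G : SimpleGraph V} {ι : Type*} [LinearOrder ι] {r : ι → V}
  {C : ∀ i, G.Walk (r i) (r i)} {e : ι → Sym2 V}

theorem injective_of_triangular (he : ∀ i, e i ∈ (C i).edges)
    (hlt : ∀ i j, i < j → e i ∉ (C j).edges) : Function.Injective e := by
  intro i j hij
  by_contra hne
  rcases lt_or_gt_of_ne hne with h | h
  · exact hlt i j h (hij ▸ he j)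
  · exact hlt j i h (hij ▸ he i)

variable [Fintype ι]

theorem Connected.deleteEdges_of_triangular (hconn : G.Connected) (hcyc : ∀ i, (C i).IsCycle)
    (he : ∀ i, e i ∈ (C i).edges) (hlt : ∀ i j, i < j → e i ∉ (C j).edges) :
    (G.deleteEdges (Set.range e)).Connected := by
  suffices h : ∀ s : Finset ι, (G.deleteEdges (e '' s)).Connected by
    simpa using h Finset.univ
  intro s
  induction s using Finset.induction_on_max with
  | empty => simpa using hconn
  | insert a s hsa ih =>
    have hCa : ∀ t ∈ (C a).edges, t ∈ (G.deleteEdges (e '' s)).edgeSet := by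
      intro t ht
      rw [edgeSet_deleteEdges]
      refine ⟨(C a).edges_subset_edgeSet ht, ?_⟩
      rintro ⟨i, hi, rfl⟩
      exact hlt i a (hsa i hi) ht
    have hbridge : ¬ (G.deleteEdges (e '' s)).IsBridge (e a) := fun hbr =>
      hbr.notMem_edges_of_isCycle ((hcyc a).transfer hCa) (by simpa using he a)
    rw [Finset.coe_insert, Set.image_insert_eq, Set.insert_eq, Set.union_comm,
      ← deleteEdges_deleteEdges]
    generalize e a = t at hbridge
    induction t using Sym2.ind with
    | h x y => exact ih.connected_delete_edge_of_not_isBridge hbridge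

variable [Fintype V] [DecidableEq V]

theorem Walk.IsTrail.sum_walkChain_eq_countP {u v : V} {p : G.Walk u v} (hp : p.IsTrail)
    (x : V) : (∑ s : Sym2 V, if x ∈ s then walkChain p s else 0)
      = ((p.edges.countP (x ∈ ·) : ℕ) : ZMod 2) := by
  simp_rw [walkChain, ← ite_and, Finset.sum_boole, List.countP_eq_length_filter,
    ← List.toFinset_card_of_nodup (hp.edges_nodup.filter _)]
  congr 2
  ext s
  simp [and_comm]

theorem Walk.IsCycle.cycleCond_walkChain {v : V} {p : G.Walk v v} (hp : p.IsCycle) :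
    cycleCond G (walkChain p) := by
  refine ⟨fun s hs => p.edges_subset_edgeSet ?_, fun x => ?_⟩
  · by_contra h
    simp [walkChain, h] at hs
  · rw [hp.isTrail.sum_walkChain_eq_countP, ZMod.natCast_eq_zero_iff_even]
    exact (hp.isTrail.even_countP_edges_iff x).2 fun h => absurd rfl h

theorem isAcyclic_deleteEdges_of_triangular
    (hspan : ∀ c, cycleCond G c → c ∈ Submodule.span (ZMod 2) (Set.range fun i => walkChain (C i)))
    (he : ∀ i, e i ∈ (C i).edges) (hlt : ∀ i j, i < j → e i ∉ (C j).edges) :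
    (G.deleteEdges (Set.range e)).IsAcyclic := by
  intro v p hp
  set q := p.mapLe (G.deleteEdges_le (Set.range e))
  have hq : q.IsCycle := hp.mapLe _
  have hq_edges : ∀ s ∈ q.edges, s ∉ Set.range e := fun s hs => by
    rw [Walk.edges_mapLe_eq_edges] at hs
    have hs' := p.edges_subset_edgeSet hs
    rw [edgeSet_deleteEdges] at hs'
    exact hs'.2
  have hzero : walkChain q = 0 :=
    eq_zero_of_mem_span_range_of_triangular (x := e) (by simp [walkChain, he])
      (fun i j hij => by simp [walkChain, hlt i j hij]) (hspan _ hq.cycleCond_walkChain)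
      (fun i => if_neg fun h => hq_edges _ h ⟨i, rfl⟩)
  obtain ⟨s, hs⟩ := List.exists_mem_of_ne_nil _ (Walk.edges_eq_nil.not.2 hq.not_nil)
  simpa [walkChain, hs] using congrFun hzero s

end SpanningTree

section TreeWalks

variable {V : Type*} {G : SimpleGraph V} {v₀ : V}

theorem IsAcyclic.eq_append_or_eq_append (hG : G.IsAcyclic) {σ : ∀ x, G.Walk v₀ x}
    (hσ : ∀ x, (σ x).IsPath) {x y : V} (a : G.Adj x y) :
    σ y = (σ x).append a.toWalk ∨ σ x = (σ y).append a.symm.toWalk := by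
  classical
  have huniq {u w : V} {p q : G.Walk u w} (hp : p.IsPath) (hq : q.IsPath) : p = q :=
    congrArg Subtype.val ((hG.subsingleton_path u w).elim ⟨p, hp⟩ ⟨q, hq⟩)
  by_cases hx : x ∈ (σ y).support
  · left
    conv_lhs => rw [← (σ y).take_spec hx]
    rw [huniq ((hσ y).takeUntil hx) (hσ x), huniq ((hσ y).dropUntil hx) a.isPath_toWalk]
  · exact .inr (huniq (hσ x) ((hσ y).concat hx a.symm))

structure IsTreeWalks (E : Set (Sym2 V)) (σ : ∀ x, G.Walk v₀ x) : Prop where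
  eq_nil : σ v₀ = .nil
  notMem_of_mem_edges : ∀ x, ∀ s ∈ (σ x).edges, s ∉ E
  eq_append_or_eq_append : ∀ ⦃x y : V⦄ (a : G.Adj x y), s(x, y) ∉ E →
    σ y = (σ x).append a.toWalk ∨ σ x = (σ y).append a.symm.toWalk

theorem IsTree.exists_isTreeWalks {E : Set (Sym2 V)} (hT : (G.deleteEdges E).IsTree) (v₀ : V) :
    ∃ σ : ∀ x, G.Walk v₀ x, IsTreeWalks E σ := by
  choose τ hτ using hT.existsUnique_path v₀
  have hle := G.deleteEdges_le E
  refine ⟨fun x => (τ x).mapLe hle, ⟨?_, fun x s hs => ?_, fun x y a haE => ?_⟩⟩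
  · rw [← (hτ v₀).2 .nil .nil]
    rfl
  · rw [Walk.edges_mapLe_eq_edges] at hs
    have hs' := (τ x).edges_subset_edgeSet hs
    rw [edgeSet_deleteEdges] at hs'
    exact hs'.2
  · have aT : (G.deleteEdges E).Adj x y := (deleteEdges_adj ..).2 ⟨a, haE⟩
    rcases hT.isAcyclic.eq_append_or_eq_append (fun x => (hτ x).1) aT with h | h
    · exact .inl (by rw [h, Walk.mapLe, Walk.map_append]; rfl)
    · exact .inr (by rw [h, Walk.mapLe, Walk.map_append]; rfl)

end TreeWalks


section LoopHom

variable {V : Type*} {G : SimpleGraph V} {v₀ : V} {H : Type*} [Group H]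

structure IsLoopHom (f : G.Walk v₀ v₀ → H) : Prop where
  map_nil : f .nil = 1
  map_append : ∀ w₁ w₂ : G.Walk v₀ v₀, f (w₁.append w₂) = f w₁ * f w₂
  map_backtrack : ∀ (u w : V) (a : G.Adj u w) (p : G.Walk v₀ u) (q : G.Walk u v₀),
    f (p.append q) = f (p.append ((Walk.cons a (Walk.cons a.symm Walk.nil)).append q))

def basedLoop (σ : ∀ x, G.Walk v₀ x) {x y : V} (w : G.Walk x y) : G.Walk v₀ v₀ :=
  (σ x).append (w.append (σ y).reverse)

theorem basedLoop_reverse (σ : ∀ x, G.Walk v₀ x) {x y : V} (w : G.Walk x y) :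
    basedLoop σ w.reverse = (basedLoop σ w).reverse := by
  simp [basedLoop, Walk.reverse_append, Walk.append_assoc]

theorem basedLoop_eq_self {σ : ∀ x, G.Walk v₀ x} (hσ : σ v₀ = .nil) (w : G.Walk v₀ v₀) :
    basedLoop σ w = w := by
  simp [basedLoop, hσ]

namespace IsLoopHom

variable {f : G.Walk v₀ v₀ → H} (hf : IsLoopHom f)
include hf

theorem map_append_retrace {x y : V} (t : G.Walk x y) (p : G.Walk v₀ x) (q : G.Walk x v₀) :
    f (p.append (t.append (t.reverse.append q))) = f (p.append q) := by
  induction t with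
  | nil => simp
  | cons a t ih =>
    rw [hf.map_backtrack _ _ a p q]
    convert ih (p.concat a) (.cons a.symm q) using 2 <;>
      simp [Walk.concat_append, ← Walk.append_assoc]

theorem map_reverse (w : G.Walk v₀ v₀) : f w.reverse = (f w)⁻¹ := by
  refine eq_inv_of_mul_eq_one_right ?_
  have h := hf.map_append_retrace w .nil .nil
  simp only [Walk.nil_append, Walk.append_nil] at h
  rw [← hf.map_append, h, hf.map_nil]

variable (σ : ∀ x, G.Walk v₀ x)

theorem map_basedLoop_append {x y z : V} (w₁ : G.Walk x y) (w₂ : G.Walk y z) :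
    f (basedLoop σ (w₁.append w₂)) = f (basedLoop σ w₁) * f (basedLoop σ w₂) := by
  rw [← hf.map_append, basedLoop, basedLoop, basedLoop]
  convert (hf.map_append_retrace (σ y).reverse ((σ x).append w₁)
    (w₂.append (σ z).reverse)).symm using 2 <;> simp [Walk.append_assoc]

theorem map_basedLoop_nil (x : V) : f (basedLoop σ (.nil : G.Walk x x)) = 1 := by
  have h := hf.map_append_retrace (σ x) .nil .nil
  simp only [Walk.nil_append, Walk.append_nil] at h
  rw [basedLoop, Walk.nil_append, h, hf.map_nil]

theorem map_basedLoop_toWalk_eq_one {x y : V} (a : G.Adj x y)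
    (hσ : σ y = (σ x).append a.toWalk ∨ σ x = (σ y).append a.symm.toWalk) :
    f (basedLoop σ a.toWalk) = 1 := by
  have key {x y : V} (a : G.Adj x y) (hσ : σ y = (σ x).append a.toWalk) :
      f (basedLoop σ a.toWalk) = 1 := by
    rw [basedLoop, hσ, ← hf.map_basedLoop_nil σ x, basedLoop, Walk.nil_append,
      hf.map_backtrack _ _ a (σ x) (σ x).reverse]
    simp
  rcases hσ with hσ | hσ
  · exact key a hσ
  · rw [← Walk.reverse_toWalk a.symm, basedLoop_reverse, hf.map_reverse, key a.symm hσ, inv_one]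

end IsLoopHom

end LoopHom

section Words

variable {V : Type*} [DecidableEq V] {G : SimpleGraph V} {ι : Type*} [Fintype ι]

noncomputable def dartLetter (d : ι → G.Dart) (x : G.Dart) : FreeGroup ι :=
  if h : ∃ i, (d i).edge = x.edge then
    if x = d h.choose then .of h.choose else (.of h.choose)⁻¹
  else 1

noncomputable def walkWord (d : ι → G.Dart) {x y : V} (w : G.Walk x y) : FreeGroup ι :=
  (w.darts.map (dartLetter d)).prod

variable {d : ι → G.Dart}

theorem dartLetter_of_edge_eq (hd : Function.Injective fun i => (d i).edge) {i : ι} {x : G.Dart}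
    (hi : (d i).edge = x.edge) :
    dartLetter d x = if x = d i then .of i else (.of i)⁻¹ := by
  have h : ∃ i, (d i).edge = x.edge := ⟨i, hi⟩
  obtain rfl : h.choose = i := hd (h.choose_spec.trans hi.symm)
  rw [dartLetter, dif_pos h]

theorem dartLetter_of_forall_ne {x : G.Dart} (hx : ∀ i, (d i).edge ≠ x.edge) :
    dartLetter d x = 1 :=
  dif_neg (not_exists.2 hx)

theorem dartLetter_self (hd : Function.Injective fun i => (d i).edge) (i : ι) :
    dartLetter d (d i) = .of i := by
  simp [dartLetter_of_edge_eq hd rfl]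

theorem dartLetter_symm (hd : Function.Injective fun i => (d i).edge) (x : G.Dart) :
    dartLetter d x.symm = (dartLetter d x)⁻¹ := by
  by_cases h : ∃ i, (d i).edge = x.edge
  · obtain ⟨i, hi⟩ := h
    rcases (dart_edge_eq_iff _ _).1 hi.symm with rfl | rfl
    · rw [dartLetter_self hd, dartLetter_of_edge_eq hd (Dart.edge_symm _).symm,
        if_neg (Dart.symm_ne _)]
    · rw [Dart.symm_symm, dartLetter_self hd, dartLetter_of_edge_eq hd (Dart.edge_symm _).symm,
        if_neg (Dart.symm_ne _), inv_inv]
  · rw [not_exists] at h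
    rw [dartLetter_of_forall_ne h, dartLetter_of_forall_ne (by simpa using h), inv_one]

theorem walkWord_cons {x y z : V} (a : G.Adj x y) (w : G.Walk y z) :
    walkWord d (.cons a w) = dartLetter d ⟨(x, y), a⟩ * walkWord d w := by
  simp [walkWord]

theorem walkWord_append {x y z : V} (w₁ : G.Walk x y) (w₂ : G.Walk y z) :
    walkWord d (w₁.append w₂) = walkWord d w₁ * walkWord d w₂ := by
  simp [walkWord, Walk.darts_append]

theorem walkWord_eq_one {x y : V} {w : G.Walk x y}
    (hw : ∀ s ∈ w.edges, s ∉ Set.range fun i => (d i).edge) : walkWord d w = 1 :=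
  List.prod_eq_one fun g hg => by
    obtain ⟨x, hx, rfl⟩ := List.mem_map.1 hg
    exact dartLetter_of_forall_ne fun i hi => hw _ (List.mem_map_of_mem hx) ⟨i, hi⟩

theorem isLoopHom_walkWord (hd : Function.Injective fun i => (d i).edge) (v₀ : V) :
    IsLoopHom (walkWord d : G.Walk v₀ v₀ → FreeGroup ι) where
  map_nil := rfl
  map_append := walkWord_append
  map_backtrack u w a p q := by
    have hsymm := dartLetter_symm hd (⟨(u, w), a⟩ : G.Dart)
    simp only [Dart.symm, Prod.swap_prod_mk] at hsymm
    simp [walkWord_append, walkWord_cons, hsymm]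

variable {v₀ : V} {π : Type*} [Group π] {h : G.Walk v₀ v₀ → π} {σ : ∀ x, G.Walk v₀ x}

theorem walkWord_basedLoop (hσ : IsTreeWalks (Set.range fun i => (d i).edge) σ) {x y : V}
    (w : G.Walk x y) : walkWord d (basedLoop σ w) = walkWord d w := by
  have hrev : ∀ x, ∀ s ∈ (σ x).reverse.edges, s ∉ Set.range fun i => (d i).edge := by
    simpa using hσ.notMem_of_mem_edges
  rw [basedLoop, walkWord_append, walkWord_append, walkWord_eq_one (hσ.notMem_of_mem_edges _),
    walkWord_eq_one (hrev _), one_mul, mul_one]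

namespace IsLoopHom

variable (hh : IsLoopHom h) (hd : Function.Injective fun i => (d i).edge)
  (hσ : IsTreeWalks (Set.range fun i => (d i).edge) σ)
include hh hd hσ

theorem lift_dartLetter (x : G.Dart) :
    FreeGroup.lift (fun i => h (basedLoop σ (d i).adj.toWalk)) (dartLetter d x)
      = h (basedLoop σ x.adj.toWalk) := by
  by_cases hx : ∃ i, (d i).edge = x.edge
  · obtain ⟨i, hi⟩ := hx
    rcases (dart_edge_eq_iff _ _).1 hi.symm with rfl | rfl
    · rw [dartLetter_self hd, FreeGroup.lift_apply_of]
    · rw [dartLetter_symm hd, dartLetter_self hd, map_inv, FreeGroup.lift_apply_of,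
        ← hh.map_reverse, ← basedLoop_reverse]
      rfl
  · rw [not_exists] at hx
    rw [dartLetter_of_forall_ne hx, map_one, hh.map_basedLoop_toWalk_eq_one σ _
      (hσ.eq_append_or_eq_append _ fun ⟨i, hi⟩ => hx i hi)]

theorem lift_walkWord {x y : V} (w : G.Walk x y) :
    FreeGroup.lift (fun i => h (basedLoop σ (d i).adj.toWalk)) (walkWord d w)
      = h (basedLoop σ w) := by
  induction w with
  | nil => rw [walkWord, Walk.darts_nil, List.map_nil, List.prod_nil, map_one,
      hh.map_basedLoop_nil]
  | cons a w ih =>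
    rw [walkWord_cons, map_mul, ih, hh.lift_dartLetter hd hσ, ← hh.map_basedLoop_append]
    rfl

theorem bijective_of_map_eq_walkWord (huniq : ∃! φ : π →* π, ∀ w, φ (h w) = h w)
    {φ : π →* FreeGroup ι} (hφ : ∀ w, φ (h w) = walkWord d w) : Function.Bijective φ := by
  set ψ := FreeGroup.lift fun i => h (basedLoop σ (d i).adj.toWalk)
  have hψφ : ψ.comp φ = MonoidHom.id π := huniq.unique
    (fun w => by rw [MonoidHom.comp_apply, hφ, hh.lift_walkWord hd hσ, basedLoop_eq_self hσ.eq_nil])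
    (fun _ => rfl)
  have hφψ : φ.comp ψ = MonoidHom.id _ := FreeGroup.ext_hom _ _ fun i => by
    rw [MonoidHom.comp_apply, FreeGroup.lift_apply_of, hφ, walkWord_basedLoop hσ]
    simp [walkWord, dartLetter_self hd]
  exact Function.bijective_iff_has_inverse.2
    ⟨ψ, DFunLike.congr_fun hψφ, DFunLike.congr_fun hφψ⟩

end IsLoopHom

theorem Walk.IsTrail.isTriangularAt_walkWord [LinearOrder ι]
    (hd : Function.Injective fun i => (d i).edge) {v : V} {p : G.Walk v v} (hp : p.IsTrail)
    {i : ι} (hi : d i ∈ p.darts) (hlt : ∀ j < i, (d j).edge ∉ p.edges) :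
    (walkWord d p).IsTriangularAt i := by
  obtain ⟨L₁, L₂, hL⟩ := List.append_of_mem hi
  have hedges : p.edges = L₁.map Dart.edge ++ (d i).edge :: L₂.map Dart.edge := by
    rw [Walk.edges, hL, List.map_append, List.map_cons]
  have hnodup := hedges ▸ hp.edges_nodup
  have hmem {L : List G.Dart} (hLp : ∀ x ∈ L, x ∈ p.darts)
      (hdi : (d i).edge ∉ L.map Dart.edge) :
      (L.map (dartLetter d)).prod ∈ Subgroup.closure (FreeGroup.of '' Set.Ioi i) := by
    refine list_prod_mem fun g hg => ?_
    obtain ⟨x, hx, rfl⟩ := List.mem_map.1 hg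
    by_cases hj : ∃ j, (d j).edge = x.edge
    · obtain ⟨j, hj⟩ := hj
      have hji : i < j := by
        refine lt_of_le_of_ne (not_lt.1 fun hji => hlt j hji ?_) fun hij => ?_
        · exact hj ▸ List.mem_map_of_mem (hLp x hx)
        · exact hdi (hij ▸ hj ▸ List.mem_map_of_mem hx)
      rw [dartLetter_of_edge_eq hd hj]
      split_ifs
      · exact Subgroup.subset_closure ⟨j, hji, rfl⟩
      · exact inv_mem (Subgroup.subset_closure ⟨j, hji, rfl⟩)
    · exact dartLetter_of_forall_ne (not_exists.1 hj) ▸ one_mem _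
  refine ⟨_, hmem (L := L₁) (fun x hx => by simp [hL, hx]) ?_, _,
    hmem (L := L₂) (fun x hx => by simp [hL, hx]) ?_, ?_⟩
  · exact fun h => List.disjoint_of_nodup_append hnodup h List.mem_cons_self
  · exact (List.nodup_cons.1 hnodup.of_append_right).1
  · rw [walkWord, hL, List.map_append, List.map_cons, List.prod_append, List.prod_cons,
      dartLetter_self hd, mul_assoc]

end Words

end SimpleGraph

theorem stmt_8_general {V : Type} [Fintype V] [DecidableEq V] (G : SimpleGraph V)
    (hconn : G.Connected) (v₀ : V) (k : ℕ) (r : Fin k → V)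
    (C : ∀ i : Fin k, G.Walk (r i) (r i)) (hcyc : ∀ i, (C i).IsCycle)
    (hspan : ∀ c : Sym2 V → ZMod 2, cycleCond G c →
      c ∈ Submodule.span (ZMod 2) (Set.range fun i => walkChain (C i)))
    (hwf : ∃ e : Fin k → Sym2 V, (∀ i, e i ∈ (C i).edges) ∧
      ∀ i j, i < j → e i ∉ (C j).edges)
    (π : Type) [Group π] (h : G.Walk v₀ v₀ → π)
    (hone : h Walk.nil = 1)
    (hmul : ∀ w₁ w₂ : G.Walk v₀ v₀, h (w₁.append w₂) = h w₁ * h w₂)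
    (hinv : ∀ (u w : V) (a : G.Adj u w) (p : G.Walk v₀ u) (q : G.Walk u v₀),
      h (p.append q) = h (p.append ((Walk.cons a (Walk.cons a.symm Walk.nil)).append q)))
    (huniv : ∀ (H : Type) [Group H] (f : G.Walk v₀ v₀ → H),
      f Walk.nil = 1 →
      (∀ w₁ w₂ : G.Walk v₀ v₀, f (w₁.append w₂) = f w₁ * f w₂) →
      (∀ (u w : V) (a : G.Adj u w) (p : G.Walk v₀ u) (q : G.Walk u v₀),
        f (p.append q) =
          f (p.append ((Walk.cons a (Walk.cons a.symm Walk.nil)).append q))) →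
      ∃! φ : π →* H, ∀ w : G.Walk v₀ v₀, φ (h w) = f w) :
    ∃ p : ∀ i : Fin k, G.Walk v₀ (r i),
      Function.Bijective
        (FreeGroup.lift fun i : Fin k =>
          h ((p i).append ((C i).append (p i).reverse))) := by
  obtain ⟨e, he, hlt⟩ := hwf
  -- orient `e i` as `C i` traverses it, so that the word of `C i` contains the letter `i` itself
  choose d hdC hde using fun i => List.mem_map.1 (he i)
  obtain rfl : e = fun i => (d i).edge := funext fun i => (hde i).symm
  have hd := injective_of_triangular he hlt
  have hT : (G.deleteEdges (Set.range fun i => (d i).edge)).IsTree :=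
    ⟨hconn.deleteEdges_of_triangular hcyc he hlt, isAcyclic_deleteEdges_of_triangular hspan he hlt⟩
  obtain ⟨σ, hσ⟩ := hT.exists_isTreeWalks v₀
  have hword := isLoopHom_walkWord hd v₀
  obtain ⟨φ, hφ, -⟩ := huniv _ (walkWord d) hword.map_nil hword.map_append hword.map_backtrack
  have hφbij := IsLoopHom.bijective_of_map_eq_walkWord ⟨hone, hmul, hinv⟩ hd hσ
    (huniv π h hone hmul hinv) hφ
  refine ⟨fun i => σ (r i), (hφbij.of_comp_iff' _).1 ?_⟩
  convert FreeGroup.lift_bijective_of_isTriangularAt fun i =>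
    (hcyc i).isTrail.isTriangularAt_walkWord hd (hdC i) fun j hj => hlt j i hj
  rw [← MonoidHom.coe_comp]
  congr 1
  refine FreeGroup.ext_hom _ _ fun i => ?_
  rw [MonoidHom.comp_apply, FreeGroup.lift_apply_of, FreeGroup.lift_apply_of, hφ]
  exact walkWord_basedLoop hσ (C i)

/-- A weakly fundamental cycle basis `C₁, …, C_k` of a connected finite graph `G`
gives a free basis of the fundamental group of `G`.  The fundamental group at a base
vertex `v₀` is axiomatized by its universal property: a group `π` with a map `h` from
closed walks at `v₀` that is multiplicative and invariant under insertion of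
backtracks, and which is universal among all such maps.  The conclusion is that,
after basing each cycle by a connecting walk, the induced homomorphism from the free
group on `k` generators to `π` is an isomorphism (in particular `π` is free of
rank `k`). -/
theorem stmt_8 {V : Type} [Fintype V] [DecidableEq V] (G : SimpleGraph V)
    (hconn : G.Connected) (v₀ : V) (k : ℕ) (r : Fin k → V)
    (C : ∀ i : Fin k, G.Walk (r i) (r i)) (hcyc : ∀ i, (C i).IsCycle)
    (hindep : LinearIndependent (ZMod 2) fun i => walkChain (C i))
    (hspan : ∀ c : Sym2 V → ZMod 2, cycleCond G c →
      c ∈ Submodule.span (ZMod 2) (Set.range fun i => walkChain (C i)))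
    (hwf : ∃ e : Fin k → Sym2 V, (∀ i, e i ∈ (C i).edges) ∧
      ∀ i j, i < j → e i ∉ (C j).edges)
    (π : Type) [Group π] (h : G.Walk v₀ v₀ → π)
    (hone : h Walk.nil = 1)
    (hmul : ∀ w₁ w₂ : G.Walk v₀ v₀, h (w₁.append w₂) = h w₁ * h w₂)
    (hinv : ∀ (u w : V) (a : G.Adj u w) (p : G.Walk v₀ u) (q : G.Walk u v₀),
      h (p.append q) = h (p.append ((Walk.cons a (Walk.cons a.symm Walk.nil)).append q)))
    (huniv : ∀ (H : Type) [Group H] (f : G.Walk v₀ v₀ → H),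
      f Walk.nil = 1 →
      (∀ w₁ w₂ : G.Walk v₀ v₀, f (w₁.append w₂) = f w₁ * f w₂) →
      (∀ (u w : V) (a : G.Adj u w) (p : G.Walk v₀ u) (q : G.Walk u v₀),
        f (p.append q) =
          f (p.append ((Walk.cons a (Walk.cons a.symm Walk.nil)).append q))) →
      ∃! φ : π →* H, ∀ w : G.Walk v₀ v₀, φ (h w) = f w) :
    ∃ p : ∀ i : Fin k, G.Walk v₀ (r i),
      Function.Bijective
        (FreeGroup.lift fun i : Fin k =>
          h ((p i).append ((C i).append (p i).reverse))) :=
  stmt_8_general G hconn v₀ k r C hcyc hspan hwf π h hone hmul hinv huniv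
end

section
/- Every finite graph with maximum degree O(1) on V vertices admits a weakly fundamental cycle basis in which each edge appears in at most O((log V)²) cycles of the basis. -/
/-- The `Z/2` chain (indicator of the edge set) of a simple cycle in a multigraph. -/
def mchain {V E : Type*} [DecidableEq E] {ε : E → Sym2 V} (c : MCycle V E ε) :
    E → ZMod 2 :=
  fun f => if inCyc c f then 1 else 0

/-- The cycle-space condition for a `Z/2` edge chain: its boundary vanishes at every
vertex (self-edges contribute `2 ≡ 0`). -/
def cycleCondM {V E : Type*} [Fintype E] [DecidableEq V] (ε : E → Sym2 V)
    (c : E → ZMod 2) : Prop :=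
  ∀ x : V, (∑ f : E, if ε f = s(x, x) then 0 else if x ∈ ε f then c f else 0) = 0

/-!
The basis is built greedily, in rounds. For an edge set `S`, the cyclic part of `S` consists of
the edges lying on a cycle inside `S`, and a vertex is a branch vertex of `S` unless exactly two
edges of the cyclic part meet it. A cycle-space element of `S` takes equal values on the two
edges of a cycle at a non-branch vertex, so deleting the edges of a cycle `C ⊆ S` lowers the
cycle rank by at least one and at most `1 + #(branch vertices on C)`.

A Moore-type argument shows that if `S` has a cycle at all, it has one with at most
`2 log₂ V + 6` branch vertices: otherwise, growing paths inside the cyclic part from a branch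
vertex and splitting them at each branch vertex reached gives, after `log₂ V + 1` levels, more
than `V` paths with pairwise distinct endpoints, since two of them ending at the same vertex would
close a cycle with few branch vertices.

A round repeatedly removes (all edges of) such a short cycle, so its cycles are edge-disjoint and
there are at least `rank / g` of them, with `g = 2 log₂ V + 7`. For the next round only one chosen
edge of each cycle is deleted: this makes the whole list weakly fundamental and lowers the rank by
exactly the number of its cycles. Hence the rank decays geometrically, there are
`O(g log rank) = O((log V)²)` rounds, and an edge lies on at most one cycle per round.
-/

open Finset Module

namespace Nat

lemma add_one_mod_ne_self {n i : ℕ} (hn : 2 ≤ n) (hi : i < n) : (i + 1) % n ≠ i := by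
  rcases lt_or_ge (i + 1) n with h | h
  · rw [mod_eq_of_lt h]; omega
  · rw [show i + 1 = n by omega, mod_self]; omega

lemma exists_add_one_mod_eq {n i : ℕ} (hi : i < n) : ∃ j < n, (j + 1) % n = i := by
  refine ⟨(i + (n - 1)) % n, mod_lt _ (by omega), ?_⟩
  rw [mod_add_mod, show i + (n - 1) + 1 = i + n by omega, add_mod_right, mod_eq_of_lt hi]

end Nat

lemma List.card_filter_get_eq_countP {α : Type*} (L : List α) (P : α → Prop)
    [DecidablePred P] : #{i : Fin L.length | P (L.get i)} = L.countP (P ·) := by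
  rw [card_filter]
  simp only [List.get_eq_getElem, Fin.sum_univ_fun_getElem (f := fun a => if P a then 1 else 0)]
  induction L with
  | nil => rfl
  | cons a L ih => by_cases h : P a <;> simp [h, ih, add_comm]

namespace MCycle

variable {V E : Type} {ε : E → Sym2 V} (C : MCycle V E ε)

lemma add_one_mod_lt {i : ℕ} : (i + 1) % C.n < C.n := Nat.mod_lt _ C.npos

lemma vtx_mem_edg {i : ℕ} (hi : i < C.n) : C.vtx i ∈ ε (C.edg i) := by
  rw [C.incid i hi]; exact Sym2.mem_mk_left _ _

lemma vtx_succ_mem_edg {i : ℕ} (hi : i < C.n) : C.vtx ((i + 1) % C.n) ∈ ε (C.edg i) := by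
  rw [C.incid i hi]; exact Sym2.mem_mk_right _ _

lemma vtx_succ_ne (hn : 2 ≤ C.n) {i : ℕ} (hi : i < C.n) : C.vtx ((i + 1) % C.n) ≠ C.vtx i :=
  fun h => Nat.add_one_mod_ne_self hn hi (C.vinj _ C.add_one_mod_lt _ hi h)

lemma edg_succ_ne (hn : 2 ≤ C.n) {i : ℕ} (hi : i < C.n) : C.edg ((i + 1) % C.n) ≠ C.edg i :=
  fun h => Nat.add_one_mod_ne_self hn hi (C.einj _ C.add_one_mod_lt _ hi h)

lemma edg_ne_loop (hn : 2 ≤ C.n) {i : ℕ} (hi : i < C.n) (x : V) : ε (C.edg i) ≠ s(x, x) := by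
  intro h
  rw [C.incid i hi, Sym2.eq_iff] at h
  rcases h with ⟨h1, h2⟩ | ⟨h1, h2⟩ <;> exact C.vtx_succ_ne hn hi (by rw [h1, h2])

section

variable [DecidableEq E]

def edges : Finset E := (range C.n).image C.edg

lemma mem_edges {f : E} : f ∈ C.edges ↔ inCyc C f := by
  simp only [edges, mem_image, mem_range, inCyc]

lemma edg_mem_edges {i : ℕ} (hi : i < C.n) : C.edg i ∈ C.edges :=
  mem_image.2 ⟨i, mem_range.2 hi, rfl⟩

end

def ofLoop {f : E} {x : V} (h : ε f = s(x, x)) : MCycle V E ε where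
  n := 1
  npos := one_pos
  vtx _ := x
  edg _ := f
  incid _ _ := h
  vinj i hi j hj _ := by omega
  einj i hi j hj _ := by omega

lemma ofLoop_edges [DecidableEq E] {f : E} {x : V} (h : ε f = s(x, x)) :
    (ofLoop h).edges = {f} := by
  simp [ofLoop, edges]

end MCycle

structure MPath (V E : Type) (ε : E → Sym2 V) where
  n : ℕ
  vtx : ℕ → V
  edg : ℕ → E
  incid : ∀ i < n, ε (edg i) = s(vtx i, vtx (i + 1))
  vinj : ∀ i ≤ n, ∀ j ≤ n, vtx i = vtx j → i = j

namespace MPath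

variable {V E : Type} {ε : E → Sym2 V} (p : MPath V E ε)

def vertices [DecidableEq V] : Finset V := (range (p.n + 1)).image p.vtx

def edges [DecidableEq E] : Finset E := (range p.n).image p.edg

lemma vtx_mem_vertices [DecidableEq V] {i : ℕ} (hi : i ≤ p.n) : p.vtx i ∈ p.vertices :=
  mem_image.2 ⟨i, mem_range.2 (by omega), rfl⟩

lemma edg_mem_edges [DecidableEq E] {i : ℕ} (hi : i < p.n) : p.edg i ∈ p.edges :=
  mem_image.2 ⟨i, mem_range.2 hi, rfl⟩

lemma mem_edges [DecidableEq E] {f : E} : f ∈ p.edges ↔ ∃ i < p.n, p.edg i = f := by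
  simp only [edges, mem_image, mem_range]

lemma edg_inj {i j : ℕ} (hi : i < p.n) (hj : j < p.n) (h : p.edg i = p.edg j) : i = j := by
  have h' : s(p.vtx i, p.vtx (i + 1)) = s(p.vtx j, p.vtx (j + 1)) := by
    rw [← p.incid i hi, ← p.incid j hj, h]
  rcases Sym2.eq_iff.1 h' with ⟨h1, -⟩ | ⟨h1, h2⟩
  · exact p.vinj _ hi.le _ hj.le h1
  · have := p.vinj _ hi.le _ hj h1
    have := p.vinj _ hi _ hj.le h2
    omega

lemma n_lt_card [Fintype V] : p.n < Fintype.card V := by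
  have : Function.Injective fun i : Fin (p.n + 1) => p.vtx i :=
    fun i j h => Fin.ext (p.vinj _ (Nat.lt_succ_iff.1 i.2) _ (Nat.lt_succ_iff.1 j.2) h)
  simpa using Fintype.card_le_of_injective _ this

lemma eq_or_add_one_eq_of_vtx_mem {m i : ℕ} (hm : m ≤ p.n) (hi : i < p.n)
    (hx : p.vtx m ∈ ε (p.edg i)) : i = m ∨ i + 1 = m := by
  rw [p.incid i hi, Sym2.mem_iff] at hx
  rcases hx with h | h
  · exact Or.inl (p.vinj i hi.le m hm h.symm)
  · exact Or.inr (p.vinj (i + 1) hi m hm h.symm)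

lemma notMem_edges_of_vtx_last_mem [DecidableEq E] {e : E} (hx : p.vtx p.n ∈ ε e)
    (hlast : e ≠ p.edg (p.n - 1)) : e ∉ p.edges := by
  intro he
  obtain ⟨i, hi, rfl⟩ := p.mem_edges.1 he
  rcases p.eq_or_add_one_eq_of_vtx_mem le_rfl hi hx with h | h
  · omega
  · exact hlast (by rw [show p.n - 1 = i by omega])

lemma vtx_last_mem_edg (hn : p.n ≠ 0) : p.vtx p.n ∈ ε (p.edg (p.n - 1)) := by
  rw [p.incid _ (by omega), show p.n - 1 + 1 = p.n by omega]
  exact Sym2.mem_mk_right _ _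

lemma mem_vertices_of_mem_edges [DecidableEq V] [DecidableEq E] {f : E} (hf : f ∈ p.edges)
    {x : V} (hx : x ∈ ε f) : x ∈ p.vertices := by
  obtain ⟨i, hi, rfl⟩ := p.mem_edges.1 hf
  rw [p.incid i hi, Sym2.mem_iff] at hx
  rcases hx with rfl | rfl
  exacts [p.vtx_mem_vertices hi.le, p.vtx_mem_vertices hi]

-- The edge function of a path of length `0` is never read; `e` only fills it.
def nil (x : V) (e : E) : MPath V E ε where
  n := 0
  vtx _ := x
  edg _ := e
  incid _ h := absurd h (Nat.not_lt_zero _)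
  vinj i hi j hj _ := by omega

@[simp] lemma nil_edges [DecidableEq E] (x : V) (e : E) :
    (nil x e : MPath V E ε).edges = ∅ := rfl

def extend {e : E} {y : V} (he : ε e = s(p.vtx p.n, y)) (hy : ∀ i ≤ p.n, p.vtx i ≠ y) :
    MPath V E ε where
  n := p.n + 1
  vtx i := if i = p.n + 1 then y else p.vtx i
  edg i := if i = p.n then e else p.edg i
  incid i hi := by
    by_cases hl : i = p.n
    · subst hl; simp [he]
    · rw [if_neg hl, if_neg (by omega), if_neg (by omega)]
      exact p.incid i (by omega)
  vinj i hi j hj h := by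
    by_cases h1 : i = p.n + 1 <;> by_cases h2 : j = p.n + 1
    · omega
    · rw [if_pos h1, if_neg h2] at h; exact absurd h.symm (hy j (by omega))
    · rw [if_neg h1, if_pos h2] at h; exact absurd h (hy i (by omega))
    · rw [if_neg h1, if_neg h2] at h; exact p.vinj i (by omega) j (by omega) h

section Extend

variable {e : E} {y : V} (he : ε e = s(p.vtx p.n, y)) (hy : ∀ i ≤ p.n, p.vtx i ≠ y)

@[simp] lemma extend_n : (p.extend he hy).n = p.n + 1 := rfl

lemma extend_vtx_last : (p.extend he hy).vtx (p.n + 1) = y := if_pos rfl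

lemma extend_edg_n : (p.extend he hy).edg p.n = e := if_pos rfl

lemma edges_extend [DecidableEq E] : (p.extend he hy).edges = insert e p.edges := by
  rw [edges, extend_n, range_add_one, image_insert, extend_edg_n, edges]
  refine congrArg _ (image_congr fun i hi => ?_)
  simp only [extend, if_neg (show i ≠ p.n by simp at hi; omega)]

lemma vertices_extend [DecidableEq V] : (p.extend he hy).vertices = insert y p.vertices := by
  rw [vertices, extend_n, range_add_one, image_insert, extend_vtx_last, vertices]
  refine congrArg _ (image_congr fun i hi => ?_)
  simp only [extend, if_neg (show i ≠ p.n + 1 by simp at hi; omega)]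

end Extend

def close [DecidableEq E] {j : ℕ} (hj : j ≤ p.n) {e : E} (he : ε e = s(p.vtx p.n, p.vtx j))
    (hne : e ∉ p.edges) : MCycle V E ε where
  n := p.n - j + 1
  npos := Nat.succ_pos _
  vtx k := p.vtx (j + k)
  edg k := if k = p.n - j then e else p.edg (j + k)
  incid k hk := by
    by_cases hlast : k = p.n - j
    · rw [if_pos hlast, hlast, Nat.mod_self, he, Nat.add_zero, Nat.add_sub_cancel' hj]
    · rw [if_neg hlast, Nat.mod_eq_of_lt (by omega : k + 1 < p.n - j + 1),
        p.incid (j + k) (by omega), Nat.add_assoc]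
  vinj i hi i' hi' h := by
    have := p.vinj (j + i) (by omega) (j + i') (by omega) h
    omega
  einj i hi i' hi' h := by
    by_cases h1 : i = p.n - j <;> by_cases h2 : i' = p.n - j
    · omega
    · rw [if_pos h1, if_neg h2] at h; exact (hne (h ▸ p.edg_mem_edges (by omega))).elim
    · rw [if_neg h1, if_pos h2] at h; exact (hne (h ▸ p.edg_mem_edges (by omega))).elim
    · rw [if_neg h1, if_neg h2] at h
      have := p.edg_inj (by omega : j + i < p.n) (by omega : j + i' < p.n) h
      omega

lemma close_vtx_mem [DecidableEq V] [DecidableEq E] {j : ℕ} (hj : j ≤ p.n) {e : E}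
    (he : ε e = s(p.vtx p.n, p.vtx j)) (hne : e ∉ p.edges) {k : ℕ}
    (hk : k < (p.close hj he hne).n) : (p.close hj he hne).vtx k ∈ p.vertices :=
  p.vtx_mem_vertices (by simp only [close] at hk; omega)

lemma close_edges_subset [DecidableEq E] {j : ℕ} (hj : j ≤ p.n) {e : E}
    (he : ε e = s(p.vtx p.n, p.vtx j)) (hne : e ∉ p.edges) :
    (p.close hj he hne).edges ⊆ insert e p.edges := by
  intro f hf
  obtain ⟨k, hk, rfl⟩ := (MCycle.mem_edges _).1 hf
  simp only [close] at hk ⊢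
  split_ifs with h
  · exact mem_insert_self _ _
  · exact mem_insert_of_mem (p.edg_mem_edges (by omega))

lemma exists_cycle_of_vtx_eq [DecidableEq V] [DecidableEq E] {j : ℕ} (hj : j ≤ p.n) {e : E}
    (he : ε e = s(p.vtx p.n, p.vtx j)) (hne : e ∉ p.edges) :
    ∃ C : MCycle V E ε, C.edges ⊆ insert e p.edges ∧ ∀ i < C.n, C.vtx i ∈ p.vertices :=
  ⟨p.close hj he hne, p.close_edges_subset hj he hne, fun _ => p.close_vtx_mem hj he hne⟩

def IsPrefix (q : MPath V E ε) : Prop :=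
  p.n ≤ q.n ∧ (∀ i ≤ p.n, q.vtx i = p.vtx i) ∧ ∀ i < p.n, q.edg i = p.edg i

lemma IsPrefix.refl : p.IsPrefix p := ⟨le_rfl, fun _ _ => rfl, fun _ _ => rfl⟩

lemma IsPrefix.trans {p q r : MPath V E ε} (hpq : p.IsPrefix q) (hqr : q.IsPrefix r) :
    p.IsPrefix r :=
  ⟨hpq.1.trans hqr.1, fun i hi => (hqr.2.1 i (hi.trans hpq.1)).trans (hpq.2.1 i hi),
    fun i hi => (hqr.2.2 i (by have := hpq.1; omega)).trans (hpq.2.2 i hi)⟩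

lemma isPrefix_extend {e : E} {y : V} (he : ε e = s(p.vtx p.n, y))
    (hy : ∀ i ≤ p.n, p.vtx i ≠ y) : p.IsPrefix (p.extend he hy) :=
  ⟨by simp, fun i hi => if_neg (by omega), fun i hi => if_neg (by omega)⟩

def Diverge (q : MPath V E ε) : Prop :=
  ∃ m < p.n, m < q.n ∧ (∀ i ≤ m, p.vtx i = q.vtx i) ∧ (∀ i < m, p.edg i = q.edg i) ∧
    p.edg m ≠ q.edg m

variable {p}

lemma Diverge.symm {q : MPath V E ε} (h : p.Diverge q) : q.Diverge p := by
  obtain ⟨m, hp, hq, hv, he, hne⟩ := h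
  exact ⟨m, hq, hp, fun i hi => (hv i hi).symm, fun i hi => (he i hi).symm, Ne.symm hne⟩

lemma Diverge.mono {q p' q' : MPath V E ε} (h : p.Diverge q) (hp : p.IsPrefix p')
    (hq : q.IsPrefix q') : p'.Diverge q' := by
  obtain ⟨m, hmp, hmq, hv, he, hne⟩ := h
  refine ⟨m, by have := hp.1; omega, by have := hq.1; omega, fun i hi => ?_, fun i hi => ?_, ?_⟩
  · rw [hp.2.1 i (by omega), hq.2.1 i (by omega), hv i hi]
  · rw [hp.2.2 i (by omega), hq.2.2 i (by omega), he i hi]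
  · rwa [hp.2.2 m hmp, hq.2.2 m hmq]

lemma diverge_of_isPrefix {q₀ q₁ : MPath V E ε} (h₀ : p.IsPrefix q₀)
    (h₁ : p.IsPrefix q₁) (hn₀ : p.n < q₀.n) (hn₁ : p.n < q₁.n)
    (hne : q₀.edg p.n ≠ q₁.edg p.n) : q₀.Diverge q₁ :=
  ⟨p.n, hn₀, hn₁, fun i hi => by rw [h₀.2.1 i hi, h₁.2.1 i hi],
    fun i hi => by rw [h₀.2.2 i hi, h₁.2.2 i hi], hne⟩

lemma Diverge.exists_edg_notMem_edges [DecidableEq E] {q : MPath V E ε} (h : p.Diverge q) :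
    ∃ m < p.n, p.edg m ∉ q.edges := by
  obtain ⟨m, hmp, hmq, hv, he, hne⟩ := h
  refine ⟨m, hmp, fun hmem => ?_⟩
  obtain ⟨i, hi, hieq⟩ := q.mem_edges.1 hmem
  have hx : q.vtx m ∈ ε (q.edg i) := by rw [hieq, ← hv m le_rfl, p.incid m hmp]; simp
  rcases q.eq_or_add_one_eq_of_vtx_mem hmq.le hi hx with rfl | rfl
  · exact hne hieq.symm
  · rw [← he i (by omega)] at hieq
    have := p.edg_inj (by omega) hmp hieq
    omega

end MPath

namespace Decongestion

section Boundary

variable {V E : Type} [DecidableEq V] {ε : E → Sym2 V}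

def edgeBdry (ε : E → Sym2 V) (f : E) : V → ZMod 2 :=
  fun x => if ε f = s(x, x) then 0 else if x ∈ ε f then 1 else 0

lemma edgeBdry_eq {f : E} {a b : V} (h : ε f = s(a, b)) :
    edgeBdry ε f = Pi.single a 1 + Pi.single b 1 := by
  funext x
  by_cases hab : a = b
  · subst hab
    by_cases hx : x = a <;> simp [edgeBdry, h, hx, ZModModule.add_self]
  · by_cases ha : x = a <;> by_cases hb : x = b <;>
      simp_all [edgeBdry, Pi.single_apply, eq_comm]

lemma sum_range_single_add_single (v : ℕ → V) (n : ℕ) :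
    ∑ i ∈ range n, (Pi.single (v i) 1 + Pi.single (v (i + 1)) 1 : V → ZMod 2) =
      Pi.single (v 0) 1 + Pi.single (v n) 1 := by
  induction n with
  | zero => simp [ZModModule.add_self]
  | succ n ih => rw [sum_range_succ, ih, ZModModule.add_add_add_cancel]

section
variable [DecidableEq E]

def indicatorChain (T : Finset E) : E → ZMod 2 := ∑ f ∈ T, Pi.single f 1

lemma indicatorChain_apply (T : Finset E) (f : E) :
    indicatorChain T f = if f ∈ T then 1 else 0 := by
  simp [indicatorChain, Finset.sum_apply, Pi.single_apply]

end

variable [Fintype E]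

def chainBdry (ε : E → Sym2 V) : (E → ZMod 2) →ₗ[ZMod 2] V → ZMod 2 :=
  Fintype.linearCombination (ZMod 2) (edgeBdry ε)

lemma chainBdry_apply (c : E → ZMod 2) (x : V) :
    chainBdry ε c x = ∑ f, if ε f = s(x, x) then 0 else if x ∈ ε f then c f else 0 := by
  simp only [chainBdry, Fintype.linearCombination_apply, Finset.sum_apply, Pi.smul_apply]
  refine sum_congr rfl fun f _ => ?_
  simp only [edgeBdry]
  split_ifs <;> simp

lemma cycleCondM_iff {c : E → ZMod 2} : cycleCondM ε c ↔ chainBdry ε c = 0 := by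
  simp only [cycleCondM, funext_iff, chainBdry_apply, Pi.zero_apply]

lemma chainBdry_indicatorChain [DecidableEq E] (T : Finset E) :
    chainBdry ε (indicatorChain T) = ∑ f ∈ T, edgeBdry ε f := by
  simp [indicatorChain, chainBdry, Fintype.linearCombination_apply_single]

end Boundary

section Cycles

variable {V E : Type} [DecidableEq E] {ε : E → Sym2 V} {C : MCycle V E ε}

lemma mchain_eq_indicatorChain : mchain C = indicatorChain C.edges := by
  funext f
  simp only [mchain, indicatorChain_apply, MCycle.mem_edges]

lemma mchain_apply (f : E) : mchain C f = if f ∈ C.edges then 1 else 0 := by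
  rw [mchain_eq_indicatorChain, indicatorChain_apply]

variable [Fintype E] [DecidableEq V]

lemma chainBdry_mchain : chainBdry ε (mchain C) = 0 := by
  obtain ⟨k, hk⟩ := Nat.exists_eq_succ_of_ne_zero C.npos.ne'
  have hsucc : ∀ i ∈ range k, (i + 1) % C.n = i + 1 := fun i hi =>
    Nat.mod_eq_of_lt (by rw [mem_range] at hi; omega)
  have hlast : (k + 1) % C.n = 0 := by rw [hk, Nat.mod_self]
  rw [mchain_eq_indicatorChain, chainBdry_indicatorChain, MCycle.edges,
    sum_image fun i hi j hj => C.einj i (mem_range.1 hi) j (mem_range.1 hj),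
    sum_congr rfl fun i hi => edgeBdry_eq (C.incid i (mem_range.1 hi)),
    show range C.n = range (k + 1) by rw [hk], sum_range_succ,
    sum_congr rfl fun i hi => by rw [hsucc i hi], sum_range_single_add_single, hlast,
    ZModModule.add_add_add_cancel, ZModModule.add_self]

end Cycles

section CycleSpace

variable {V E : Type} [Fintype E] [DecidableEq V] {ε : E → Sym2 V}

def cycleSpace (ε : E → Sym2 V) (S : Finset E) : Submodule (ZMod 2) (E → ZMod 2) :=
  LinearMap.ker (chainBdry ε) ⊓ Submodule.pi (↑S)ᶜ fun _ => ⊥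

lemma mem_cycleSpace {S : Finset E} {c : E → ZMod 2} :
    c ∈ cycleSpace ε S ↔ chainBdry ε c = 0 ∧ ∀ f ∉ S, c f = 0 := by
  simp [cycleSpace]

lemma cycleSpace_mono {S T : Finset E} (h : S ⊆ T) : cycleSpace ε S ≤ cycleSpace ε T :=
  fun _ hc => mem_cycleSpace.2
    ⟨(mem_cycleSpace.1 hc).1, fun f hf => (mem_cycleSpace.1 hc).2 f fun hS => hf (h hS)⟩

variable [DecidableEq E]

lemma mem_cycleSpace_sdiff {S A : Finset E} {c : E → ZMod 2} :
    c ∈ cycleSpace ε (S \ A) ↔ c ∈ cycleSpace ε S ∧ ∀ f ∈ A, c f = 0 := by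
  simp only [mem_cycleSpace, mem_sdiff, not_and, not_not]
  constructor
  · rintro ⟨hc, h0⟩
    exact ⟨⟨hc, fun f hf => h0 f fun h => absurd h hf⟩, fun f hf => h0 f fun _ => hf⟩
  · rintro ⟨⟨hc, h0⟩, hA⟩
    exact ⟨hc, fun f hf => if hS : f ∈ S then hA f (hf hS) else h0 f hS⟩

lemma mchain_mem_cycleSpace {C : MCycle V E ε} {S : Finset E} (h : C.edges ⊆ S) :
    mchain C ∈ cycleSpace ε S :=
  mem_cycleSpace.2 ⟨chainBdry_mchain, fun f hf => by
    rw [mchain_apply, if_neg fun hC => hf (h hC)]⟩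

noncomputable def cycleRank (ε : E → Sym2 V) (S : Finset E) : ℕ :=
  finrank (ZMod 2) (cycleSpace ε S)

lemma cycleRank_le_cycleRank_sdiff_add_card (S B : Finset E) :
    cycleRank ε S ≤ cycleRank ε (S \ B) + #B := by
  let φ : cycleSpace ε S →ₗ[ZMod 2] B → ZMod 2 :=
    (LinearMap.funLeft (ZMod 2) (ZMod 2) ((↑) : B → E)).comp (cycleSpace ε S).subtype
  have hker : finrank (ZMod 2) (LinearMap.ker φ) ≤ cycleRank ε (S \ B) := by
    rw [← Submodule.finrank_map_subtype_eq]
    refine Submodule.finrank_mono ?_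
    rintro _ ⟨c, hc, rfl⟩
    refine mem_cycleSpace_sdiff.2 ⟨c.2, fun f hf => ?_⟩
    simpa [φ] using congrFun (LinearMap.mem_ker.1 hc) ⟨f, hf⟩
  have hrange := (LinearMap.range φ).finrank_le
  rw [finrank_fintype_fun_eq_card, Fintype.card_coe] at hrange
  have := LinearMap.finrank_range_add_finrank_ker φ
  unfold cycleRank at *
  omega

lemma cycleRank_sdiff_lt {S A : Finset E} {C : MCycle V E ε} (hC : C.edges ⊆ S)
    {f : E} (hfA : f ∈ A) (hfC : f ∈ C.edges) : cycleRank ε (S \ A) < cycleRank ε S := by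
  refine Submodule.finrank_lt_finrank_of_lt (lt_of_le_of_ne (cycleSpace_mono sdiff_subset) ?_)
  intro h
  have := (mem_cycleSpace_sdiff.1 (h ▸ mchain_mem_cycleSpace hC)).2 f hfA
  simp [mchain_apply, hfC] at this

lemma cycleRank_erase_add_one {S : Finset E} {C : MCycle V E ε} (hC : C.edges ⊆ S)
    {e : E} (he : e ∈ C.edges) : cycleRank ε (S.erase e) + 1 = cycleRank ε S := by
  have hle := cycleRank_le_cycleRank_sdiff_add_card (ε := ε) S {e}
  have hlt := cycleRank_sdiff_lt hC (mem_singleton_self e) he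
  rw [sdiff_singleton_eq_erase, card_singleton] at *
  omega

end CycleSpace

section Extraction

variable {V E : Type} [Fintype E] [DecidableEq V] [DecidableEq E] {ε : E → Sym2 V}
  {c : E → ZMod 2}

lemma chainBdry_indicatorChain_pathEdges (p : MPath V E ε) :
    chainBdry ε (indicatorChain p.edges) = Pi.single (p.vtx 0) 1 + Pi.single (p.vtx p.n) 1 := by
  rw [chainBdry_indicatorChain, MPath.edges,
    sum_image fun i hi j hj => p.edg_inj (mem_range.1 hi) (mem_range.1 hj),
    sum_congr rfl fun i hi => edgeBdry_eq (p.incid i (mem_range.1 hi)),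
    sum_range_single_add_single]

lemma exists_ne_of_chainBdry_eq_zero (hc : chainBdry ε c = 0) {x : V} {e : E}
    (hce : c e ≠ 0) (hx : x ∈ ε e) (hloop : ε e ≠ s(x, x)) :
    ∃ e', e' ≠ e ∧ c e' ≠ 0 ∧ x ∈ ε e' := by
  by_contra! h
  have hx0 := congrFun hc x
  rw [chainBdry_apply, Fintype.sum_eq_single e, if_neg hloop, if_pos hx] at hx0
  · exact hce hx0
  · intro f hf
    split_ifs with h1 h2
    · rfl
    · by_contra hcf
      exact h f hf hcf h2
    · rfl

lemma support_path_step (hc : chainBdry ε c = 0) (hnl : ∀ f x, c f ≠ 0 → ε f ≠ s(x, x))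
    (p : MPath V E ε) (hp : p.n ≠ 0) (hpc : ∀ f ∈ p.edges, c f ≠ 0) :
    (∃ C : MCycle V E ε, ∀ f ∈ C.edges, c f ≠ 0) ∨
      ∃ q : MPath V E ε, q.n = p.n + 1 ∧ ∀ f ∈ q.edges, c f ≠ 0 := by
  have hlast := hpc _ (p.edg_mem_edges (by omega : p.n - 1 < p.n))
  obtain ⟨e, hne, hce, hxe⟩ := exists_ne_of_chainBdry_eq_zero hc hlast (p.vtx_last_mem_edg hp)
    (hnl _ _ hlast)
  obtain ⟨y, hy⟩ := Sym2.mem_iff_exists.1 hxe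
  have hep := p.notMem_edges_of_vtx_last_mem hxe hne
  by_cases hmem : ∃ j ≤ p.n, p.vtx j = y
  · obtain ⟨j, hj, rfl⟩ := hmem
    obtain ⟨C, hCe, -⟩ := p.exists_cycle_of_vtx_eq hj hy hep
    refine Or.inl ⟨C, fun f hf => ?_⟩
    rcases mem_insert.1 (hCe hf) with rfl | hf
    exacts [hce, hpc f hf]
  · push Not at hmem
    exact Or.inr ⟨p.extend hy hmem, rfl, by simpa [MPath.edges_extend, hce] using hpc⟩

lemma exists_cycle_of_support_path [Fintype V] (hc : chainBdry ε c = 0)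
    (hnl : ∀ f x, c f ≠ 0 → ε f ≠ s(x, x)) (p : MPath V E ε) (hp : p.n ≠ 0)
    (hpc : ∀ f ∈ p.edges, c f ≠ 0) : ∃ C : MCycle V E ε, ∀ f ∈ C.edges, c f ≠ 0 := by
  induction h : Fintype.card V - p.n using Nat.strong_induction_on generalizing p with
  | _ N ih =>
  refine (support_path_step hc hnl p hp hpc).elim id fun ⟨q, hq, hqc⟩ => ?_
  have := q.n_lt_card
  exact ih _ (by omega) q (by omega) hqc rfl

lemma exists_cycle_of_chainBdry_eq_zero [Fintype V] (hc : chainBdry ε c = 0) (hne : c ≠ 0) :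
    ∃ C : MCycle V E ε, ∀ f ∈ C.edges, c f ≠ 0 := by
  by_cases hloop : ∃ f x, c f ≠ 0 ∧ ε f = s(x, x)
  · obtain ⟨f, x, hcf, hfx⟩ := hloop
    exact ⟨MCycle.ofLoop hfx, by simpa [MCycle.ofLoop_edges] using hcf⟩
  push Not at hloop
  obtain ⟨f, hf⟩ : ∃ f, c f ≠ 0 := by
    by_contra! h
    exact hne (funext h)
  obtain ⟨⟨a, b⟩, hab⟩ := Quot.exists_rep (ε f)
  let p : MPath V E ε := MPath.nil a f
  have he : ε f = s(p.vtx p.n, b) := hab.symm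
  have hba : ∀ i ≤ p.n, p.vtx i ≠ b := by
    rintro i - rfl
    exact hloop f _ hf he
  exact exists_cycle_of_support_path hc hloop (p.extend he hba) one_ne_zero
    (by rw [MPath.edges_extend]; simpa [p] using hf)

lemma exists_cycle_through [Fintype V] (hc : chainBdry ε c = 0) {f : E} (hf : c f ≠ 0) :
    ∃ C : MCycle V E ε, f ∈ C.edges ∧ ∀ g ∈ C.edges, c g ≠ 0 := by
  induction hN : #{g | c g ≠ 0} using Nat.strong_induction_on generalizing c with
  | _ N ih =>
  obtain ⟨C, hC⟩ := exists_cycle_of_chainBdry_eq_zero hc fun h => hf (by rw [h]; rfl)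
  by_cases hfC : f ∈ C.edges
  · exact ⟨C, hfC, hC⟩
  have hval : ∀ g, (c + mchain C) g = if g ∈ C.edges then 0 else c g := by
    intro g
    rw [Pi.add_apply, mchain_apply]
    split_ifs with hg
    · rw [Fin.eq_one_of_ne_zero _ (hC g hg)]
      rfl
    · rw [add_zero]
  have hlt : #{g | (c + mchain C) g ≠ 0} < N := by
    rw [← hN]
    refine card_lt_card ⟨fun g => ?_, fun hsub => ?_⟩
    · simp only [mem_filter, mem_univ, true_and, hval]
      split_ifs <;> simp_all
    · have := hsub (mem_filter.2 ⟨mem_univ _, hC _ (C.edg_mem_edges C.npos)⟩)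
      simp [hval, C.edg_mem_edges C.npos] at this
  obtain ⟨C', hfC', hC'⟩ := ih _ hlt (by rw [map_add, hc, chainBdry_mchain, add_zero])
    (by rwa [hval, if_neg hfC]) rfl
  refine ⟨C', hfC', fun g hg => ?_⟩
  have := hC' g hg
  rw [hval] at this
  split_ifs at this
  · exact absurd rfl this
  · exact this

lemma exists_cycle_of_diverge [Fintype V] {p q : MPath V E ε} (h0 : p.vtx 0 = q.vtx 0)
    (hn : p.vtx p.n = q.vtx q.n) (hd : p.Diverge q) :
    ∃ C : MCycle V E ε, C.edges ⊆ p.edges ∪ q.edges ∧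
      ∀ i < C.n, C.vtx i ∈ p.vertices ∪ q.vertices := by
  set c := indicatorChain p.edges + indicatorChain q.edges
  have hc : chainBdry ε c = 0 := by
    rw [map_add, chainBdry_indicatorChain_pathEdges, chainBdry_indicatorChain_pathEdges, h0, hn,
      ZModModule.add_self]
  have hsupp : ∀ f, c f ≠ 0 → f ∈ p.edges ∪ q.edges := fun f hf => by
    by_contra h
    simp_all [c, indicatorChain_apply]
  obtain ⟨m, hm, hmq⟩ := hd.exists_edg_notMem_edges
  obtain ⟨C, hC⟩ := exists_cycle_of_chainBdry_eq_zero hc fun h => by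
    simpa [c, indicatorChain_apply, p.edg_mem_edges hm, hmq] using congrFun h (p.edg m)
  refine ⟨C, fun f hf => hsupp f (hC f hf), fun i hi => ?_⟩
  rcases mem_union.1 (hsupp _ (hC _ (C.edg_mem_edges hi))) with h | h
  · exact mem_union_left _ (p.mem_vertices_of_mem_edges h (C.vtx_mem_edg hi))
  · exact mem_union_right _ (q.mem_vertices_of_mem_edges h (C.vtx_mem_edg hi))

end Extraction

section CyclicPart

variable {V E : Type} [DecidableEq E] {ε : E → Sym2 V} {S : Finset E}
  {C : MCycle V E ε}

open scoped Classical in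
noncomputable def cyclicEdges (ε : E → Sym2 V) (S : Finset E) : Finset E :=
  {e ∈ S | ∃ C : MCycle V E ε, C.edges ⊆ S ∧ e ∈ C.edges}

lemma mem_cyclicEdges {e : E} : e ∈ cyclicEdges ε S ↔
    e ∈ S ∧ ∃ C : MCycle V E ε, C.edges ⊆ S ∧ e ∈ C.edges := by
  simp [cyclicEdges]

lemma cyclicEdges_subset : cyclicEdges ε S ⊆ S := fun _ he => (mem_cyclicEdges.1 he).1

lemma edg_mem_cyclicEdges (hC : C.edges ⊆ S) {i : ℕ} (hi : i < C.n) :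
    C.edg i ∈ cyclicEdges ε S :=
  mem_cyclicEdges.2 ⟨hC (C.edg_mem_edges hi), C, hC, C.edg_mem_edges hi⟩

lemma mem_cyclicEdges_of_mem_cycleSpace [Fintype V] [Fintype E] [DecidableEq V] {c : E → ZMod 2}
    (hc : c ∈ cycleSpace ε S) {f : E} (hf : c f ≠ 0) : f ∈ cyclicEdges ε S := by
  obtain ⟨hbd, hS⟩ := mem_cycleSpace.1 hc
  obtain ⟨C, hfC, hCc⟩ := exists_cycle_through hbd hf
  have hCS : C.edges ⊆ S := fun g hg => by_contra fun h => hCc g hg (hS g h)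
  exact mem_cyclicEdges.2 ⟨hCS hfC, C, hCS, hfC⟩

variable [DecidableEq V]

lemma exists_cycle_of_cycleRank_ne_zero [Fintype V] [Fintype E] (hS : cycleRank ε S ≠ 0) :
    ∃ C : MCycle V E ε, C.edges ⊆ S := by
  obtain ⟨c, hc, hc0⟩ := Submodule.exists_mem_ne_zero_of_ne_bot (p := cycleSpace ε S) fun h =>
    hS (by rw [cycleRank, h, finrank_bot])
  obtain ⟨hbd, hS⟩ := mem_cycleSpace.1 hc
  obtain ⟨C, hC⟩ := exists_cycle_of_chainBdry_eq_zero hbd hc0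
  exact ⟨C, fun f hf => by_contra fun h => hC f hf (hS f h)⟩

noncomputable def cyclicDeg (ε : E → Sym2 V) (S : Finset E) (x : V) : ℕ :=
  #{f ∈ cyclicEdges ε S | x ∈ ε f}

lemma le_cyclicDeg {x : V} {T : Finset E}
    (hT : ∀ f ∈ T, f ∈ cyclicEdges ε S ∧ x ∈ ε f) : #T ≤ cyclicDeg ε S x :=
  card_le_card fun f hf => mem_filter.2 (hT f hf)

lemma two_le_cyclicDeg_vtx_succ (hC : C.edges ⊆ S) (hn : 2 ≤ C.n) {i : ℕ} (hi : i < C.n) :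
    2 ≤ cyclicDeg ε S (C.vtx ((i + 1) % C.n)) := by
  rw [← card_pair (C.edg_succ_ne hn hi).symm]
  refine le_cyclicDeg fun f hf => ?_
  rcases mem_insert.1 hf with rfl | hf
  · exact ⟨edg_mem_cyclicEdges hC hi, C.vtx_succ_mem_edg hi⟩
  · rw [mem_singleton.1 hf]
    exact ⟨edg_mem_cyclicEdges hC C.add_one_mod_lt, C.vtx_mem_edg C.add_one_mod_lt⟩

lemma two_le_cyclicDeg_vtx (hC : C.edges ⊆ S) (hn : 2 ≤ C.n) {i : ℕ} (hi : i < C.n) :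
    2 ≤ cyclicDeg ε S (C.vtx i) := by
  obtain ⟨j, hj, rfl⟩ := Nat.exists_add_one_mod_eq hi
  exact two_le_cyclicDeg_vtx_succ hC hn hj

lemma eq_or_eq_of_cyclicDeg_eq_two {x : V} (hdeg : cyclicDeg ε S x = 2) {a b : E}
    (hab : a ≠ b) (ha : a ∈ cyclicEdges ε S) (hb : b ∈ cyclicEdges ε S) (hxa : x ∈ ε a)
    (hxb : x ∈ ε b) {f : E} (hf : f ∈ cyclicEdges ε S) (hxf : x ∈ ε f) :
    f = a ∨ f = b := by
  have hpair : {a, b} = ({f ∈ cyclicEdges ε S | x ∈ ε f} : Finset E) := by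
    refine eq_of_subset_of_card_le (fun g hg => ?_) ?_
    · rcases mem_insert.1 hg with rfl | hg
      · exact mem_filter.2 ⟨ha, hxa⟩
      · exact mem_filter.2 (by rw [mem_singleton.1 hg]; exact ⟨hb, hxb⟩)
    · rw [card_pair hab]; exact hdeg.le
  have : f ∈ ({f ∈ cyclicEdges ε S | x ∈ ε f} : Finset E) := mem_filter.2 ⟨hf, hxf⟩
  simpa [← hpair] using this

noncomputable def branchCount (ε : E → Sym2 V) (S : Finset E) (C : MCycle V E ε) : ℕ :=
  #{i ∈ range C.n | cyclicDeg ε S (C.vtx i) ≠ 2}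

variable [Fintype V] [Fintype E]

-- At the vertex shared by the two edges they are the only cyclic edges, so the boundary of `c`
-- there is their sum: edges outside the cyclic part carry `0`.
lemma apply_edg_eq_of_cyclicDeg_eq_two (hC : C.edges ⊆ S) (hn : 2 ≤ C.n) {c : E → ZMod 2}
    (hc : c ∈ cycleSpace ε S) {i : ℕ} (hi : i < C.n)
    (hdeg : cyclicDeg ε S (C.vtx ((i + 1) % C.n)) = 2) :
    c (C.edg i) = c (C.edg ((i + 1) % C.n)) := by
  set x := C.vtx ((i + 1) % C.n)
  have hab := (C.edg_succ_ne hn hi).symm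
  have hx0 := congrFun (mem_cycleSpace.1 hc).1 x
  rw [chainBdry_apply, Fintype.sum_eq_add _ _ hab, if_neg (C.edg_ne_loop hn hi x),
    if_pos (C.vtx_succ_mem_edg hi), if_neg (C.edg_ne_loop hn C.add_one_mod_lt x),
    if_pos (C.vtx_mem_edg C.add_one_mod_lt)] at hx0
  · rw [eq_neg_of_add_eq_zero_left hx0, ZModModule.neg_eq_self]
  · rintro f ⟨hfa, hfb⟩
    split_ifs with h1 h2
    · rfl
    · by_contra hcf
      rcases eq_or_eq_of_cyclicDeg_eq_two hdeg hab (edg_mem_cyclicEdges hC hi)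
        (edg_mem_cyclicEdges hC C.add_one_mod_lt) (C.vtx_succ_mem_edg hi)
        (C.vtx_mem_edg C.add_one_mod_lt)
        (mem_cyclicEdges_of_mem_cycleSpace hc hcf) h2 with h | h
      exacts [hfa h, hfb h]
    · rfl

lemma apply_eq_zero_of_apply_branch_eq_zero (hC : C.edges ⊆ S) {c : E → ZMod 2}
    (hc : c ∈ cycleSpace ε S) (h0 : c (C.edg 0) = 0)
    (hbr : ∀ i < C.n, cyclicDeg ε S (C.vtx i) ≠ 2 → c (C.edg i) = 0) :
    ∀ f ∈ C.edges, c f = 0 := by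
  have hmod : ∀ k, c (C.edg (k % C.n)) = 0 := by
    intro k
    induction k with
    | zero => rwa [Nat.zero_mod]
    | succ k ih =>
      have hk := Nat.mod_lt k C.npos
      rw [← Nat.mod_add_mod]
      by_cases hdeg : cyclicDeg ε S (C.vtx ((k % C.n + 1) % C.n)) = 2
      · rcases Nat.lt_or_ge C.n 2 with hn | hn
        · simpa [show C.n = 1 by omega] using ih
        · rwa [← apply_edg_eq_of_cyclicDeg_eq_two hC hn hc hk hdeg]
      · exact hbr _ C.add_one_mod_lt hdeg
  intro f hf
  obtain ⟨i, hi, rfl⟩ := C.mem_edges.1 hf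
  simpa [Nat.mod_eq_of_lt hi] using hmod i

lemma cycleRank_le_sdiff_edges_add_branchCount (hC : C.edges ⊆ S) :
    cycleRank ε S ≤ cycleRank ε (S \ C.edges) + branchCount ε S C + 1 := by
  set B := (insert 0 {i ∈ range C.n | cyclicDeg ε S (C.vtx i) ≠ 2}).image C.edg
  have hB : #B ≤ branchCount ε S C + 1 := card_image_le.trans (card_insert_le _ _)
  have hle : cycleRank ε (S \ B) ≤ cycleRank ε (S \ C.edges) := by
    refine Submodule.finrank_mono fun c hc => ?_
    obtain ⟨hcS, hcB⟩ := mem_cycleSpace_sdiff.1 hc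
    refine mem_cycleSpace_sdiff.2 ⟨hcS, apply_eq_zero_of_apply_branch_eq_zero hC hcS
      (hcB _ (mem_image_of_mem _ (mem_insert_self _ _))) fun i hi hbr => hcB _ ?_⟩
    exact mem_image_of_mem _ (mem_insert_of_mem (mem_filter.2 ⟨mem_range.2 hi, hbr⟩))
  have := cycleRank_le_cycleRank_sdiff_add_card (ε := ε) S B
  omega

end CyclicPart

section Moore

variable {V E : Type} [DecidableEq V] [DecidableEq E] {ε : E → Sym2 V} {S : Finset E} {K : ℕ}

def BranchGirthGT (ε : E → Sym2 V) (S : Finset E) (K : ℕ) : Prop :=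
  ∀ C : MCycle V E ε, C.edges ⊆ S → K < branchCount ε S C

noncomputable def branchVerts (ε : E → Sym2 V) (S : Finset E) (p : MPath V E ε) : Finset V :=
  {x ∈ p.vertices | cyclicDeg ε S x ≠ 2}

lemma branchCount_le_of_vtx_mem {C : MCycle V E ε} {W : Finset V}
    (h : ∀ i < C.n, C.vtx i ∈ W) :
    branchCount ε S C ≤ #{x ∈ W | cyclicDeg ε S x ≠ 2} := by
  refine card_le_card_of_injOn C.vtx (fun i hi => ?_) fun i hi j hj hij => ?_
  · simp only [coe_filter, mem_range] at hi ⊢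
    exact ⟨h i hi.1, hi.2⟩
  · simp only [coe_filter, mem_range] at hi hj
    exact C.vinj i hi.1 j hj.1 hij

lemma branchVerts_extend_subset (p : MPath V E ε) {e : E} {y : V} (he : ε e = s(p.vtx p.n, y))
    (hy : ∀ i ≤ p.n, p.vtx i ≠ y) :
    branchVerts ε S (p.extend he hy) ⊆ insert y (branchVerts ε S p) := by
  intro x hx
  simp only [branchVerts, mem_filter, MPath.vertices_extend, mem_insert] at hx ⊢
  tauto

namespace BranchGirthGT

variable (hK : BranchGirthGT ε S K)
include hK

lemma lt_n {C : MCycle V E ε} (hC : C.edges ⊆ S) : K < C.n :=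
  (hK C hC).trans_le ((card_filter_le _ _).trans (card_range _).le)

lemma two_le_cyclicDeg (hK1 : 1 ≤ K) {f : E} (hf : f ∈ cyclicEdges ε S) {x : V}
    (hx : x ∈ ε f) : 2 ≤ cyclicDeg ε S x := by
  obtain ⟨-, C, hCS, hfC⟩ := mem_cyclicEdges.1 hf
  obtain ⟨i, hi, rfl⟩ := C.mem_edges.1 hfC
  have hn : 2 ≤ C.n := by have := hK.lt_n hCS; omega
  rw [C.incid i hi, Sym2.mem_iff] at hx
  rcases hx with rfl | rfl
  exacts [two_le_cyclicDeg_vtx hCS hn hi, two_le_cyclicDeg_vtx_succ hCS hn hi]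

lemma vtx_ne (p : MPath V E ε) (hpY : p.edges ⊆ cyclicEdges ε S)
    (hbr : #(branchVerts ε S p) ≤ K) {e : E} (heY : e ∈ cyclicEdges ε S) (hne : e ∉ p.edges)
    {y : V} (hy : ε e = s(p.vtx p.n, y)) : ∀ j ≤ p.n, p.vtx j ≠ y := by
  rintro j hj rfl
  obtain ⟨C, hCe, hCv⟩ := p.exists_cycle_of_vtx_eq hj hy hne
  have hCS := (hCe.trans (insert_subset heY hpY)).trans cyclicEdges_subset
  exact (hK C hCS).not_ge ((branchCount_le_of_vtx_mem hCv).trans hbr)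

lemma not_diverge [Fintype V] [Fintype E] {p q : MPath V E ε}
    (hpY : p.edges ⊆ cyclicEdges ε S) (hqY : q.edges ⊆ cyclicEdges ε S)
    (h0 : p.vtx 0 = q.vtx 0) (hn : p.vtx p.n = q.vtx q.n)
    (hbr : #(branchVerts ε S p) + #(branchVerts ε S q) ≤ K) : ¬ p.Diverge q := by
  intro hd
  obtain ⟨C, hCe, hCv⟩ := exists_cycle_of_diverge h0 hn hd
  have hCS := (hCe.trans (union_subset hpY hqY)).trans cyclicEdges_subset
  have := branchCount_le_of_vtx_mem (S := S) hCv
  rw [filter_union] at this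
  exact (hK C hCS).not_ge ((this.trans (card_union_le _ _)).trans hbr)

lemma exists_three_le_cyclicDeg [Fintype V] [Fintype E] (hK1 : 1 ≤ K)
    (hS : cycleRank ε S ≠ 0) : ∃ r, 3 ≤ cyclicDeg ε S r := by
  obtain ⟨C, hCS⟩ := exists_cycle_of_cycleRank_ne_zero hS
  have hn : 2 ≤ C.n := by have := hK.lt_n hCS; omega
  obtain ⟨i, hi⟩ := card_pos.1 ((Nat.zero_le K).trans_lt (hK C hCS))
  rw [mem_filter, mem_range] at hi
  exact ⟨C.vtx i, by have := two_le_cyclicDeg_vtx hCS hn hi.1; omega⟩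

-- The path can only go on along the other cyclic edge at its endpoint; returning to a vertex
-- of the path would close a cycle all of whose branch vertices lie in `W`.
lemma run_step {W : Finset V} (hWK : #W ≤ K) (p : MPath V E ε)
    (hpY : p.edges ⊆ cyclicEdges ε S) (hpW : branchVerts ε S p ⊆ insert (p.vtx p.n) W)
    (hdeg : cyclicDeg ε S (p.vtx p.n) = 2) :
    ∃ q : MPath V E ε, q.n = p.n + 1 ∧ p.IsPrefix q ∧ q.edges ⊆ cyclicEdges ε S ∧
      branchVerts ε S q ⊆ insert (q.vtx q.n) W := by
  obtain ⟨e, he, hne⟩ := exists_mem_ne (show 1 < cyclicDeg ε S (p.vtx p.n) by omega)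
    (p.edg (p.n - 1))
  obtain ⟨heY, hxe⟩ := mem_filter.1 he
  obtain ⟨y, hy⟩ := Sym2.mem_iff_exists.1 hxe
  have hpW' : branchVerts ε S p ⊆ W := fun x hx => by
    rcases mem_insert.1 (hpW hx) with rfl | hx'
    · simp [branchVerts, hdeg] at hx
    · exact hx'
  have hfresh := hK.vtx_ne p hpY ((card_le_card hpW').trans hWK) heY
    (p.notMem_edges_of_vtx_last_mem hxe hne) hy
  refine ⟨p.extend hy hfresh, rfl, p.isPrefix_extend hy hfresh,
    by rw [MPath.edges_extend]; exact insert_subset heY hpY, ?_⟩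
  rw [MPath.extend_n, MPath.extend_vtx_last]
  exact (branchVerts_extend_subset p hy hfresh).trans (insert_subset_insert _ hpW')

section Tree

variable [Fintype V] (hK1 : 1 ≤ K)
include hK1

lemma exists_run {W : Finset V} (hWK : #W ≤ K) (p : MPath V E ε) (hp : p.n ≠ 0)
    (hpY : p.edges ⊆ cyclicEdges ε S) (hpW : branchVerts ε S p ⊆ insert (p.vtx p.n) W) :
    ∃ q : MPath V E ε, p.IsPrefix q ∧ q.edges ⊆ cyclicEdges ε S ∧
      3 ≤ cyclicDeg ε S (q.vtx q.n) ∧ branchVerts ε S q ⊆ insert (q.vtx q.n) W := by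
  induction h : Fintype.card V - p.n using Nat.strong_induction_on generalizing p with
  | _ N ih =>
  by_cases hdeg : cyclicDeg ε S (p.vtx p.n) = 2
  · obtain ⟨q, hq, hpq, hqY, hqW⟩ := hK.run_step hWK p hpY hpW hdeg
    have := q.n_lt_card
    obtain ⟨r, hqr, hrY, hr, hrW⟩ := ih _ (by omega) q (by omega) hqY hqW rfl
    exact ⟨r, hpq.trans hqr, hrY, hr, hrW⟩
  · have := hK.two_le_cyclicDeg hK1 (hpY (p.edg_mem_edges (by omega))) (p.vtx_last_mem_edg hp)
    exact ⟨p, .refl p, hpY, by omega, hpW⟩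

lemma exists_child (p : MPath V E ε) (hpY : p.edges ⊆ cyclicEdges ε S)
    (hpK : #(branchVerts ε S p) ≤ K) {e : E} (heY : e ∈ cyclicEdges ε S)
    (hxe : p.vtx p.n ∈ ε e) (hne : e ∉ p.edges) :
    ∃ q : MPath V E ε, p.IsPrefix q ∧ p.n < q.n ∧ q.edg p.n = e ∧
      q.edges ⊆ cyclicEdges ε S ∧ 3 ≤ cyclicDeg ε S (q.vtx q.n) ∧
      #(branchVerts ε S q) ≤ #(branchVerts ε S p) + 1 := by
  obtain ⟨y, hy⟩ := Sym2.mem_iff_exists.1 hxe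
  have hfresh := hK.vtx_ne p hpY hpK heY hne hy
  obtain ⟨q, hpq, hqY, hq, hqW⟩ := hK.exists_run hK1 hpK (p.extend hy hfresh) (by simp)
    (by rw [MPath.edges_extend]; exact insert_subset heY hpY)
    (by simpa [MPath.extend_vtx_last] using branchVerts_extend_subset p hy hfresh)
  have hlen := hpq.1
  rw [MPath.extend_n] at hlen
  refine ⟨q, (p.isPrefix_extend hy hfresh).trans hpq, by omega, ?_, hqY, hq,
    (card_le_card hqW).trans (card_insert_le _ _)⟩
  rw [hpq.2.2 p.n (by simp), MPath.extend_edg_n]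

lemma exists_two_children (p : MPath V E ε) (hpY : p.edges ⊆ cyclicEdges ε S)
    (hpK : #(branchVerts ε S p) ≤ K) (hdeg : 3 ≤ cyclicDeg ε S (p.vtx p.n)) :
    ∃ Q : Bool → MPath V E ε, (∀ b, p.IsPrefix (Q b) ∧ p.n < (Q b).n ∧
      (Q b).edges ⊆ cyclicEdges ε S ∧ 3 ≤ cyclicDeg ε S ((Q b).vtx (Q b).n) ∧
      #(branchVerts ε S (Q b)) ≤ #(branchVerts ε S p) + 1) ∧ (Q false).Diverge (Q true) := by
  obtain ⟨e₀, he₀, e₁, he₁, hne⟩ := one_lt_card.1 <|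
    (show 1 < cyclicDeg ε S (p.vtx p.n) - 1 by omega).trans_le
      (pred_card_le_card_erase (a := p.edg (p.n - 1)))
  have child : ∀ e ∈ {f ∈ cyclicEdges ε S | p.vtx p.n ∈ ε f}.erase (p.edg (p.n - 1)),
      ∃ q : MPath V E ε, p.IsPrefix q ∧ p.n < q.n ∧ q.edg p.n = e ∧
        q.edges ⊆ cyclicEdges ε S ∧ 3 ≤ cyclicDeg ε S (q.vtx q.n) ∧
        #(branchVerts ε S q) ≤ #(branchVerts ε S p) + 1 := fun e he => by
    obtain ⟨hlast, he⟩ := mem_erase.1 he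
    obtain ⟨heY, hxe⟩ := mem_filter.1 he
    exact hK.exists_child hK1 p hpY hpK heY hxe (p.notMem_edges_of_vtx_last_mem hxe hlast)
  obtain ⟨q₀, h₀, hn₀, he₀, hq₀⟩ := child e₀ he₀
  obtain ⟨q₁, h₁, hn₁, he₁, hq₁⟩ := child e₁ he₁
  refine ⟨fun b => bif b then q₁ else q₀,
    Bool.forall_bool.2 ⟨⟨h₀, hn₀, hq₀⟩, ⟨h₁, hn₁, hq₁⟩⟩,
    MPath.diverge_of_isPrefix h₀ h₁ hn₀ hn₁ (by rwa [← he₀, ← he₁] at hne)⟩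

lemma exists_divergent_family {r : V} (hr : 3 ≤ cyclicDeg ε S r) :
    ∀ k < K, ∃ P : (Fin k → Bool) → MPath V E ε,
      (∀ σ, (P σ).vtx 0 = r ∧ (P σ).edges ⊆ cyclicEdges ε S ∧
        3 ≤ cyclicDeg ε S ((P σ).vtx (P σ).n) ∧ #(branchVerts ε S (P σ)) ≤ k + 1) ∧
      ∀ σ τ, σ ≠ τ → (P σ).Diverge (P τ) := by
  intro k
  induction k with
  | zero =>
    intro _
    obtain ⟨e, -⟩ := card_pos.1 (show 0 < cyclicDeg ε S r by omega)
    refine ⟨fun _ => MPath.nil r e, fun _ => ⟨rfl, by simp,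
      hr, card_le_one.2 fun x hx y hy => ?_⟩, fun σ τ h => absurd (Subsingleton.elim σ τ) h⟩
    simp_all [branchVerts, MPath.vertices, MPath.nil]
  | succ k ih =>
    intro hk
    obtain ⟨P, hP, hPd⟩ := ih (by omega)
    choose Q hQ hQd using fun σ =>
      hK.exists_two_children hK1 (P σ) (hP σ).2.1 (by have := (hP σ).2.2.2; omega) (hP σ).2.2.1
    refine ⟨fun σ => Q (Fin.init σ) (σ (Fin.last k)), fun σ => ?_, fun σ τ hστ => ?_⟩
    · obtain ⟨hpre, -, hY, hdeg, hbr⟩ := hQ (Fin.init σ) (σ (Fin.last k))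
      exact ⟨(hpre.2.1 0 (Nat.zero_le _)).trans (hP _).1, hY, hdeg,
        hbr.trans (by have := (hP (Fin.init σ)).2.2.2; omega)⟩
    by_cases hinit : Fin.init σ = Fin.init τ
    · have hlast : σ (Fin.last k) ≠ τ (Fin.last k) := fun h =>
        hστ (by rw [← Fin.snoc_init_self σ, ← Fin.snoc_init_self τ, hinit, h])
      simp only [hinit]
      cases hσ : σ (Fin.last k) <;> cases hτ : τ (Fin.last k) <;> simp_all [MPath.Diverge.symm]
    · exact (hPd _ _ hinit).mono (hQ _ _).1 (hQ _ _).1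

end Tree

end BranchGirthGT

theorem exists_cycle_branchCount_le [Fintype V] [Fintype E] (hS : cycleRank ε S ≠ 0) :
    ∃ C : MCycle V E ε, C.edges ⊆ S ∧
      branchCount ε S C ≤ 2 * Nat.log 2 (Fintype.card V) + 6 := by
  by_contra! hlt
  set L := Nat.log 2 (Fintype.card V)
  have hK : BranchGirthGT ε S (2 * L + 6) := hlt
  obtain ⟨r, hr⟩ := hK.exists_three_le_cyclicDeg (by omega) hS
  obtain ⟨P, hP, hPd⟩ := hK.exists_divergent_family (by omega) hr (L + 1) (by omega)
  have hinj : Function.Injective fun σ => (P σ).vtx (P σ).n := fun σ τ h => by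
    by_contra hστ
    refine hK.not_diverge (hP σ).2.1 (hP τ).2.1 ((hP σ).1.trans (hP τ).1.symm) h ?_
      (hPd σ τ hστ)
    have := (hP σ).2.2.2
    have := (hP τ).2.2.2
    omega
  have := Fintype.card_le_of_injective _ hinj
  rw [Fintype.card_fun, Fintype.card_bool, Fintype.card_fin] at this
  exact this.not_gt (Nat.lt_pow_succ_log_self one_lt_two _)

end Moore

section Peeling

variable {V E : Type} [DecidableEq E] {ε : E → Sym2 V}

def IsPeeling : Finset E → List (MCycle V E ε × E) → Prop
  | _, [] => True
  | S, (C, e) :: L => C.edges ⊆ S ∧ e ∈ C.edges ∧ IsPeeling (S.erase e) L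

def peelRest : Finset E → List (MCycle V E ε × E) → Finset E
  | S, [] => S
  | S, (_, e) :: L => peelRest (S.erase e) L

lemma peelRest_append (A B : List (MCycle V E ε × E)) (S : Finset E) :
    peelRest S (A ++ B) = peelRest (peelRest S A) B := by
  induction A generalizing S with
  | nil => rfl
  | cons p A ih => exact ih _

namespace IsPeeling

lemma mono {L : List (MCycle V E ε × E)} {S T : Finset E} (hST : S ⊆ T) (h : IsPeeling S L) :
    IsPeeling T L := by
  induction L generalizing S T with
  | nil => trivial
  | cons p L ih => exact ⟨h.1.trans hST, h.2.1, ih (erase_subset_erase _ hST) h.2.2⟩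

lemma edges_subset {L : List (MCycle V E ε × E)} {S : Finset E} (h : IsPeeling S L) :
    ∀ p ∈ L, p.1.edges ⊆ S := by
  induction L generalizing S with
  | nil => simp
  | cons q L ih =>
    intro p hp
    rcases List.mem_cons.1 hp with rfl | hp
    · exact h.1
    · exact (ih h.2.2 p hp).trans (erase_subset _ _)

lemma snd_mem {L : List (MCycle V E ε × E)} {S : Finset E} (h : IsPeeling S L) :
    ∀ p ∈ L, p.2 ∈ p.1.edges := by
  induction L generalizing S with
  | nil => simp
  | cons q L ih =>
    intro p hp
    rcases List.mem_cons.1 hp with rfl | hp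
    · exact h.2.1
    · exact ih h.2.2 p hp

lemma pairwise {L : List (MCycle V E ε × E)} {S : Finset E} (h : IsPeeling S L) :
    L.Pairwise fun p q => p.2 ∉ q.1.edges := by
  induction L generalizing S with
  | nil => exact .nil
  | cons p L ih =>
    exact .cons (fun q hq hmem => notMem_erase _ _ (h.2.2.edges_subset q hq hmem)) (ih h.2.2)

lemma append {A B : List (MCycle V E ε × E)} {S : Finset E} (hA : IsPeeling S A)
    (hB : IsPeeling (peelRest S A) B) : IsPeeling S (A ++ B) := by
  induction A generalizing S with
  | nil => exact hB
  | cons p A ih => exact ⟨hA.1, hA.2.1, ih hA.2.2 hB⟩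

variable [Fintype E] [DecidableEq V]

lemma cycleRank_peelRest_add_length {L : List (MCycle V E ε × E)} {S : Finset E}
    (h : IsPeeling S L) : cycleRank ε (peelRest S L) + L.length = cycleRank ε S := by
  induction L generalizing S with
  | nil => rfl
  | cons p L ih =>
    have := cycleRank_erase_add_one h.1 h.2.1
    have := ih h.2.2
    simp only [peelRest, List.length_cons] at *
    omega

lemma cycleSpace_le_span {L : List (MCycle V E ε × E)} {S : Finset E} (h : IsPeeling S L)
    (h0 : cycleRank ε (peelRest S L) = 0) :
    cycleSpace ε S ≤ Submodule.span (ZMod 2) ((fun p => mchain p.1) '' {p | p ∈ L}) := by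
  induction L generalizing S with
  | nil =>
    intro c hc
    have hbot : cycleSpace ε S = ⊥ := Submodule.finrank_eq_zero.1 h0
    rw [hbot, Submodule.mem_bot] at hc
    rw [hc]
    exact zero_mem _
  | cons p L ih =>
    intro c hc
    obtain ⟨C, e⟩ := p
    have hC := mchain_mem_cycleSpace h.1
    have hc' : c + c e • mchain C ∈ cycleSpace ε (S.erase e) := by
      rw [← sdiff_singleton_eq_erase, mem_cycleSpace_sdiff]
      refine ⟨add_mem hc (Submodule.smul_mem _ _ hC), fun f hf => ?_⟩
      rw [mem_singleton.1 hf, Pi.add_apply, Pi.smul_apply, mchain_apply, if_pos h.2.1,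
        smul_eq_mul, mul_one, ZModModule.add_self]
    have hspan := Submodule.span_mono (Set.image_mono fun q hq => List.mem_cons_of_mem (C, e) hq)
      (ih h.2.2 h0 hc')
    have hmem : mchain C ∈ Submodule.span (ZMod 2)
        ((fun p => mchain p.1) '' {p | p ∈ (C, e) :: L}) :=
      Submodule.subset_span ⟨(C, e), List.mem_cons_self, rfl⟩
    have := add_mem hspan (Submodule.smul_mem _ (c e) hmem)
    rwa [add_assoc, ← add_smul, ZModModule.add_self, zero_smul, add_zero] at this

lemma span_eq {L : List (MCycle V E ε × E)} {S : Finset E} (h : IsPeeling S L)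
    (h0 : cycleRank ε (peelRest S L) = 0) :
    Submodule.span (ZMod 2) (Set.range fun i : Fin L.length => mchain (L.get i).1) =
      cycleSpace ε S := by
  have hrange : (Set.range fun i : Fin L.length => mchain (L.get i).1) =
      (fun p => mchain p.1) '' {p | p ∈ L} := by
    rw [← Set.range_list_get, ← Set.range_comp]
    rfl
  rw [hrange]
  refine le_antisymm (Submodule.span_le.2 ?_) (h.cycleSpace_le_span h0)
  rintro _ ⟨p, hp, rfl⟩
  exact mchain_mem_cycleSpace (h.edges_subset p hp)

lemma linearIndependent {L : List (MCycle V E ε × E)} {S : Finset E} (h : IsPeeling S L)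
    (h0 : cycleRank ε (peelRest S L) = 0) :
    LinearIndependent (ZMod 2) fun i : Fin L.length => mchain (L.get i).1 := by
  rw [linearIndependent_iff_card_eq_finrank_span, Set.finrank, h.span_eq h0, Fintype.card_fin]
  have := h.cycleRank_peelRest_add_length
  rw [h0, zero_add] at this
  exact this

end IsPeeling

end Peeling

section RoundBound

/-- After one round the rank `m` drops to `m'` with `m ≤ g (m - m')`. Within a dyadic block
`2 ^ ℓ ≤ m + 1 < 2 ^ (ℓ + 1)` such a drop is at least `(m + 1) / 2g`, so the second summand
decreases; leaving the block decreases `ℓ`, and the second summand is always in `[2g, 4g)`. -/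
def roundBound (g m : ℕ) : ℕ :=
  2 * g * Nat.log 2 (m + 1) + 2 * g * (m + 1) / 2 ^ Nat.log 2 (m + 1)

lemma two_mul_le_div_pow_log (g m : ℕ) : 2 * g ≤ 2 * g * (m + 1) / 2 ^ Nat.log 2 (m + 1) :=
  (Nat.le_div_iff_mul_le (by positivity)).2
    (Nat.mul_le_mul_left _ (Nat.pow_log_le_self 2 (by omega)))

lemma div_pow_log_lt {g : ℕ} (hg : 1 ≤ g) (m : ℕ) :
    2 * g * (m + 1) / 2 ^ Nat.log 2 (m + 1) < 4 * g := by
  refine (Nat.div_lt_iff_lt_mul (by positivity)).2 ?_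
  calc 2 * g * (m + 1) < 2 * g * 2 ^ (Nat.log 2 (m + 1) + 1) :=
        Nat.mul_lt_mul_of_pos_left (Nat.lt_pow_succ_log_self one_lt_two _) (by omega)
    _ = 4 * g * 2 ^ Nat.log 2 (m + 1) := by ring

lemma roundBound_le {g : ℕ} (hg : 1 ≤ g) (m : ℕ) :
    roundBound g m ≤ 2 * g * Nat.log 2 (m + 1) + 4 * g :=
  Nat.add_le_add_left (div_pow_log_lt hg m).le _

lemma one_add_roundBound_le {g m m' : ℕ} (hg : 1 ≤ g) (hm : 1 ≤ m) (hm' : m' ≤ m)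
    (h : m ≤ g * (m - m')) : 1 + roundBound g m' ≤ roundBound g m := by
  have hℓ : Nat.log 2 (m' + 1) ≤ Nat.log 2 (m + 1) := Nat.log_mono_right (by omega)
  unfold roundBound
  rcases hℓ.eq_or_lt with heq | hlt
  · have hdrop : m + 1 ≤ 2 * g * (m - m') := by
      have : 1 ≤ m - m' := by
        by_contra h0
        rw [show m - m' = 0 by omega, mul_zero] at h
        omega
      nlinarith
    have hpow := Nat.pow_log_le_self 2 (show m + 1 ≠ 0 by omega)
    have hsplit : 2 * g * (m + 1) = 2 * g * (m' + 1) + 2 * g * (m - m') := by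
      rw [← Nat.mul_add]
      congr 1
      omega
    have : 2 * g * (m' + 1) / 2 ^ Nat.log 2 (m + 1) + 1 ≤
        2 * g * (m + 1) / 2 ^ Nat.log 2 (m + 1) := by
      rw [← Nat.add_div_right _ (by positivity)]
      exact Nat.div_le_div_right (by omega)
    rw [heq]
    omega
  · have := div_pow_log_lt hg m'
    have := two_mul_le_div_pow_log g m
    have : 2 * g * Nat.log 2 (m' + 1) + 2 * g ≤ 2 * g * Nat.log 2 (m + 1) := by nlinarith
    omega

end RoundBound

section Rounds

variable {V E : Type} [Fintype V] [Fintype E] [DecidableEq V] [DecidableEq E] {ε : E → Sym2 V}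
  {g : ℕ}

lemma exists_round (hg : 2 * Nat.log 2 (Fintype.card V) + 7 ≤ g) (S : Finset E) :
    ∃ L : List (MCycle V E ε × E), IsPeeling S L ∧ cycleRank ε S ≤ g * L.length ∧
      ∀ f, L.countP (fun p => f ∈ p.1.edges) ≤ 1 := by
  induction h : cycleRank ε S using Nat.strong_induction_on generalizing S with
  | _ m ih =>
  rcases Nat.eq_zero_or_pos m with rfl | hm
  · exact ⟨[], trivial, by simp, by simp⟩
  obtain ⟨C, hCS, hbr⟩ := exists_cycle_branchCount_le (h ▸ hm.ne' : cycleRank ε S ≠ 0)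
  have he := C.edg_mem_edges C.npos
  have hle := cycleRank_le_sdiff_edges_add_branchCount hCS
  have hlt := cycleRank_sdiff_lt hCS he he
  obtain ⟨L, hL, hrank, hcount⟩ := ih _ (h ▸ hlt) (S \ C.edges) rfl
  refine ⟨(C, C.edg 0) :: L, ⟨hCS, he, hL.mono fun f hf => ?_⟩, ?_, fun f => ?_⟩
  · exact mem_erase.2 ⟨fun h => (mem_sdiff.1 hf).2 (h ▸ he), (mem_sdiff.1 hf).1⟩
  · rw [List.length_cons, Nat.mul_succ]
    omega
  · rw [List.countP_cons]
    by_cases hf : f ∈ C.edges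
    · rw [List.countP_eq_zero.2 fun p hp hfp =>
        (mem_sdiff.1 (hL.edges_subset p hp (by simpa using hfp))).2 hf]
      simp [hf]
    · simpa [hf] using hcount f

lemma exists_peeling (hg : 2 * Nat.log 2 (Fintype.card V) + 7 ≤ g) (S : Finset E) :
    ∃ L : List (MCycle V E ε × E), IsPeeling S L ∧ cycleRank ε (peelRest S L) = 0 ∧
      ∀ f, L.countP (fun p => f ∈ p.1.edges) ≤ roundBound g (cycleRank ε S) := by
  induction h : cycleRank ε S using Nat.strong_induction_on generalizing S with
  | _ m ih =>
  rcases Nat.eq_zero_or_pos m with rfl | hm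
  · exact ⟨[], trivial, h, by simp⟩
  obtain ⟨L₁, h₁, hrank₁, hcount₁⟩ := exists_round (ε := ε) hg S
  have hlen := h₁.cycleRank_peelRest_add_length
  have hne : L₁.length ≠ 0 := fun h0 => by rw [h0, mul_zero] at hrank₁; omega
  obtain ⟨L₂, h₂, h0, hcount₂⟩ := ih _ (by omega) (peelRest S L₁) rfl
  refine ⟨L₁ ++ L₂, h₁.append h₂, by rwa [peelRest_append], fun f => ?_⟩
  have := one_add_roundBound_le (g := g) (m' := cycleRank ε (peelRest S L₁)) (by omega) hm
    (by omega) (by rwa [show m - cycleRank ε (peelRest S L₁) = L₁.length by omega, ← h])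
  rw [List.countP_append]
  have := hcount₁ f
  have := hcount₂ f
  omega

end Rounds

lemma card_le_sum_mdeg {V E : Type} [Fintype V] [Fintype E] [DecidableEq V]
    (ε : E → Sym2 V) : Fintype.card E ≤ ∑ x, mdeg ε x := by
  simp only [mdeg]
  rw [sum_comm, Fintype.card_eq_sum_ones]
  refine sum_le_sum fun f _ => ?_
  obtain ⟨⟨a, b⟩, hab⟩ := Quot.exists_rep (ε f)
  refine le_trans ?_ (single_le_sum (fun x _ => Nat.zero_le _) (mem_univ a))
  have ha : a ∈ ε f := by rw [← hab]; exact Sym2.mem_mk_left a b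
  split_ifs <;> omega

lemma cycleRank_le_card {V E : Type} [Fintype E] [DecidableEq V] (ε : E → Sym2 V)
    (S : Finset E) : cycleRank ε S ≤ Fintype.card E := by
  simpa [cycleRank] using (cycleSpace ε S).finrank_le

lemma log_add_one_le_of_le_mul {m n D : ℕ} (h : m ≤ n * D) :
    Nat.log 2 (m + 1) ≤ Nat.log 2 n + Nat.log 2 (D + 1) + 1 := by
  rcases Nat.eq_zero_or_pos n with rfl | hn
  · simp_all
  refine Nat.lt_succ_iff.1 (Nat.log_lt_of_lt_pow (by omega) ?_)
  calc m + 1 ≤ n * (D + 1) := by nlinarith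
    _ < 2 ^ (Nat.log 2 n + 1) * 2 ^ (Nat.log 2 (D + 1) + 1) :=
        Nat.mul_lt_mul'' (Nat.lt_pow_succ_log_self one_lt_two _)
          (Nat.lt_pow_succ_log_self one_lt_two _)
    _ = 2 ^ (Nat.log 2 n + Nat.log 2 (D + 1) + 1 + 1) := by rw [← pow_add]; ring_nf

theorem exists_peeling_countP_le {D : ℕ} {V E : Type} [Fintype V] [Fintype E] [DecidableEq V]
    [DecidableEq E] (ε : E → Sym2 V) (hdeg : ∀ x, mdeg ε x ≤ D) :
    ∃ L : List (MCycle V E ε × E), IsPeeling univ L ∧ cycleRank ε (peelRest univ L) = 0 ∧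
      ∀ f, L.countP (fun p => f ∈ p.1.edges) ≤
        20 * (Nat.log 2 (D + 1) + 4) * Nat.log 2 (Fintype.card V) ^ 2 +
          20 * (Nat.log 2 (D + 1) + 4) := by
  obtain ⟨P, hP, h0, hcount⟩ := exists_peeling (ε := ε) le_rfl univ
  refine ⟨P, hP, h0, fun f => (hcount f).trans ((roundBound_le (by omega) _).trans ?_)⟩
  have hm : cycleRank ε univ ≤ Fintype.card V * D :=
    (cycleRank_le_card ε univ).trans ((card_le_sum_mdeg ε).trans (by
      simpa using sum_le_card_nsmul univ (mdeg ε) D fun x _ => hdeg x))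
  set L := Nat.log 2 (Fintype.card V)
  have hlog := Nat.mul_le_mul_left (2 * (2 * L + 7)) (log_add_one_le_of_le_mul hm)
  have hL : L ≤ L ^ 2 + 1 := by nlinarith
  have := Nat.mul_le_mul_right (Nat.log 2 (D + 1)) hL
  nlinarith

end Decongestion

open Decongestion

/-- Decongestion lemma: for every degree bound `D` there is a constant `cst` such
that every finite multigraph with all degrees at most `D` has a weakly fundamental
cycle basis in which each edge appears in at most `cst·(log₂ V)² + cst` cycles. -/
theorem stmt_9 (D : ℕ) :
    ∃ cst : ℕ, ∀ (V E : Type) [Fintype V] [Fintype E] [DecidableEq V] [DecidableEq E],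
      ∀ ε : E → Sym2 V, (∀ x : V, mdeg ε x ≤ D) →
      ∃ (k : ℕ) (C : Fin k → MCycle V E ε),
        LinearIndependent (ZMod 2) (fun i => mchain (C i)) ∧
        (∀ c : E → ZMod 2, cycleCondM ε c →
          c ∈ Submodule.span (ZMod 2) (Set.range fun i => mchain (C i))) ∧
        (∃ sel : Fin k → E, (∀ i, inCyc (C i) (sel i)) ∧
          ∀ i j, i < j → ¬ inCyc (C j) (sel i)) ∧
        (∀ f : E, (Finset.univ.filter fun i : Fin k => inCyc (C i) f).card ≤
          cst * (Nat.log 2 (Fintype.card V)) ^ 2 + cst) := by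
  refine ⟨20 * (Nat.log 2 (D + 1) + 4), fun V E _ _ _ _ ε hdeg => ?_⟩
  obtain ⟨L, hL, h0, hcount⟩ := exists_peeling_countP_le ε hdeg
  refine ⟨L.length, fun i => (L.get i).1, hL.linearIndependent h0, fun c hc => ?_,
    ⟨fun i => (L.get i).2, fun i => ?_, fun i j hij => ?_⟩, fun f => ?_⟩
  · rw [hL.span_eq h0]
    exact mem_cycleSpace.2 ⟨cycleCondM_iff.1 hc, fun f hf => absurd (mem_univ f) hf⟩
  · exact (MCycle.mem_edges _).1 (hL.snd_mem _ (List.get_mem _ _))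
  · rw [← MCycle.mem_edges]
    exact List.pairwise_iff_get.1 hL.pairwise i j hij
  · have := hcount f
    rw [← List.card_filter_get_eq_countP] at this
    simpa only [← MCycle.mem_edges] using this
end

section
/- Let c be a smooth (or rectifiable) k-chain in the closed unit ball B^n ⊂ ℝ^n with k < n, whose boundary ∂c lies in the sphere S^{n−1}. For a point p in the interior of B^n not meeting c, let f_p : B^n ∖ {p} → S^{n−1} be the radial-ray projection sending x to the point where the ray from x through p (extended beyond p) meets S^{n−1}. Then the expectation over p chosen uniformly in the ball of radius 1/2 of the k-area of f_p(c) is bounded by a constant C(n,k) times the k-area of c. -/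
/-!
For `‖p‖ ≤ 1/2`, `rayProj p x` is the point where the ray from `p` in the direction of `p - x`
exits the sphere. The exit point is a `4`-Lipschitz function of the unit direction, and
normalising `p - x` is `2/r`-Lipschitz where `r ≤ dist x p`. So on the dyadic annulus
`2⁻ʲ < dist x p ≤ 2¹⁻ʲ` the projection is `2ʲ⁺³`-Lipschitz and multiplies `k`-area by at most
`2^((j+3)k)`. Averaging over `p`, Fubini gives `∫ H^k(c ∩ B(p, R)) dp = |B_R| H^k(c) ≈ Rⁿ H^k(c)`,
so the `j`-th annulus contributes `O(2^(-(n-k)j)) H^k(c)`: a geometric series, since `k < n`.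
The point `p` itself contributes at most `H^k(c)`.
-/

open MeasureTheory ENNReal
open scoped Classical

/-- Radial-ray projection: the point where the ray starting at `x`, passing through
`p` and continuing beyond it, meets the unit sphere (junk value `x` if no such
point exists). -/
noncomputable def rayProj {n : ℕ} (p x : EuclideanSpace ℝ (Fin n)) :
    EuclideanSpace ℝ (Fin n) :=
  if h : ∃ t : ℝ, 1 ≤ t ∧ ‖x + t • (p - x)‖ = 1 then x + h.choose • (p - x) else x

open Metric Set
open scoped NNReal RealInnerProductSpace

lemma abs_sqrt_sub_sqrt_le {a b : ℝ} (ha : 1 / 4 ≤ a) (hb : 1 / 4 ≤ b) :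
    |√a - √b| ≤ |a - b| := by
  have hsa : 1 / 2 ≤ √a := Real.le_sqrt_of_sq_le (by linarith)
  have hsb : 1 / 2 ≤ √b := Real.le_sqrt_of_sq_le (by linarith)
  calc |√a - √b| ≤ |√a - √b| * (√a + √b) := le_mul_of_one_le_right (abs_nonneg _) (by linarith)
    _ = |a - b| := by
      rw [← abs_of_nonneg (by linarith : 0 ≤ √a + √b), ← abs_mul]
      congr 1
      linear_combination Real.sq_sqrt (by linarith : 0 ≤ a) - Real.sq_sqrt (by linarith : 0 ≤ b)

section RayExit

variable {E : Type*} [NormedAddCommGroup E] [InnerProductSpace ℝ E] {p u v : E}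

/-- The larger root of `t ^ 2 + 2 ⟪p, u⟫ t + ‖p‖ ^ 2 = 1`, which is `‖p + t • u‖ = 1` for a unit
`u`. -/
noncomputable def rayExitTime (p u : E) : ℝ := -⟪p, u⟫ + √(⟪p, u⟫ ^ 2 + 1 - ‖p‖ ^ 2)

noncomputable def rayExit (p u : E) : E := p + rayExitTime p u • u

lemma norm_add_smul_sq (hu : ‖u‖ = 1) (t : ℝ) :
    ‖p + t • u‖ ^ 2 = t ^ 2 + 2 * ⟪p, u⟫ * t + ‖p‖ ^ 2 := by
  rw [norm_add_sq_real, real_inner_smul_right, norm_smul, Real.norm_eq_abs, mul_pow, sq_abs, hu]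
  ring

lemma rayExitTime_nonneg (hp : ‖p‖ ≤ 1) : 0 ≤ rayExitTime p u := by
  have : |⟪p, u⟫| ≤ √(⟪p, u⟫ ^ 2 + 1 - ‖p‖ ^ 2) := by
    rw [← Real.sqrt_sq_eq_abs]
    exact Real.sqrt_le_sqrt (by nlinarith [norm_nonneg p])
  unfold rayExitTime
  linarith [le_abs_self ⟪p, u⟫]

lemma norm_rayExit (hp : ‖p‖ ≤ 1) (hu : ‖u‖ = 1) : ‖rayExit p u‖ = 1 := by
  have hsq := Real.sq_sqrt (by nlinarith [norm_nonneg p] : 0 ≤ ⟪p, u⟫ ^ 2 + 1 - ‖p‖ ^ 2)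
  have : ‖rayExit p u‖ ^ 2 = 1 := by
    rw [rayExit, norm_add_smul_sq hu, rayExitTime]
    linear_combination hsq
  exact (pow_eq_one_iff_of_nonneg (norm_nonneg _) two_ne_zero).1 this

/-- Uniqueness: the product of the two roots is `‖p‖ ^ 2 - 1 < 0`, so only one is nonnegative. -/
lemma eq_rayExitTime (hp : ‖p‖ < 1) (hu : ‖u‖ = 1) {t : ℝ} (ht : 0 ≤ t)
    (h : ‖p + t • u‖ = 1) : t = rayExitTime p u := by
  set s := rayExitTime p u
  have hs : 0 ≤ s := rayExitTime_nonneg hp.le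
  have hqs : s ^ 2 + 2 * ⟪p, u⟫ * s + ‖p‖ ^ 2 = 1 := by
    rw [← norm_add_smul_sq hu, ← rayExit, norm_rayExit hp.le hu, one_pow]
  have hqt : t ^ 2 + 2 * ⟪p, u⟫ * t + ‖p‖ ^ 2 = 1 := by
    rw [← norm_add_smul_sq hu, h, one_pow]
  have hfac : (t - s) * (t + s + 2 * ⟪p, u⟫) = 0 := by linear_combination hqt - hqs
  rcases mul_eq_zero.1 hfac with h | h
  · linarith
  · nlinarith [mul_nonneg hs ht, norm_nonneg p]

lemma rayExitTime_le (hp : ‖p‖ ≤ 1) (hu : ‖u‖ = 1) : rayExitTime p u ≤ 1 + ‖p‖ := by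
  have := norm_sub_le (rayExit p u) p
  rwa [norm_rayExit hp hu, rayExit, add_sub_cancel_left, norm_smul, hu, mul_one,
    Real.norm_of_nonneg (rayExitTime_nonneg hp)] at this

lemma abs_rayExitTime_sub_le (hp : ‖p‖ ≤ 1 / 2) (hu : ‖u‖ ≤ 1) (hv : ‖v‖ ≤ 1) :
    |rayExitTime p u - rayExitTime p v| ≤ ‖u - v‖ := by
  have hinner : ∀ w : E, ‖w‖ ≤ 1 → |⟪p, w⟫| ≤ 1 / 2 := fun w hw =>
    (abs_real_inner_le_norm p w).trans (by nlinarith [norm_nonneg p, norm_nonneg w])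
  have hrad : ∀ w : E, ‖w‖ ≤ 1 → 1 / 4 ≤ ⟪p, w⟫ ^ 2 + 1 - ‖p‖ ^ 2 := fun w _ => by
    nlinarith [sq_nonneg ⟪p, w⟫, norm_nonneg p]
  have hdiff : |⟪p, u⟫ - ⟪p, v⟫| ≤ 1 / 2 * ‖u - v‖ := by
    rw [← inner_sub_right]
    exact (abs_real_inner_le_norm _ _).trans (by nlinarith [norm_nonneg p, norm_nonneg (u - v)])
  have hsqrt : |√(⟪p, u⟫ ^ 2 + 1 - ‖p‖ ^ 2) - √(⟪p, v⟫ ^ 2 + 1 - ‖p‖ ^ 2)|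
      ≤ |⟪p, u⟫ - ⟪p, v⟫| := by
    refine (abs_sqrt_sub_sqrt_le (hrad u hu) (hrad v hv)).trans ?_
    rw [show ⟪p, u⟫ ^ 2 + 1 - ‖p‖ ^ 2 - (⟪p, v⟫ ^ 2 + 1 - ‖p‖ ^ 2)
      = (⟪p, u⟫ + ⟪p, v⟫) * (⟪p, u⟫ - ⟪p, v⟫) by ring, abs_mul]
    exact mul_le_of_le_one_left (abs_nonneg _)
      ((abs_add_le _ _).trans (by linarith [hinner u hu, hinner v hv]))
  calc |rayExitTime p u - rayExitTime p v|
      = |(√(⟪p, u⟫ ^ 2 + 1 - ‖p‖ ^ 2) - √(⟪p, v⟫ ^ 2 + 1 - ‖p‖ ^ 2)) - (⟪p, u⟫ - ⟪p, v⟫)| := by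
        rw [rayExitTime, rayExitTime]; ring_nf
    _ ≤ |√(⟪p, u⟫ ^ 2 + 1 - ‖p‖ ^ 2) - √(⟪p, v⟫ ^ 2 + 1 - ‖p‖ ^ 2)| + |⟪p, u⟫ - ⟪p, v⟫| :=
        abs_sub _ _
    _ ≤ ‖u - v‖ := by linarith

lemma lipschitzOnWith_rayExit (hp : ‖p‖ ≤ 1 / 2) : LipschitzOnWith 4 (rayExit p) (sphere 0 1) := by
  refine LipschitzOnWith.of_dist_le_mul fun u hu v hv => ?_
  rw [mem_sphere_zero_iff_norm] at hu hv
  have hp1 : ‖p‖ ≤ 1 := hp.trans (by norm_num)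
  have hsplit : rayExit p u - rayExit p v
      = (rayExitTime p u - rayExitTime p v) • u + rayExitTime p v • (u - v) := by
    simp only [rayExit, sub_smul, smul_sub]; abel
  have ht := abs_rayExitTime_sub_le hp hu.le hv.le
  have htv := rayExitTime_le hp1 hv
  rw [dist_eq_norm, dist_eq_norm, hsplit]
  calc _ ≤ |rayExitTime p u - rayExitTime p v| * ‖u‖ + |rayExitTime p v| * ‖u - v‖ := by
        rw [← Real.norm_eq_abs, ← Real.norm_eq_abs, ← norm_smul, ← norm_smul]
        exact norm_add_le _ _
    _ ≤ ‖u - v‖ * 1 + (1 + 1 / 2) * ‖u - v‖ := by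
        rw [hu, abs_of_nonneg (rayExitTime_nonneg hp1)]
        gcongr; linarith
    _ ≤ _ := by push_cast; nlinarith [norm_nonneg (u - v)]

end RayExit

lemma lipschitzOnWith_inv_norm_smul {F : Type*} [NormedAddCommGroup F] [NormedSpace ℝ F]
    {r : ℝ≥0} (hr : 0 < r) : LipschitzOnWith (2 / r) (fun y : F => ‖y‖⁻¹ • y) {y | r ≤ ‖y‖} := by
  refine LipschitzOnWith.of_dist_le_mul fun y (hy : r ≤ ‖y‖) z (hz : r ≤ ‖z‖) => ?_
  have hr' : (0 : ℝ) < r := hr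
  have hy0 : 0 < ‖y‖ := hr'.trans_le hy
  have hz0 : 0 < ‖z‖ := hr'.trans_le hz
  have hsplit : ‖y‖⁻¹ • y - ‖z‖⁻¹ • z = ‖y‖⁻¹ • ((y - z) + ((‖z‖ - ‖y‖) / ‖z‖) • z) := by
    match_scalars
    · field_simp
    · field_simp; ring
  have hnum : ‖(y - z) + ((‖z‖ - ‖y‖) / ‖z‖) • z‖ ≤ 2 * ‖y - z‖ := by
    refine (norm_add_le _ _).trans ?_
    rw [norm_smul, Real.norm_eq_abs, abs_div, abs_of_pos hz0, div_mul_cancel₀ _ hz0.ne']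
    linarith [abs_norm_sub_norm_le z y, norm_sub_rev z y]
  calc dist (‖y‖⁻¹ • y) (‖z‖⁻¹ • z) = ‖y‖⁻¹ * ‖(y - z) + ((‖z‖ - ‖y‖) / ‖z‖) • z‖ := by
        rw [dist_eq_norm, hsplit, norm_smul, norm_inv, norm_norm]
    _ ≤ (r : ℝ)⁻¹ * (2 * ‖y - z‖) := by gcongr
    _ = (2 / r : ℝ≥0) * dist y z := by rw [dist_eq_norm]; push_cast; ring

section RayProj

variable {n : ℕ} {p x : EuclideanSpace ℝ (Fin n)}

lemma rayProj_eq_rayExit (hp : ‖p‖ < 1) (hxp : x ≠ p) :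
    rayProj p x = rayExit p (‖p - x‖⁻¹ • (p - x)) := by
  have hd : 0 < ‖p - x‖ := norm_pos_iff.2 (sub_ne_zero.2 hxp.symm)
  set u := ‖p - x‖⁻¹ • (p - x)
  have hu : ‖u‖ = 1 := by rw [norm_smul, norm_inv, norm_norm, inv_mul_cancel₀ hd.ne']
  have hray : ∀ t : ℝ, x + t • (p - x) = p + ((t - 1) * ‖p - x‖) • u := fun t => by
    simp only [u, smul_smul]
    match_scalars <;> field_simp <;> ring
  have hex : ∃ t : ℝ, 1 ≤ t ∧ ‖x + t • (p - x)‖ = 1 := by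
    refine ⟨1 + rayExitTime p u / ‖p - x‖,
      le_add_of_nonneg_right (div_nonneg (rayExitTime_nonneg hp.le) hd.le), ?_⟩
    rw [hray, add_sub_cancel_left, div_mul_cancel₀ _ hd.ne']
    exact norm_rayExit hp.le hu
  obtain ⟨ht, hnorm⟩ := hex.choose_spec
  rw [rayProj, dif_pos hex, hray, rayExit,
    eq_rayExitTime hp hu (mul_nonneg (by linarith) hd.le) (by rwa [← hray])]

lemma lipschitzOnWith_rayProj (hp : ‖p‖ ≤ 1 / 2) {r : ℝ≥0} (hr : 0 < r) :
    LipschitzOnWith (8 / r) (rayProj p) {x | r ≤ dist x p} := by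
  have hsub : LipschitzWith 1 (fun x : EuclideanSpace ℝ (Fin n) => p - x) :=
    LipschitzWith.of_dist_le_mul fun x y => by rw [dist_sub_left, dist_comm]; simp
  have hnormalize : LipschitzOnWith (2 / r * 1)
      (fun x => ‖p - x‖⁻¹ • (p - x)) {x | r ≤ dist x p} :=
    (lipschitzOnWith_inv_norm_smul hr).comp hsub.lipschitzOnWith
      fun x (hx : r ≤ dist x p) => show r ≤ ‖p - x‖ by rwa [← dist_eq_norm, dist_comm]
  have hcomp := (lipschitzOnWith_rayExit hp).comp hnormalize fun x (hx : r ≤ dist x p) => by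
    have : ‖p - x‖ ≠ 0 := by
      rw [← dist_eq_norm, dist_comm]; exact ((NNReal.coe_pos.2 hr).trans_le hx).ne'
    rw [mem_sphere_zero_iff_norm, norm_smul, norm_inv, norm_norm, inv_mul_cancel₀ this]
  have hne : ∀ x ∈ {x | r ≤ dist x p}, x ≠ p := fun x (hx : r ≤ dist x p) h => by
    rw [h, dist_self] at hx; exact hr.not_ge (by exact_mod_cast hx)
  intro x hx y hy
  rw [rayProj_eq_rayExit (hp.trans_lt (by norm_num)) (hne x hx),
    rayProj_eq_rayExit (hp.trans_lt (by norm_num)) (hne y hy),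
    show (8 / r : ℝ≥0) = 4 * (2 / r * 1) by ring]
  exact hcomp hx hy

end RayProj

section Averaging

variable {E : Type*} [NormedAddCommGroup E] [MeasurableSpace E] [BorelSpace E]
  [SecondCountableTopology E]

lemma measurableSet_dist_le (r : ℝ) : MeasurableSet {q : E × E | dist q.2 q.1 ≤ r} :=
  (isClosed_le (continuous_snd.dist continuous_fst) continuous_const).measurableSet

lemma measurable_measure_closedBall (ρ : Measure E) [SFinite ρ] (r : ℝ) :
    Measurable fun p => ρ (closedBall p r) :=
  measurable_measure_prodMk_left (measurableSet_dist_le r)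

lemma lintegral_measure_closedBall (μ ρ : Measure E) [μ.IsAddHaarMeasure] [SFinite μ] [SFinite ρ]
    (r : ℝ) :
    ∫⁻ p, ρ (closedBall p r) ∂μ = μ (closedBall 0 r) * ρ univ := by
  calc ∫⁻ p, ρ (closedBall p r) ∂μ = μ.prod ρ {q | dist q.2 q.1 ≤ r} :=
        (Measure.prod_apply (measurableSet_dist_le r)).symm
    _ = ∫⁻ x, μ (closedBall x r) ∂ρ := by
        rw [Measure.prod_apply_symm (measurableSet_dist_le r)]
        simp_rw [dist_comm]
        rfl
    _ = μ (closedBall 0 r) * ρ univ := by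
        simp_rw [Measure.addHaar_closedBall_center]
        exact lintegral_const _

end Averaging

lemma eight_div_pow_mul_two_mul_pow_eq {k n : ℕ} (hkn : k ≤ n) (j : ℕ) :
    (8 / 2⁻¹ ^ j : ℝ≥0) ^ k * (2 * 2⁻¹ ^ j) ^ n = 8 ^ k * 2 ^ n * (2⁻¹ ^ (n - k)) ^ j := by
  obtain ⟨m, rfl⟩ := Nat.exists_eq_add_of_le hkn
  rw [Nat.add_sub_cancel_left, ← pow_mul, mul_comm m j, pow_mul]
  have ha : (2⁻¹ : ℝ≥0) ^ j ≠ 0 := by positivity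
  generalize (2⁻¹ : ℝ≥0) ^ j = a at ha ⊢
  rw [div_pow, div_mul_eq_mul_div, div_eq_iff (pow_ne_zero k ha)]
  ring

lemma lintegral_mul_measure_closedBall_two_inv_pow {E : Type*} [NormedAddCommGroup E]
    [NormedSpace ℝ E] [MeasurableSpace E] [BorelSpace E] [FiniteDimensional ℝ E]
    (μ ρ : Measure E) [μ.IsAddHaarMeasure] [SFinite ρ] {k : ℕ} (hk : k ≤ Module.finrank ℝ E)
    (j : ℕ) :
    ∫⁻ p, ((8 / 2⁻¹ ^ j) ^ k : ℝ≥0) * ρ (closedBall p (2 * 2⁻¹ ^ j : ℝ≥0)) ∂μ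
      = (8 ^ k * 2 ^ Module.finrank ℝ E : ℝ≥0) * μ (closedBall 0 1) * ρ univ
        * ((2⁻¹ ^ (Module.finrank ℝ E - k) : ℝ≥0) : ℝ≥0∞) ^ j := by
  rw [lintegral_const_mul _ (measurable_measure_closedBall ρ _), lintegral_measure_closedBall,
    Measure.addHaar_closedBall' μ 0 NNReal.zero_le_coe, ← NNReal.coe_pow, ofReal_coe_nnreal,
    ← mul_assoc, ← mul_assoc, ← ENNReal.coe_mul, eight_div_pow_mul_two_mul_pow_eq hk]
  push_cast
  ring

lemma exists_two_inv_pow_lt_le {d : ℝ} (h0 : 0 < d) (h2 : d ≤ 2) :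
    ∃ j : ℕ, ((2⁻¹ ^ j : ℝ≥0) : ℝ) < d ∧ d ≤ ((2 * 2⁻¹ ^ j : ℝ≥0) : ℝ) := by
  obtain ⟨j, hlt, hle⟩ := exists_nat_pow_near_of_lt_one (half_pos h0) (by linarith)
    (by norm_num : (0 : ℝ) < 2⁻¹) (by norm_num)
  refine ⟨j, ?_, ?_⟩ <;> push_cast
  · rw [pow_succ] at hlt; linarith
  · linarith

lemma hausdorffMeasure_image_rayProj_le {n k : ℕ} {p : EuclideanSpace ℝ (Fin n)}
    (hp : ‖p‖ ≤ 1 / 2) {c : Set (EuclideanSpace ℝ (Fin n))} (hc : c ⊆ closedBall 0 1) :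
    μH[k] (rayProj p '' c) ≤ μH[k] c + ∑' j : ℕ,
      ((8 / 2⁻¹ ^ j) ^ k : ℝ≥0) * μH[k].restrict c (closedBall p (2 * 2⁻¹ ^ j : ℝ≥0)) := by
  set A : ℕ → Set (EuclideanSpace ℝ (Fin n)) := fun j =>
    c ∩ {x | (2⁻¹ ^ j : ℝ≥0) < dist x p} ∩ closedBall p (2 * 2⁻¹ ^ j : ℝ≥0)
  have hcover : c ⊆ (c ∩ {p}) ∪ ⋃ j, A j := by
    intro x hx
    rcases eq_or_ne x p with rfl | hxp
    · exact Or.inl ⟨hx, rfl⟩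
    have hdist : dist x p ≤ 2 := by
      have := mem_closedBall_zero_iff.1 (hc hx)
      linarith [dist_le_norm_add_norm x p]
    obtain ⟨j, hlt, hle⟩ := exists_two_inv_pow_lt_le (dist_pos.2 hxp) hdist
    exact Or.inr (mem_iUnion.2 ⟨j, ⟨hx, hlt⟩, hle⟩)
  have hpoint : μH[k] (rayProj p '' (c ∩ {p})) ≤ μH[k] c := by
    have hlip : LipschitzOnWith 1 (rayProj p) (c ∩ {p}) := fun x hx y hy => by
      rw [(subsingleton_singleton.anti inter_subset_right) hx hy, edist_self]
      exact zero_le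
    calc _ ≤ (1 : ℝ≥0) ^ (k : ℝ) * μH[k] (c ∩ {p}) := hlip.hausdorffMeasure_image_le k.cast_nonneg
      _ ≤ μH[k] c := by simpa using measure_mono inter_subset_left
  have hpiece (j : ℕ) : μH[k] (rayProj p '' A j)
      ≤ ((8 / 2⁻¹ ^ j) ^ k : ℝ≥0) * μH[k].restrict c (closedBall p (2 * 2⁻¹ ^ j : ℝ≥0)) := by
    have hlip := (lipschitzOnWith_rayProj hp (r := 2⁻¹ ^ j) (by positivity)).mono
      fun x (hx : x ∈ A j) => show ((2⁻¹ ^ j : ℝ≥0) : ℝ) ≤ dist x p from hx.1.2.le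
    refine (hlip.hausdorffMeasure_image_le k.cast_nonneg).trans ?_
    rw [ENNReal.rpow_natCast, ← ENNReal.coe_pow, Measure.restrict_apply measurableSet_closedBall]
    gcongr
    exact fun x hx => ⟨hx.2, hx.1.1⟩
  calc μH[k] (rayProj p '' c)
      ≤ μH[k] (rayProj p '' (c ∩ {p}) ∪ ⋃ j, rayProj p '' A j) := by
        rw [← image_iUnion, ← image_union]; exact measure_mono (image_mono hcover)
    _ ≤ μH[k] (rayProj p '' (c ∩ {p})) + ∑' j, μH[k] (rayProj p '' A j) :=
        (measure_union_le _ _).trans (add_le_add_right (measure_iUnion_le _) _)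
    _ ≤ _ := add_le_add hpoint (ENNReal.tsum_le_tsum hpiece)

/-- Pushing a `k`-chain in the unit ball to the boundary sphere: the expectation,
over `p` chosen uniformly in the ball of radius `1/2`, of the `k`-area of the
radial-ray projection `f_p(c)` is bounded by a constant `C(n,k)` times the
`k`-area of `c`. -/
theorem stmt_12 (n k : ℕ) (hk : k < n) :
    ∃ C : ℝ≥0∞, C ≠ ⊤ ∧
      ∀ c : Set (EuclideanSpace ℝ (Fin n)), MeasurableSet c →
        c ⊆ Metric.closedBall 0 1 →
        (∫⁻ p in Metric.ball (0 : EuclideanSpace ℝ (Fin n)) (1 / 2),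
            μH[(k : ℝ)] ((fun x => rayProj p x) '' c)) ≤ C * μH[(k : ℝ)] c := by
  set B := ball (0 : EuclideanSpace ℝ (Fin n)) (1 / 2)
  set q : ℝ≥0 := 2⁻¹ ^ (n - k)
  set A : ℝ≥0∞ := (8 ^ k * 2 ^ n : ℝ≥0) * volume (closedBall (0 : EuclideanSpace ℝ (Fin n)) 1)
  have hq : q < 1 := pow_lt_one₀ (by norm_num) (by norm_num) (by omega)
  have hB : volume B ≠ 0 := (measure_ball_pos _ _ (by norm_num)).ne'
  refine ⟨volume B + A * ∑' j : ℕ, (q : ℝ≥0∞) ^ j, ?_, fun c _ hc => ?_⟩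
  · exact add_ne_top.2 ⟨measure_ball_lt_top.ne, mul_ne_top
      (mul_ne_top coe_ne_top measure_closedBall_lt_top.ne)
      (tsum_geometric_lt_top.2 (by exact_mod_cast hq)).ne⟩
  by_cases hfin : μH[(k : ℝ)] c = ∞
  · simp [hfin, hB]
  have : IsFiniteMeasure (μH[(k : ℝ)].restrict c) :=
    ⟨by rwa [Measure.restrict_apply_univ, lt_top_iff_ne_top]⟩
  calc ∫⁻ p in B, μH[(k : ℝ)] (rayProj p '' c)
      ≤ ∫⁻ p in B, (μH[(k : ℝ)] c + ∑' j : ℕ, ((8 / 2⁻¹ ^ j) ^ k : ℝ≥0) *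
          μH[(k : ℝ)].restrict c (closedBall p (2 * 2⁻¹ ^ j : ℝ≥0))) :=
        setLIntegral_mono' measurableSet_ball fun p hp =>
          hausdorffMeasure_image_rayProj_le (mem_ball_zero_iff.1 hp).le hc
    _ ≤ volume B * μH[(k : ℝ)] c + ∑' j : ℕ, A * μH[(k : ℝ)] c * (q : ℝ≥0∞) ^ j := by
        rw [lintegral_add_left measurable_const, setLIntegral_const, mul_comm,
          lintegral_tsum fun j => ((measurable_measure_closedBall _ _).const_mul _).aemeasurable]
        gcongr with j
        refine (setLIntegral_le_lintegral _ _).trans_eq ?_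
        rw [lintegral_mul_measure_closedBall_two_inv_pow _ _ (by simpa using hk.le),
          Measure.restrict_apply_univ, finrank_euclideanSpace_fin]
    _ = (volume B + A * ∑' j : ℕ, (q : ℝ≥0∞) ^ j) * μH[(k : ℝ)] c := by
        rw [ENNReal.tsum_mul_left]; ring
end

section
/- Let σ be a k-dimensional simplex of area dA contained in the unit ball B^n, and let x ∈ B^n be a point at distance r from σ with r > 0 and at distance at least 1/2 from ∂B^n. Then the area of the radial shadow of σ on S^{n−1} cast by rays from x through points of σ is at most C(n,k)·dA/r^k for a constant C(n,k). -/
/-!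
The radial projection from `x` is `y ↦ (y - x) / ‖y - x‖`, which is `2 / r`-Lipschitz on points at
distance at least `r` from `x`, followed by the exit point `e ↦ x + s(e) • e` of the unit ball in
the direction `e`. For `‖x‖ ≤ 1` the exit time `s(e)` is at most `2` and is `2`-Lipschitz in `e`
(it is `-⟪x, e⟫` plus a `1`-Lipschitz function of `⟪x, e⟫`), so the exit point is `4`-Lipschitz.
Hence the projection is `8 / r`-Lipschitz on the simplex, and a `K`-Lipschitz map increases
`k`-dimensional Hausdorff measure by at most the factor `K ^ k`.
-/

open MeasureTheory ENNReal
open scoped Classical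

open scoped RealInnerProductSpace

lemma abs_sqrt_sq_add_sub_sqrt_sq_add_le (a b : ℝ) {c : ℝ} (hc : 0 ≤ c) :
    |√(a ^ 2 + c) - √(b ^ 2 + c)| ≤ |a - b| := by
  have hnorm : ∀ a : ℝ, √(a ^ 2 + c) = ‖(⟨a, √c⟩ : ℂ)‖ := fun a => by
    rw [Complex.norm_def, Complex.normSq_mk, Real.mul_self_sqrt hc, sq]
  have hdiff : (⟨a, √c⟩ : ℂ) - ⟨b, √c⟩ = ((a - b : ℝ) : ℂ) := by
    apply Complex.ext <;> simp
  calc |√(a ^ 2 + c) - √(b ^ 2 + c)| ≤ ‖(⟨a, √c⟩ : ℂ) - ⟨b, √c⟩‖ := by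
        rw [hnorm, hnorm]; exact abs_norm_sub_norm_le _ _
    _ = |a - b| := by rw [hdiff, Complex.norm_real, Real.norm_eq_abs]

lemma norm_inv_norm_smul_sub_inv_norm_smul_le {F : Type*} [NormedAddCommGroup F]
    [NormedSpace ℝ F] {a : F} (ha : a ≠ 0) (b : F) :
    ‖‖a‖⁻¹ • a - ‖b‖⁻¹ • b‖ ≤ 2 / ‖a‖ * ‖a - b‖ := by
  have hA : 0 < ‖a‖ := norm_pos_iff.2 ha
  have hsplit : ‖a‖⁻¹ • a - ‖b‖⁻¹ • b = ‖a‖⁻¹ • (a - b) + (‖a‖⁻¹ - ‖b‖⁻¹) • b := by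
    rw [smul_sub, sub_smul]; abel
  have hscale : ‖(‖a‖⁻¹ - ‖b‖⁻¹) • b‖ ≤ ‖a - b‖ / ‖a‖ := by
    rcases eq_or_ne b 0 with rfl | hb
    · simp only [smul_zero, norm_zero]; positivity
    have hB : 0 < ‖b‖ := norm_pos_iff.2 hb
    have : (‖a‖⁻¹ - ‖b‖⁻¹) * ‖b‖ = (‖b‖ - ‖a‖) / ‖a‖ := by field_simp
    rw [norm_smul, Real.norm_eq_abs, ← abs_of_pos hB, ← abs_mul, abs_of_pos hB, this, abs_div,
      abs_of_pos hA, abs_sub_comm]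
    gcongr
    exact abs_norm_sub_norm_le a b
  calc ‖‖a‖⁻¹ • a - ‖b‖⁻¹ • b‖
      ≤ ‖‖a‖⁻¹ • (a - b)‖ + ‖(‖a‖⁻¹ - ‖b‖⁻¹) • b‖ := hsplit ▸ norm_add_le _ _
    _ ≤ ‖a‖⁻¹ * ‖a - b‖ + ‖a - b‖ / ‖a‖ := by
        rw [norm_smul, Real.norm_of_nonneg (inv_nonneg.2 hA.le)]; gcongr
    _ = 2 / ‖a‖ * ‖a - b‖ := by ring

section ExitTime

variable {E : Type*} [NormedAddCommGroup E] [InnerProductSpace ℝ E] {x e : E}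

/-- For `‖x‖ ≤ 1` and a unit vector `e`, the nonnegative root `t` of `‖x + t • e‖ = 1`,
i.e. the time at which the ray `t ↦ x + t • e` leaves the closed unit ball. -/
noncomputable def exitTime (x e : E) : ℝ :=
  -⟪x, e⟫ + √(⟪x, e⟫ ^ 2 + (1 - ‖x‖ ^ 2))

noncomputable def exitPoint (x e : E) : E :=
  x + exitTime x e • e

lemma abs_inner_le_sqrt (hx : ‖x‖ ≤ 1) (e : E) : |⟪x, e⟫| ≤ √(⟪x, e⟫ ^ 2 + (1 - ‖x‖ ^ 2)) :=
  Real.abs_le_sqrt (by nlinarith [norm_nonneg x])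

lemma abs_inner_lt_sqrt (hx : ‖x‖ < 1) (e : E) : |⟪x, e⟫| < √(⟪x, e⟫ ^ 2 + (1 - ‖x‖ ^ 2)) := by
  rw [← Real.sqrt_sq_eq_abs]
  exact Real.sqrt_lt_sqrt (sq_nonneg _) (by nlinarith [norm_nonneg x])

lemma exitTime_nonneg (hx : ‖x‖ ≤ 1) (e : E) : 0 ≤ exitTime x e := by
  have := abs_inner_le_sqrt hx e
  unfold exitTime
  linarith [le_abs_self ⟪x, e⟫]

lemma one_sub_norm_add_smul_sq (hx : ‖x‖ ≤ 1) (he : ‖e‖ = 1) (t : ℝ) :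
    1 - ‖x + t • e‖ ^ 2 = (exitTime x e - t) * (t + ⟪x, e⟫ + √(⟪x, e⟫ ^ 2 + (1 - ‖x‖ ^ 2))) := by
  have hsq := Real.sq_sqrt (show 0 ≤ ⟪x, e⟫ ^ 2 + (1 - ‖x‖ ^ 2) by nlinarith [norm_nonneg x])
  rw [norm_add_sq_real, inner_smul_right, norm_smul, Real.norm_eq_abs, he, mul_one, sq_abs,
    exitTime]
  linear_combination -hsq

lemma norm_exitPoint (hx : ‖x‖ ≤ 1) (he : ‖e‖ = 1) : ‖exitPoint x e‖ = 1 := by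
  have := one_sub_norm_add_smul_sq hx he (exitTime x e)
  rwa [sub_self, zero_mul, sub_eq_zero, eq_comm,
    pow_eq_one_iff_of_nonneg (norm_nonneg _) two_ne_zero] at this

lemma exitTime_le (hx : ‖x‖ ≤ 1) (he : ‖e‖ = 1) : exitTime x e ≤ 1 + ‖x‖ :=
  calc exitTime x e = ‖exitTime x e • e‖ := by
        rw [norm_smul, he, mul_one, Real.norm_of_nonneg (exitTime_nonneg hx e)]
    _ = ‖exitPoint x e - x‖ := by rw [exitPoint, add_sub_cancel_left]
    _ ≤ ‖exitPoint x e‖ + ‖x‖ := norm_sub_le _ _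
    _ = 1 + ‖x‖ := by rw [norm_exitPoint hx he]

lemma add_inner_add_sqrt_pos (hx : ‖x‖ < 1) {t : ℝ} (ht : 0 ≤ t) :
    0 < t + ⟪x, e⟫ + √(⟪x, e⟫ ^ 2 + (1 - ‖x‖ ^ 2)) := by
  linarith [abs_inner_lt_sqrt hx e, neg_abs_le ⟪x, e⟫]

lemma norm_add_smul_le_one_iff (hx : ‖x‖ < 1) (he : ‖e‖ = 1) {t : ℝ} (ht : 0 ≤ t) :
    ‖x + t • e‖ ≤ 1 ↔ t ≤ exitTime x e := by
  rw [← sq_le_one_iff₀ (norm_nonneg _), ← sub_nonneg, one_sub_norm_add_smul_sq hx.le he,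
    mul_nonneg_iff_of_pos_right (add_inner_add_sqrt_pos hx ht), sub_nonneg]

lemma norm_add_smul_eq_one_iff (hx : ‖x‖ < 1) (he : ‖e‖ = 1) {t : ℝ} (ht : 0 ≤ t) :
    ‖x + t • e‖ = 1 ↔ t = exitTime x e := by
  rw [← pow_eq_one_iff_of_nonneg (norm_nonneg _) two_ne_zero, eq_comm, ← sub_eq_zero,
    one_sub_norm_add_smul_sq hx.le he, mul_eq_zero_iff_right (add_inner_add_sqrt_pos hx ht).ne',
    sub_eq_zero, eq_comm]

lemma abs_exitTime_sub_exitTime_le (hx : ‖x‖ ≤ 1) (e₁ e₂ : E) :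
    |exitTime x e₁ - exitTime x e₂| ≤ 2 * ‖x‖ * ‖e₁ - e₂‖ := by
  have hinner : |⟪x, e₁⟫ - ⟪x, e₂⟫| ≤ ‖x‖ * ‖e₁ - e₂‖ := by
    rw [← inner_sub_right]; exact abs_real_inner_le_norm _ _
  have hsqrt := abs_sqrt_sq_add_sub_sqrt_sq_add_le ⟪x, e₁⟫ ⟪x, e₂⟫
    (show 0 ≤ 1 - ‖x‖ ^ 2 by nlinarith [norm_nonneg x])
  calc |exitTime x e₁ - exitTime x e₂|
      = |(⟪x, e₂⟫ - ⟪x, e₁⟫)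
          + (√(⟪x, e₁⟫ ^ 2 + (1 - ‖x‖ ^ 2)) - √(⟪x, e₂⟫ ^ 2 + (1 - ‖x‖ ^ 2)))| := by
        rw [exitTime, exitTime]; ring_nf
    _ ≤ |⟪x, e₁⟫ - ⟪x, e₂⟫| + |⟪x, e₁⟫ - ⟪x, e₂⟫| :=
        (abs_add_le _ _).trans (by rw [abs_sub_comm]; linarith)
    _ ≤ 2 * ‖x‖ * ‖e₁ - e₂‖ := by linarith

lemma norm_exitPoint_sub_exitPoint_le (hx : ‖x‖ ≤ 1) {e₁ e₂ : E} (he₁ : ‖e₁‖ = 1)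
    (he₂ : ‖e₂‖ = 1) : ‖exitPoint x e₁ - exitPoint x e₂‖ ≤ 4 * ‖e₁ - e₂‖ := by
  have hsplit : exitPoint x e₁ - exitPoint x e₂
      = exitTime x e₁ • (e₁ - e₂) + (exitTime x e₁ - exitTime x e₂) • e₂ := by
    rw [exitPoint, exitPoint, smul_sub, sub_smul]; abel
  have htime := exitTime_le hx he₁
  have hlip := abs_exitTime_sub_exitTime_le hx e₁ e₂
  rw [hsplit]
  calc ‖exitTime x e₁ • (e₁ - e₂) + (exitTime x e₁ - exitTime x e₂) • e₂‖
      ≤ exitTime x e₁ * ‖e₁ - e₂‖ + |exitTime x e₁ - exitTime x e₂| := by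
        refine (norm_add_le _ _).trans_eq ?_
        rw [norm_smul, norm_smul, he₂, mul_one, Real.norm_eq_abs, Real.norm_eq_abs,
          abs_of_nonneg (exitTime_nonneg hx e₁)]
    _ ≤ 2 * ‖e₁ - e₂‖ + 2 * ‖e₁ - e₂‖ := by
        gcongr
        · linarith
        · nlinarith [norm_nonneg (e₁ - e₂)]
    _ = 4 * ‖e₁ - e₂‖ := by ring

noncomputable def radialProjection (x y : E) : E :=
  exitPoint x (‖y - x‖⁻¹ • (y - x))

lemma dist_radialProjection_le (hx : ‖x‖ ≤ 1) {r : ℝ} (hr : 0 < r) {y₁ y₂ : E}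
    (h₁ : r ≤ ‖y₁ - x‖) (h₂ : r ≤ ‖y₂ - x‖) :
    dist (radialProjection x y₁) (radialProjection x y₂) ≤ 8 / r * dist y₁ y₂ := by
  have hne : ∀ {y : E}, r ≤ ‖y - x‖ → y - x ≠ 0 := fun h => norm_pos_iff.1 (hr.trans_le h)
  have hnorm : ∀ {y : E}, r ≤ ‖y - x‖ → ‖‖y - x‖⁻¹ • (y - x)‖ = 1 := fun h => by
    rw [norm_smul, norm_inv, norm_norm, inv_mul_cancel₀ (norm_ne_zero_iff.2 (hne h))]
  have hunit := norm_inv_norm_smul_sub_inv_norm_smul_le (hne h₁) (y₂ - x)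
  rw [sub_sub_sub_cancel_right] at hunit
  rw [dist_eq_norm, dist_eq_norm]
  calc ‖radialProjection x y₁ - radialProjection x y₂‖
      ≤ 4 * (2 / ‖y₁ - x‖ * ‖y₁ - y₂‖) :=
        (norm_exitPoint_sub_exitPoint_le hx (hnorm h₁) (hnorm h₂)).trans (by gcongr)
    _ = 8 / ‖y₁ - x‖ * ‖y₁ - y₂‖ := by ring
    _ ≤ 8 / r * ‖y₁ - y₂‖ := by gcongr

lemma lipschitzOnWith_radialProjection (hx : ‖x‖ ≤ 1) {r : ℝ} (hr : 0 < r) :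
    LipschitzOnWith (8 / r).toNNReal (radialProjection x) {y | r ≤ ‖y - x‖} :=
  LipschitzOnWith.of_dist_le_mul fun _ h₁ _ h₂ => by
    rw [Real.coe_toNNReal _ (by positivity)]
    exact dist_radialProjection_le hx hr h₁ h₂

end ExitTime

section RayProj

variable {n : ℕ} {x y : EuclideanSpace ℝ (Fin n)}

lemma rayProj_eq_radialProjection (hx : ‖x‖ < 1) (hy : ‖y‖ ≤ 1) (hyx : y ≠ x) :
    rayProj y x = radialProjection x y := by
  set m := ‖y - x‖
  set e := m⁻¹ • (y - x)
  have hm : 0 < m := norm_pos_iff.2 (sub_ne_zero.2 hyx)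
  have he : ‖e‖ = 1 := by rw [norm_smul, norm_inv, norm_norm, inv_mul_cancel₀ hm.ne']
  have hrescale : ∀ t : ℝ, t • (y - x) = (t * m) • e := fun t => by
    rw [smul_smul, mul_assoc, mul_inv_cancel₀ hm.ne', mul_one]
  have hm_le : m ≤ exitTime x e := by
    rw [← norm_add_smul_le_one_iff hx he hm.le, ← one_mul m, ← hrescale, one_smul,
      add_sub_cancel]
    exact hy
  have hex : ∃ t : ℝ, 1 ≤ t ∧ ‖x + t • (y - x)‖ = 1 := by
    refine ⟨exitTime x e / m, (one_le_div hm).2 hm_le, ?_⟩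
    rw [hrescale, div_mul_cancel₀ _ hm.ne']
    exact norm_exitPoint hx.le he
  obtain ⟨ht, hnorm⟩ := hex.choose_spec
  rw [hrescale] at hnorm
  have hexit := (norm_add_smul_eq_one_iff hx he (by positivity)).1 hnorm
  rw [rayProj, dif_pos hex, hrescale, hexit]
  rfl

theorem hausdorffMeasure_image_rayProj_mul_le {s : Set (EuclideanSpace ℝ (Fin n))}
    (hx : ‖x‖ < 1) (hs : ∀ y ∈ s, ‖y‖ ≤ 1) {r : ℝ} (hr : 0 < r) (hsr : ∀ y ∈ s, r ≤ ‖y - x‖)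
    {d : ℝ} (hd : 0 ≤ d) :
    μH[d] ((fun y => rayProj y x) '' s) * ENNReal.ofReal (r ^ d) ≤
      ENNReal.ofReal (8 ^ d) * μH[d] s := by
  have himage : (fun y => rayProj y x) '' s = radialProjection x '' s :=
    Set.image_congr fun y hy => rayProj_eq_radialProjection hx (hs y hy) fun hyx => by
      have := hsr y hy
      rw [hyx, sub_self, norm_zero] at this
      exact hr.not_ge this
  have hlip := ((lipschitzOnWith_radialProjection hx.le hr).mono hsr).hausdorffMeasure_image_le hd
  calc μH[d] ((fun y => rayProj y x) '' s) * ENNReal.ofReal (r ^ d)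
      ≤ ENNReal.ofReal (8 / r) ^ d * μH[d] s * ENNReal.ofReal (r ^ d) := by
        rw [himage]; exact mul_le_mul_left hlip _
    _ = ENNReal.ofReal (8 ^ d) * μH[d] s := by
        rw [ENNReal.ofReal_rpow_of_nonneg (by positivity) hd, mul_right_comm,
          ← ENNReal.ofReal_mul (by positivity), Real.div_rpow (by norm_num) hr.le,
          div_mul_cancel₀ _ (Real.rpow_pos_of_pos hr d).ne']

end RayProj

theorem stmt_13_general (n k : ℕ) :
    ∃ C : ℝ, 0 < C ∧
      ∀ (v : Fin (k + 1) → EuclideanSpace ℝ (Fin n))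
        (x : EuclideanSpace ℝ (Fin n)) (r : ℝ),
        (∀ i, v i ∈ Metric.closedBall (0 : EuclideanSpace ℝ (Fin n)) 1) →
        x ∈ Metric.closedBall (0 : EuclideanSpace ℝ (Fin n)) (1 / 2) →
        0 < r → Metric.infDist x (convexHull ℝ (Set.range v)) = r →
        μH[(k : ℝ)] ((fun y => rayProj y x) '' convexHull ℝ (Set.range v)) *
            ENNReal.ofReal (r ^ k) ≤
          ENNReal.ofReal C * μH[(k : ℝ)] (convexHull ℝ (Set.range v)) := by
  refine ⟨8 ^ k, by positivity, fun v x r hv hx hr hdist => ?_⟩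
  have hσ : convexHull ℝ (Set.range v) ⊆ Metric.closedBall 0 1 :=
    convexHull_min (Set.range_subset_iff.2 hv) (convex_closedBall 0 1)
  have hx' : ‖x‖ < 1 := by
    rw [mem_closedBall_zero_iff] at hx; linarith
  have hfar : ∀ y ∈ convexHull ℝ (Set.range v), r ≤ ‖y - x‖ := fun y hy => by
    rw [← hdist, ← dist_eq_norm, dist_comm]
    exact Metric.infDist_le_dist_of_mem hy
  simpa only [Real.rpow_natCast] using hausdorffMeasure_image_rayProj_mul_le hx'
    (fun y hy => mem_closedBall_zero_iff.1 (hσ hy)) hr hfar (Nat.cast_nonneg k)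

/-- The radial shadow on the unit sphere of a `k`-simplex `σ` in the unit ball,
cast by rays from a point `x` at distance `r > 0` from `σ` and at distance at least
`1/2` from the boundary sphere, has `k`-area at most `C(n,k) · area(σ) / r^k`. -/
theorem stmt_13 (n k : ℕ) (hk : k ≤ n) :
    ∃ C : ℝ, 0 < C ∧
      ∀ (v : Fin (k + 1) → EuclideanSpace ℝ (Fin n))
        (x : EuclideanSpace ℝ (Fin n)) (r : ℝ),
        (∀ i, v i ∈ Metric.closedBall (0 : EuclideanSpace ℝ (Fin n)) 1) →
        x ∈ Metric.closedBall (0 : EuclideanSpace ℝ (Fin n)) (1 / 2) →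
        0 < r → Metric.infDist x (convexHull ℝ (Set.range v)) = r →
        μH[(k : ℝ)] ((fun y => rayProj y x) '' convexHull ℝ (Set.range v)) *
            ENNReal.ofReal (r ^ k) ≤
          ENNReal.ofReal C * μH[(k : ℝ)] (convexHull ℝ (Set.range v)) :=
  stmt_13_general n k
end

section
/- Let γ be a great (totally geodesic) j-sphere inside the round n-sphere S^n, and let s ∈ S^n be any point not on γ. Then the visual image of γ from s — i.e., the image of γ under the map sending each point x ∈ γ to the unit tangent vector at s of the minimizing geodesic from s to x — is a great j-sphere in the visual sphere S_s^{n−1}, and it has the same j-area as γ. -/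
/-!
For a unit vector `s`, `visual s x` is the normalization of `P x`, where `P` is the orthogonal
projection onto `sᗮ`, the tangent space at `s`. Since `s ∉ W` and `ker P = ℝ ∙ s`, `P` is injective
on `W`; hence normalizing `P` maps the unit sphere of `W` onto the unit sphere of the subspace
`P W ⊆ sᗮ` of the same dimension. Unit spheres of subspaces of equal dimension are carried onto each
other by a linear isometry between the subspaces, so they have the same Hausdorff measure.
-/

open MeasureTheory

/-- Visual map of the round sphere `S^n ⊂ ℝ^{n+1}` from a point `s`: the point
`x ≠ ±s` is sent to the initial unit tangent direction at `s` of the minimizing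
geodesic from `s` to `x`, namely the normalization of `x − ⟪s,x⟫ s`. -/
noncomputable def visual {n : ℕ} (s x : EuclideanSpace ℝ (Fin (n + 1))) :
    EuclideanSpace ℝ (Fin (n + 1)) :=
  ‖x - (inner ℝ s x : ℝ) • s‖⁻¹ • (x - (inner ℝ s x : ℝ) • s)

open Metric

section Normalize
variable {E F : Type*} [NormedAddCommGroup E] [NormedSpace ℝ E] [NormedAddCommGroup F]
  [NormedSpace ℝ F]

theorem LinearMap.image_normalize_inter_sphere (L : E →ₗ[ℝ] F) {W : Submodule ℝ E}
    (hW : Disjoint W (LinearMap.ker L)) :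
    (fun x => ‖L x‖⁻¹ • L x) '' ((W : Set E) ∩ sphere 0 1) = (W.map L : Set F) ∩ sphere 0 1 := by
  have hL : ∀ w ∈ W, w ≠ 0 → L w ≠ 0 := fun w hw hw0 hLw =>
    hw0 (Submodule.disjoint_def.mp hW w hw hLw)
  ext v
  constructor
  · rintro ⟨x, ⟨hxW, hx⟩, rfl⟩
    have hLx : L x ≠ 0 := hL x hxW (ne_zero_of_mem_unit_sphere ⟨x, hx⟩)
    refine ⟨(W.map L).smul_mem _ (Submodule.mem_map_of_mem hxW), ?_⟩
    simp [norm_smul, hLx]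
  · rintro ⟨⟨w, hwW, rfl⟩, hv⟩
    have hv : ‖L w‖ = 1 := by simpa using hv
    have hw : w ≠ 0 := by rintro rfl; simp at hv
    refine ⟨‖w‖⁻¹ • w, ⟨W.smul_mem _ hwW, by simp [norm_smul, hw]⟩, ?_⟩
    simp [norm_smul, hv, smul_smul, hw]

theorem Submodule.finrank_map_of_disjoint_ker (L : E →ₗ[ℝ] F) {W : Submodule ℝ E}
    (hW : Disjoint W (LinearMap.ker L)) :
    Module.finrank ℝ (W.map L) = Module.finrank ℝ W := by
  rw [← LinearMap.range_domRestrict]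
  exact LinearMap.finrank_range_of_inj (LinearMap.injective_domRestrict_iff.mpr hW)

end Normalize

section Hausdorff
variable {E : Type*} [NormedAddCommGroup E] [InnerProductSpace ℝ E] [MeasurableSpace E]
  [BorelSpace E]

theorem Submodule.hausdorffMeasure_inter_sphere (W : Submodule ℝ E) {d : ℝ} (hd : 0 ≤ d) :
    μH[d] ((W : Set E) ∩ sphere 0 1) = μH[d] (sphere (0 : W) 1) := by
  have : (W : Set E) ∩ sphere 0 1 = W.subtypeₗᵢ '' sphere 0 1 := by
    ext x; simp [and_comm]
  rw [this, W.subtypeₗᵢ.isometry.hausdorffMeasure_image (Or.inl hd)]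

theorem Submodule.hausdorffMeasure_inter_sphere_eq_of_finrank_eq {W W' : Submodule ℝ E}
    [FiniteDimensional ℝ W] [FiniteDimensional ℝ W']
    (h : Module.finrank ℝ W = Module.finrank ℝ W') {d : ℝ} (hd : 0 ≤ d) :
    μH[d] ((W : Set E) ∩ sphere 0 1) = μH[d] ((W' : Set E) ∩ sphere 0 1) := by
  let f : W ≃ₗᵢ[ℝ] W' := (stdOrthonormalBasis ℝ W).equiv (stdOrthonormalBasis ℝ W') (finCongr h)
  rw [W.hausdorffMeasure_inter_sphere hd, W'.hausdorffMeasure_inter_sphere hd,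
    ← f.toIsometryEquiv.hausdorffMeasure_image, f.toIsometryEquiv.image_sphere]
  simp

end Hausdorff

theorem visual_apply_eq_normalize_starProjection {n : ℕ} {s : EuclideanSpace ℝ (Fin (n + 1))}
    (hs : ‖s‖ = 1) (x : EuclideanSpace ℝ (Fin (n + 1))) :
    visual s x = ‖(ℝ ∙ s)ᗮ.starProjection x‖⁻¹ • (ℝ ∙ s)ᗮ.starProjection x := by
  rw [visual, Submodule.starProjection_orthogonal_val, Submodule.starProjection_unit_singleton ℝ hs]

theorem stmt_15_general (n j : ℕ)
    (W : Submodule ℝ (EuclideanSpace ℝ (Fin (n + 1))))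
    (hW : Module.finrank ℝ W = j + 1)
    (s : EuclideanSpace ℝ (Fin (n + 1))) (hs : ‖s‖ = 1)
    (hsW : s ∉ (W : Set (EuclideanSpace ℝ (Fin (n + 1)))) ∩ Metric.sphere 0 1) :
    ∃ W' : Submodule ℝ (EuclideanSpace ℝ (Fin (n + 1))),
      Module.finrank ℝ W' = j + 1 ∧
      (∀ v ∈ W', (inner ℝ v s : ℝ) = 0) ∧
      visual s '' ((W : Set (EuclideanSpace ℝ (Fin (n + 1)))) ∩ Metric.sphere 0 1) =
        (W' : Set (EuclideanSpace ℝ (Fin (n + 1)))) ∩ Metric.sphere 0 1 ∧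
      μH[(j : ℝ)] (visual s ''
          ((W : Set (EuclideanSpace ℝ (Fin (n + 1)))) ∩ Metric.sphere 0 1)) =
        μH[(j : ℝ)]
          ((W : Set (EuclideanSpace ℝ (Fin (n + 1)))) ∩ Metric.sphere 0 1) := by
  let P : EuclideanSpace ℝ (Fin (n + 1)) →ₗ[ℝ] EuclideanSpace ℝ (Fin (n + 1)) :=
    (ℝ ∙ s)ᗮ.starProjection
  have hs0 : s ≠ 0 := by rintro rfl; simp at hs
  have hdisj : Disjoint W (LinearMap.ker P) := by
    change Disjoint W (ℝ ∙ s)ᗮ.starProjection.ker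
    rw [Submodule.ker_starProjection, Submodule.orthogonal_orthogonal,
      Submodule.disjoint_span_singleton' hs0]
    exact fun h => hsW ⟨h, by simp [hs]⟩
  have hrank : Module.finrank ℝ (W.map P) = j + 1 := by
    rw [Submodule.finrank_map_of_disjoint_ker P hdisj, hW]
  have himage : visual s '' ((W : Set _) ∩ sphere 0 1) = (W.map P : Set _) ∩ sphere 0 1 := by
    rw [← P.image_normalize_inter_sphere hdisj]
    exact congrArg (· '' _) (funext (visual_apply_eq_normalize_starProjection hs))
  refine ⟨W.map P, hrank, ?_, himage, ?_⟩
  · rintro _ ⟨x, -, rfl⟩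
    exact Submodule.mem_orthogonal_singleton_iff_inner_left.mp
      ((ℝ ∙ s)ᗮ.starProjection_apply_mem x)
  · rw [himage]
    exact Submodule.hausdorffMeasure_inter_sphere_eq_of_finrank_eq (hrank.trans hW.symm)
      j.cast_nonneg

/-- The visual image of a great `j`-sphere `γ ⊂ S^n` from a point `s ∉ γ` is a
great `j`-sphere of the visual sphere (the unit sphere of the tangent space at `s`,
i.e. of the orthogonal complement of `s`), and it has the same `j`-area as `γ`. -/
theorem stmt_15 (n j : ℕ) (hj : j < n)
    (W : Submodule ℝ (EuclideanSpace ℝ (Fin (n + 1))))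
    (hW : Module.finrank ℝ W = j + 1)
    (s : EuclideanSpace ℝ (Fin (n + 1))) (hs : ‖s‖ = 1)
    (hsW : s ∉ (W : Set (EuclideanSpace ℝ (Fin (n + 1)))) ∩ Metric.sphere 0 1) :
    ∃ W' : Submodule ℝ (EuclideanSpace ℝ (Fin (n + 1))),
      Module.finrank ℝ W' = j + 1 ∧
      (∀ v ∈ W', (inner ℝ v s : ℝ) = 0) ∧
      visual s '' ((W : Set (EuclideanSpace ℝ (Fin (n + 1)))) ∩ Metric.sphere 0 1) =
        (W' : Set (EuclideanSpace ℝ (Fin (n + 1)))) ∩ Metric.sphere 0 1 ∧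
      μH[(j : ℝ)] (visual s ''
          ((W : Set (EuclideanSpace ℝ (Fin (n + 1)))) ∩ Metric.sphere 0 1)) =
        μH[(j : ℝ)]
          ((W : Set (EuclideanSpace ℝ (Fin (n + 1)))) ∩ Metric.sphere 0 1) :=
  stmt_15_general n j W hW s hs hsW
end
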